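/- arXiv:1204.6257 — 9 statements merged into one kernel-verified Lean document; each statement's English description precedes it below -/
import Mathlib

section
/- Let v₀,…,v₆ be a basis of ℂ⁷ and let Λ₁,…,Λ₇ be the seven 3-dimensional subspaces Λ₁=⟨v₀,v₁,v₂⟩, Λ₂=⟨v₂,v₃,v₄⟩, Λ₃=⟨v₀,v₄,v₅⟩, Λ₄=⟨v₁,v₃,v₅⟩, Λ₅=⟨v₀,v₃,v₆⟩, Λ₆=⟨v₁,v₄,v₆⟩, Λ₇=⟨v₂,v₅,v₆⟩. Then {Λ₁,…,Λ₇} is a complete family of pairwise incident planes: any two of the Λᵢ intersect nontrivially, and every 3-dimensional subspace of ℂ⁷ intersecting each Λᵢ nontrivially equals one of Λ₁,…,Λ₇. -/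
open Module Submodule

noncomputable abbrev E (i : Fin 7) : Fin 7 → ℂ := Pi.single i 1

lemma li_triple {a b c : Fin 7 → ℂ}
    (h : ∀ α β γ : ℂ, α•a+β•b+γ•c = 0 → α = 0 ∧ β = 0 ∧ γ = 0) :
    LinearIndependent ℂ ![a,b,c] := by
  rw [Fintype.linearIndependent_iff]
  intro g hg
  have := h (g 0) (g 1) (g 2) (by simpa [Fin.sum_univ_three] using hg)
  intro i; fin_cases i <;> tauto

lemma span_of_dim3 (W : Submodule ℂ (Fin 7 → ℂ)) (h3 : finrank ℂ W = 3)
    {a b c : Fin 7 → ℂ} (ha : a ∈ W) (hb : b ∈ W) (hc : c ∈ W)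
    (hli : ∀ α β γ : ℂ, α•a+β•b+γ•c = 0 → α = 0 ∧ β = 0 ∧ γ = 0)
    {x : Fin 7 → ℂ} (hx : x ∈ W) : ∃ α β γ : ℂ, x = α•a+β•b+γ•c := by
  have hsp : span ℂ (Set.range ![a,b,c]) = W := by
    apply Submodule.eq_of_le_of_finrank_eq
    · rw [Submodule.span_le]; rintro y ⟨i, rfl⟩; fin_cases i <;> assumption
    · rw [finrank_span_eq_card (li_triple hli), h3]; rfl
  rw [← hsp] at hx
  obtain ⟨g, hg⟩ := (mem_span_range_iff_exists_fun ℂ).1 hx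
  exact ⟨g 0, g 1, g 2, by rw [← hg, Fin.sum_univ_three]; rfl⟩

lemma single_mem (W : Submodule ℂ (Fin 7 → ℂ)) {x : Fin 7 → ℂ} {t : Fin 7}
    (hx : x ∈ W) (h0 : x ≠ 0) (hs : ∀ j, j ≠ t → x j = 0) : E t ∈ W := by
  have hxt : x t ≠ 0 := by
    intro h
    exact h0 (funext fun j => by
      by_cases hj : j = t
      · rw [hj, h]; rfl
      · exact hs j hj)
  have hE : (x t)⁻¹ • x = E t := funext fun j => by
    by_cases hj : j = t
    · subst hj; simp [inv_mul_cancel₀ hxt]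
    · simp [hs j hj, Pi.single_eq_of_ne hj]
  exact hE ▸ W.smul_mem _ hx

lemma finrank_P {a b c : Fin 7} (hab : a ≠ b) (hac : a ≠ c) (hbc : b ≠ c) :
    finrank ℂ (span ℂ {E a, E b, E c}) = 3 := by
  have hset : ({E a, E b, E c} : Set (Fin 7 → ℂ)) = Set.range ![E a, E b, E c] := by
    ext y; simp [Matrix.range_cons, Matrix.range_empty]; tauto
  rw [hset, finrank_span_eq_card]
  · rfl
  · apply li_triple
    intro α β γ h
    refine ⟨?_, ?_, ?_⟩
    · simpa [Pi.single_eq_of_ne hab, Pi.single_eq_of_ne hac] using congrFun h a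
    · simpa [Pi.single_eq_of_ne (Ne.symm hab), Pi.single_eq_of_ne hbc] using congrFun h b
    · simpa [Pi.single_eq_of_ne (Ne.symm hac), Pi.single_eq_of_ne (Ne.symm hbc)] using congrFun h c

lemma W_eq_P (W : Submodule ℂ (Fin 7 → ℂ)) (h3 : finrank ℂ W = 3) {a b c : Fin 7}
    (hab : a ≠ b) (hac : a ≠ c) (hbc : b ≠ c)
    (ha : E a ∈ W) (hb : E b ∈ W) (hc : E c ∈ W) :
    W = span ℂ {E a, E b, E c} := by
  refine (Submodule.eq_of_le_of_finrank_eq ?_ ?_).symm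
  · rw [Submodule.span_le]
    rintro y (rfl | rfl | rfl) <;> assumption
  · rw [finrank_P hab hac hbc, h3]

lemma mem_span_single_iff {a b c : Fin 7} (hab : a ≠ b) (hac : a ≠ c) (hbc : b ≠ c)
    (x : Fin 7 → ℂ) :
    x ∈ span ℂ {E a, E b, E c} ↔ ∀ j, j ≠ a → j ≠ b → j ≠ c → x j = 0 := by
  constructor
  · intro hx
    refine Submodule.span_induction ?_ ?_ ?_ ?_ hx
    · rintro y (rfl | rfl | rfl) <;> intro j hja hjb hjc
      · exact Pi.single_eq_of_ne hja 1
      · exact Pi.single_eq_of_ne hjb 1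
      · exact Pi.single_eq_of_ne hjc 1
    · intro j _ _ _; rfl
    · intro y z _ _ hy hz j hja hjb hjc
      simp [hy j hja hjb hjc, hz j hja hjb hjc]
    · intro r y _ hy j hja hjb hjc
      simp [hy j hja hjb hjc]
  · intro hx
    have : x = x a • E a + x b • E b + x c • E c := funext fun j => by
      by_cases hja : j = a
      · subst hja
        simp [Pi.single_eq_of_ne hab, Pi.single_eq_of_ne hac]
      by_cases hjb : j = b
      · subst hjb
        simp [Pi.single_eq_of_ne (Ne.symm hab), Pi.single_eq_of_ne hbc]
      by_cases hjc : j = c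
      · subst hjc
        simp [Pi.single_eq_of_ne (Ne.symm hac), Pi.single_eq_of_ne (Ne.symm hbc)]
      · simp [hx j hja hjb hjc, Pi.single_eq_of_ne hja, Pi.single_eq_of_ne hjb,
          Pi.single_eq_of_ne hjc]
    rw [this]
    exact add_mem (add_mem (smul_mem _ _ (subset_span (by simp)))
      (smul_mem _ _ (subset_span (by simp)))) (smul_mem _ _ (subset_span (by simp)))

lemma masterB (W : Submodule ℂ (Fin 7 → ℂ)) (h3 : finrank ℂ W = 3)
    (hnos : ∀ t : Fin 7, ∀ y, y ∈ W → (∀ j, j ≠ t → y j = 0) → y = 0)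
    (r s1 s2 t1 t2 z1 z2 c1 d1 e1 c2 d2 e2 : Fin 7)
    {w uM uN uK1 uK2 : Fin 7 → ℂ}
    (hwW : w ∈ W) (hz1 : w z1 ≠ 0) (hz2 : w z2 ≠ 0)
    (hMW : uM ∈ W) (hM0 : uM ≠ 0) (hMs : ∀ j, j ≠ r → j ≠ s1 → j ≠ s2 → uM j = 0)
    (hNW : uN ∈ W) (hN0 : uN ≠ 0) (hNs : ∀ j, j ≠ r → j ≠ t1 → j ≠ t2 → uN j = 0)
    (hK1W : uK1 ∈ W) (hK10 : uK1 ≠ 0) (hK1s : ∀ j, j ≠ c1 → j ≠ d1 → j ≠ e1 → uK1 j = 0)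
    (hK2W : uK2 ∈ W) (hK20 : uK2 ≠ 0) (hK2s : ∀ j, j ≠ c2 → j ≠ d2 → j ≠ e2 → uK2 j = 0)
    (hD : z1 ≠ r ∧ z1 ≠ s1 ∧ z1 ≠ s2 ∧ z1 ≠ t1 ∧ z1 ≠ t2 ∧
          z2 ≠ r ∧ z2 ≠ s1 ∧ z2 ≠ s2 ∧ z2 ≠ t1 ∧ z2 ≠ t2 ∧
          z1 ≠ c1 ∧ z1 ≠ d1 ∧ z1 ≠ e1 ∧ z2 ≠ c2 ∧ z2 ≠ d2 ∧ z2 ≠ e2 ∧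
          s1 ≠ r ∧ s1 ≠ t1 ∧ s1 ≠ t2 ∧ s2 ≠ r ∧ s2 ≠ t1 ∧ s2 ≠ t2 ∧
          s1 ≠ c1 ∧ s1 ≠ d1 ∧ s1 ≠ e1 ∧ s2 ≠ c2 ∧ s2 ≠ d2 ∧ s2 ≠ e2 ∧
          d1 ≠ r ∧ d1 ≠ t1 ∧ d1 ≠ t2 ∧ e1 ≠ r ∧ e1 ≠ t1 ∧ e1 ≠ t2 ∧
          d2 ≠ r ∧ d2 ≠ t1 ∧ d2 ≠ t2 ∧ e2 ≠ r ∧ e2 ≠ t1 ∧ e2 ≠ t2) : False := by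
  obtain ⟨hz1r, hz1s1, hz1s2, hz1t1, hz1t2, hz2r, hz2s1, hz2s2, hz2t1, hz2t2,
    hz1c1, hz1d1, hz1e1, hz2c2, hz2d2, hz2e2,
    hs1r, hs1t1, hs1t2, hs2r, hs2t1, hs2t2,
    hs1c1, hs1d1, hs1e1, hs2c2, hs2d2, hs2e2,
    hd1r, hd1t1, hd1t2, he1r, he1t1, he1t2,
    hd2r, hd2t1, hd2t2, he2r, he2t1, he2t2⟩ := hD
  have hli : ∀ α β γ : ℂ, α•w+β•uM+γ•uN = 0 → α = 0 ∧ β = 0 ∧ γ = 0 := by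
    intro α β γ hC
    have hα : α = 0 := by
      have h := congrFun hC z1
      simp [hMs z1 hz1r hz1s1 hz1s2, hNs z1 hz1r hz1t1 hz1t2] at h
      rcases h with h | h
      · exact h
      · exact absurd h hz1
    have hβ : β = 0 := by
      have hyz : ∀ j, j ≠ r → (β • uM) j = 0 := by
        intro j hj
        by_cases h1 : j = s1
        · rw [h1]
          have h := congrFun hC s1
          simp [hα, hNs s1 hs1r hs1t1 hs1t2] at h
          simpa using h
        by_cases h2 : j = s2
        · rw [h2]
          have h := congrFun hC s2
          simp [hα, hNs s2 hs2r hs2t1 hs2t2] at h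
          simpa using h
        · simp [hMs j hj h1 h2]
      rcases smul_eq_zero.1 (hnos r (β • uM) (W.smul_mem _ hMW) hyz) with h | h
      · exact h
      · exact absurd h hM0
    have hγ : γ = 0 := by
      have h : γ • uN = 0 := by
        rw [hα, hβ] at hC
        simpa using hC
      rcases smul_eq_zero.1 h with h' | h'
      · exact h'
      · exact absurd h' hN0
    exact ⟨hα, hβ, hγ⟩
  -- K1 kills uM s1
  have hMs1 : uM s1 = 0 := by
    obtain ⟨α, β, γ, hEq⟩ := span_of_dim3 W h3 hwW hMW hNW hli hK1W
    have hα : α = 0 := by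
      have h := (congrFun hEq z1).symm
      simp [hK1s z1 hz1c1 hz1d1 hz1e1, hMs z1 hz1r hz1s1 hz1s2,
        hNs z1 hz1r hz1t1 hz1t2] at h
      rcases h with h | h
      · exact h
      · exact absurd h hz1
    have hβ : β ≠ 0 := by
      intro hβ0
      apply hK10
      apply hnos c1 uK1 hK1W
      intro j hj
      by_cases h1 : j = d1
      · rw [h1]
        have h := congrFun hEq d1
        simpa [hα, hβ0, hNs d1 hd1r hd1t1 hd1t2] using h
      by_cases h2 : j = e1
      · rw [h2]
        have h := congrFun hEq e1
        simpa [hα, hβ0, hNs e1 he1r he1t1 he1t2] using h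
      · exact hK1s j hj h1 h2
    have h := (congrFun hEq s1).symm
    simp [hα, hK1s s1 hs1c1 hs1d1 hs1e1, hNs s1 hs1r hs1t1 hs1t2] at h
    rcases h with h | h
    · exact absurd h hβ
    · exact h
  -- K2 kills uM s2
  have hMs2 : uM s2 = 0 := by
    obtain ⟨α, β, γ, hEq⟩ := span_of_dim3 W h3 hwW hMW hNW hli hK2W
    have hα : α = 0 := by
      have h := (congrFun hEq z2).symm
      simp [hK2s z2 hz2c2 hz2d2 hz2e2, hMs z2 hz2r hz2s1 hz2s2,
        hNs z2 hz2r hz2t1 hz2t2] at h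
      rcases h with h | h
      · exact h
      · exact absurd h hz2
    have hβ : β ≠ 0 := by
      intro hβ0
      apply hK20
      apply hnos c2 uK2 hK2W
      intro j hj
      by_cases h1 : j = d2
      · rw [h1]
        have h := congrFun hEq d2
        simpa [hα, hβ0, hNs d2 hd2r hd2t1 hd2t2] using h
      by_cases h2 : j = e2
      · rw [h2]
        have h := congrFun hEq e2
        simpa [hα, hβ0, hNs e2 he2r he2t1 he2t2] using h
      · exact hK2s j hj h1 h2
    have h := (congrFun hEq s2).symm
    simp [hα, hK2s s2 hs2c2 hs2d2 hs2e2, hNs s2 hs2r hs2t1 hs2t2] at h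
    rcases h with h | h
    · exact absurd h hβ
    · exact h
  apply hM0
  apply hnos r uM hMW
  intro j hj
  by_cases h1 : j = s1
  · rw [h1]; exact hMs1
  by_cases h2 : j = s2
  · rw [h2]; exact hMs2
  · exact hMs j hj h1 h2

lemma masterA_i (W : Submodule ℂ (Fin 7 → ℂ)) (h3 : finrank ℂ W = 3)
    (p d f φ1 φ2 ψ1 ψ2 : Fin 7)
    (hEp : E p ∈ W) (hEd : E d ∈ W)
    {uF uG : Fin 7 → ℂ}
    (hFW : uF ∈ W) (hF0 : uF ≠ 0) (hFs : ∀ j, j ≠ f → j ≠ φ1 → j ≠ φ2 → uF j = 0)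
    (hGW : uG ∈ W) (hG0 : uG ≠ 0) (hGs : ∀ j, j ≠ f → j ≠ ψ1 → j ≠ ψ2 → uG j = 0)
    (hD : p ≠ d ∧ p ≠ f ∧ p ≠ φ1 ∧ p ≠ φ2 ∧ p ≠ ψ1 ∧ p ≠ ψ2 ∧
          d ≠ f ∧ d ≠ φ1 ∧ d ≠ φ2 ∧ d ≠ ψ1 ∧ d ≠ ψ2 ∧
          φ1 ≠ f ∧ φ1 ≠ ψ1 ∧ φ1 ≠ ψ2 ∧ φ2 ≠ f ∧ φ2 ≠ ψ1 ∧ φ2 ≠ ψ2) :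
    E f ∈ W := by
  obtain ⟨hpd, hpf, hpφ1, hpφ2, hpψ1, hpψ2, hdf, hdφ1, hdφ2, hdψ1, hdψ2,
    hφ1f, hφ1ψ1, hφ1ψ2, hφ2f, hφ2ψ1, hφ2ψ2⟩ := hD
  have hli : ∀ α β γ : ℂ, α•(E p)+β•(E d)+γ•uF = 0 → α = 0 ∧ β = 0 ∧ γ = 0 := by
    intro α β γ hC
    have hα : α = 0 := by
      have h := congrFun hC p
      simpa [hFs p hpf hpφ1 hpφ2, Pi.single_eq_of_ne hpd] using h
    have hβ : β = 0 := by
      have h := congrFun hC d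
      simpa [hα, hFs d hdf hdφ1 hdφ2, Pi.single_eq_of_ne (Ne.symm hpd)] using h
    have hγ : γ = 0 := by
      rw [hα, hβ] at hC
      simp at hC
      rcases hC with h' | h'
      · exact h'
      · exact absurd h' hF0
    exact ⟨hα, hβ, hγ⟩
  obtain ⟨α, β, γ, hEq⟩ := span_of_dim3 W h3 hEp hEd hFW hli hGW
  have hα : α = 0 := by
    have h := (congrFun hEq p).symm
    simpa [hGs p hpf hpψ1 hpψ2, hFs p hpf hpφ1 hpφ2, Pi.single_eq_of_ne hpd] using h
  have hβ : β = 0 := by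
    have h := (congrFun hEq d).symm
    simpa [hα, hGs d hdf hdψ1 hdψ2, hFs d hdf hdφ1 hdφ2,
      Pi.single_eq_of_ne (Ne.symm hpd)] using h
  have hγ : γ ≠ 0 := by
    intro h0
    apply hG0
    rw [hEq, hα, hβ, h0]
    simp
  have hφ1 : uF φ1 = 0 := by
    have h := congrFun hEq φ1
    simp [hα, hβ, hGs φ1 hφ1f hφ1ψ1 hφ1ψ2] at h
    rcases h with h' | h'
    · exact absurd h' hγ
    · exact h'
  have hφ2 : uF φ2 = 0 := by
    have h := congrFun hEq φ2
    simp [hα, hβ, hGs φ2 hφ2f hφ2ψ1 hφ2ψ2] at h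
    rcases h with h' | h'
    · exact absurd h' hγ
    · exact h'
  apply single_mem W hFW hF0
  intro j hj
  by_cases h1 : j = φ1
  · rw [h1]; exact hφ1
  by_cases h2 : j = φ2
  · rw [h2]; exact hφ2
  · exact hFs j hj h1 h2

lemma masterA_ii (W : Submodule ℂ (Fin 7 → ℂ)) (h3 : finrank ℂ W = 3)
    (p dd ee zz hh tt ii : Fin 7)
    (hnos' : ∀ s : Fin 7, s ≠ p → ∀ y, y ∈ W → (∀ j, j ≠ s → y j = 0) → y = 0)
    (hEp : E p ∈ W)
    {uD uE uF uG : Fin 7 → ℂ}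
    (hDW : uD ∈ W) (hD0 : uD ≠ 0) (hDs : ∀ j, j ≠ dd → j ≠ ee → j ≠ zz → uD j = 0)
    (hEW : uE ∈ W) (hE0 : uE ≠ 0) (hEs : ∀ j, j ≠ dd → j ≠ hh → j ≠ tt → uE j = 0)
    (hFW : uF ∈ W) (hF0 : uF ≠ 0) (hFs : ∀ j, j ≠ ee → j ≠ hh → j ≠ ii → uF j = 0)
    (hGW : uG ∈ W) (hG0 : uG ≠ 0) (hGs : ∀ j, j ≠ zz → j ≠ tt → j ≠ ii → uG j = 0)
    (hD : p ≠ dd ∧ p ≠ ee ∧ p ≠ zz ∧ p ≠ hh ∧ p ≠ tt ∧ p ≠ ii ∧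
          dd ≠ ee ∧ dd ≠ zz ∧ dd ≠ hh ∧ dd ≠ tt ∧ dd ≠ ii ∧
          ee ≠ zz ∧ ee ≠ hh ∧ ee ≠ tt ∧ ee ≠ ii ∧
          zz ≠ hh ∧ zz ≠ tt ∧ zz ≠ ii ∧ hh ≠ tt ∧ hh ≠ ii ∧ tt ≠ ii) : False := by
  obtain ⟨hpd, hpe, hpz, hph, hpt, hpi, hde, hdz, hdh, hdt, hdi,
    hez, heh, het, hei, hzh, hzt, hzi, hht, hhi, hti⟩ := hD
  have hli : ∀ α β γ : ℂ, α•(E p)+β•uD+γ•uE = 0 → α = 0 ∧ β = 0 ∧ γ = 0 := by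
    intro α β γ hC
    have hα : α = 0 := by
      have h := congrFun hC p
      simpa [hDs p hpd hpe hpz, hEs p hpd hph hpt] using h
    have hβ : β = 0 := by
      have hyz : ∀ j, j ≠ dd → (β • uD) j = 0 := by
        intro j hj
        by_cases h1 : j = ee
        · rw [h1]
          have h := congrFun hC ee
          simp [hα, hEs ee (Ne.symm hde) heh het, Pi.single_eq_of_ne (Ne.symm hpe)] at h
          simpa using h
        by_cases h2 : j = zz
        · rw [h2]
          have h := congrFun hC zz
          simp [hα, hEs zz (Ne.symm hdz) hzh hzt, Pi.single_eq_of_ne (Ne.symm hpz)] at h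
          simpa using h
        · simp [hDs j hj h1 h2]
      rcases smul_eq_zero.1 (hnos' dd (Ne.symm hpd) (β • uD) (W.smul_mem _ hDW) hyz) with h | h
      · exact h
      · exact absurd h hD0
    have hγ : γ = 0 := by
      rw [hα, hβ] at hC
      simp at hC
      rcases hC with h' | h'
      · exact h'
      · exact absurd h' hE0
    exact ⟨hα, hβ, hγ⟩
  have hEze : uE zz = 0 := hEs zz (Ne.symm hdz) hzh hzt
  have hEee : uE ee = 0 := hEs ee (Ne.symm hde) heh het
  have hEii : uE ii = 0 := hEs ii (Ne.symm hdi) (Ne.symm hhi) (Ne.symm hti)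
  -- expansion of uF
  have hDzz : uD zz = 0 := by
    obtain ⟨α, β, γ, hEq⟩ := span_of_dim3 W h3 hEp hDW hEW hli hFW
    have hα : α = 0 := by
      have h := (congrFun hEq p).symm
      simpa [hFs p hpe hph hpi, hDs p hpd hpe hpz, hEs p hpd hph hpt] using h
    have hβ : β ≠ 0 := by
      intro hβ0
      apply hF0
      apply hnos' hh (Ne.symm hph) uF hFW
      intro j hj
      by_cases h1 : j = ee
      · rw [h1]
        have h := congrFun hEq ee
        simpa [hα, hβ0, hEee, Pi.single_eq_of_ne (Ne.symm hpe)] using h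
      by_cases h2 : j = ii
      · rw [h2]
        have h := congrFun hEq ii
        simpa [hα, hβ0, hEii, Pi.single_eq_of_ne (Ne.symm hpi)] using h
      · exact hFs j h1 hj h2
    have h := (congrFun hEq zz).symm
    simp [hα, hFs zz (Ne.symm hez) hzh hzi, hEze,
      Pi.single_eq_of_ne (Ne.symm hpz)] at h
    rcases h with h | h
    · exact absurd h hβ
    · exact h
  -- expansion of uG
  have hDee : uD ee = 0 := by
    obtain ⟨α, β, γ, hEq⟩ := span_of_dim3 W h3 hEp hDW hEW hli hGW
    have hα : α = 0 := by
      have h := (congrFun hEq p).symm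
      simpa [hGs p hpz hpt hpi, hDs p hpd hpe hpz, hEs p hpd hph hpt] using h
    have hβ : β ≠ 0 := by
      intro hβ0
      apply hG0
      apply hnos' tt (Ne.symm hpt) uG hGW
      intro j hj
      by_cases h1 : j = zz
      · rw [h1]
        have h := congrFun hEq zz
        simpa [hα, hβ0, hEze, Pi.single_eq_of_ne (Ne.symm hpz)] using h
      by_cases h2 : j = ii
      · rw [h2]
        have h := congrFun hEq ii
        simpa [hα, hβ0, hEii, Pi.single_eq_of_ne (Ne.symm hpi)] using h
      · exact hGs j h1 hj h2
    have h := (congrFun hEq ee).symm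
    simp [hα, hGs ee hez het hei, hEee, Pi.single_eq_of_ne (Ne.symm hpe)] at h
    rcases h with h | h
    · exact absurd h hβ
    · exact h
  apply hD0
  apply hnos' dd (Ne.symm hpd) uD hDW
  intro j hj
  by_cases h1 : j = ee
  · rw [h1]; exact hDee
  by_cases h2 : j = zz
  · rw [h2]; exact hDzz
  · exact hDs j hj h1 h2


def ll : Fin 7 → Fin 3 → Fin 7 :=
  ![![0,1,2], ![2,3,4], ![0,4,5], ![1,3,5], ![0,3,6], ![1,4,6], ![2,5,6]]

noncomputable def Q (n : Fin 7) : Submodule ℂ (Fin 7 → ℂ) :=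
  span ℂ {E (ll n 0), E (ll n 1), E (ll n 2)}

lemma lldist : ∀ n : Fin 7, ll n 0 ≠ ll n 1 ∧ ll n 0 ≠ ll n 2 ∧ ll n 1 ≠ ll n 2 := by decide

lemma memQ (n : Fin 7) (x : Fin 7 → ℂ) :
    x ∈ Q n ↔ ∀ j, j ≠ ll n 0 → j ≠ ll n 1 → j ≠ ll n 2 → x j = 0 :=
  mem_span_single_iff (lldist n).1 (lldist n).2.1 (lldist n).2.2 x

lemma inf_ne_bot_of {A B : Submodule ℂ (Fin 7 → ℂ)} (x : Fin 7 → ℂ)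
    (hA : x ∈ A) (hB : x ∈ B) (h0 : x ≠ 0) : A ⊓ B ≠ ⊥ := by
  rw [Submodule.ne_bot_iff]
  exact ⟨x, ⟨hA, hB⟩, h0⟩

lemma coord_ne_zero {W : Submodule ℂ (Fin 7 → ℂ)}
    (hbig : ∀ p q : Fin 7, ∀ x, x ∈ W → (∀ j, j ≠ p → j ≠ q → x j = 0) → x = 0)
    {x : Fin 7 → ℂ} (hx : x ∈ W) (h0 : x ≠ 0) {a b c : Fin 7}
    (hs : ∀ j, j ≠ a → j ≠ b → j ≠ c → x j = 0) : x a ≠ 0 := by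
  intro h
  apply h0
  apply hbig b c x hx
  intro j h1 h2
  by_cases hja : j = a
  · rw [hja]; exact h
  · exact hs j hja h1 h2

theorem core (W : Submodule ℂ (Fin 7 → ℂ)) (h3 : finrank ℂ W = 3)
    (h : ∀ n : Fin 7, W ⊓ Q n ≠ ⊥) : ∃ n, W = Q n := by
  have key : ∀ n : Fin 7, ∃ u, u ∈ W ∧ u ≠ 0 ∧
      ∀ j, j ≠ ll n 0 → j ≠ ll n 1 → j ≠ ll n 2 → u j = 0 := by
    intro n
    obtain ⟨x, hx, hx0⟩ := (Submodule.ne_bot_iff _).1 (h n)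
    exact ⟨x, hx.1, hx0, (memQ n x).1 hx.2⟩
  choose u huW hu0 hus using key
  by_cases hsing : ∃ t : Fin 7, ∃ x, x ∈ W ∧ x ≠ 0 ∧ ∀ j, j ≠ t → x j = 0
  · obtain ⟨t, x, hxW, hx0, hxs⟩ := hsing
    have hEt : E t ∈ W := single_mem W hxW hx0 hxs
    by_cases hsing2 : ∃ d : Fin 7, d ≠ t ∧ ∃ y, y ∈ W ∧ y ≠ 0 ∧ ∀ j, j ≠ d → y j = 0
    · obtain ⟨d, hdt, y, hyW, hy0, hys⟩ := hsing2
      have hEd : E d ∈ W := single_mem W hyW hy0 hys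
      clear hxW hx0 hxs hyW hy0 hys
      fin_cases t <;> fin_cases d
      · exact absurd rfl hdt
      · have hEf := masterA_i W h3 0 1 2 3 4 5 6 hEt hEd (huW 1) (hu0 1) (fun j h1 h2 h3 => hus 1 j h1 h2 h3) (huW 6) (hu0 6) (fun j h1 h2 h3 => hus 6 j h1 h2 h3) (by decide)
        exact ⟨0, W_eq_P W h3 (by decide) (by decide) (by decide) hEt hEd hEf⟩
      · have hEf := masterA_i W h3 0 2 1 3 5 4 6 hEt hEd (huW 3) (hu0 3) (fun j h1 h2 h3 => hus 3 j h1 h2 h3) (huW 5) (hu0 5) (fun j h1 h2 h3 => hus 5 j h1 h2 h3) (by decide)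
        exact ⟨0, W_eq_P W h3 (by decide) (by decide) (by decide) hEt hEf hEd⟩
      · have hEf := masterA_i W h3 0 3 6 1 4 2 5 hEt hEd (huW 5) (hu0 5) (fun j h1 h2 h3 => hus 5 j h2 h3 h1) (huW 6) (hu0 6) (fun j h1 h2 h3 => hus 6 j h2 h3 h1) (by decide)
        exact ⟨4, W_eq_P W h3 (by decide) (by decide) (by decide) hEt hEd hEf⟩
      · have hEf := masterA_i W h3 0 4 5 1 3 2 6 hEt hEd (huW 3) (hu0 3) (fun j h1 h2 h3 => hus 3 j h2 h3 h1) (huW 6) (hu0 6) (fun j h1 h2 h3 => hus 6 j h2 h1 h3) (by decide)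
        exact ⟨2, W_eq_P W h3 (by decide) (by decide) (by decide) hEt hEd hEf⟩
      · have hEf := masterA_i W h3 0 5 4 2 3 1 6 hEt hEd (huW 1) (hu0 1) (fun j h1 h2 h3 => hus 1 j h2 h3 h1) (huW 5) (hu0 5) (fun j h1 h2 h3 => hus 5 j h2 h1 h3) (by decide)
        exact ⟨2, W_eq_P W h3 (by decide) (by decide) (by decide) hEt hEf hEd⟩
      · have hEf := masterA_i W h3 0 6 3 2 4 1 5 hEt hEd (huW 1) (hu0 1) (fun j h1 h2 h3 => hus 1 j h2 h1 h3) (huW 3) (hu0 3) (fun j h1 h2 h3 => hus 3 j h2 h1 h3) (by decide)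
        exact ⟨4, W_eq_P W h3 (by decide) (by decide) (by decide) hEt hEf hEd⟩
      · have hEf := masterA_i W h3 1 0 2 3 4 5 6 hEt hEd (huW 1) (hu0 1) (fun j h1 h2 h3 => hus 1 j h1 h2 h3) (huW 6) (hu0 6) (fun j h1 h2 h3 => hus 6 j h1 h2 h3) (by decide)
        exact ⟨0, W_eq_P W h3 (by decide) (by decide) (by decide) hEd hEt hEf⟩
      · exact absurd rfl hdt
      · have hEf := masterA_i W h3 1 2 0 4 5 3 6 hEt hEd (huW 2) (hu0 2) (fun j h1 h2 h3 => hus 2 j h1 h2 h3) (huW 4) (hu0 4) (fun j h1 h2 h3 => hus 4 j h1 h2 h3) (by decide)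
        exact ⟨0, W_eq_P W h3 (by decide) (by decide) (by decide) hEf hEt hEd⟩
      · have hEf := masterA_i W h3 1 3 5 0 4 2 6 hEt hEd (huW 2) (hu0 2) (fun j h1 h2 h3 => hus 2 j h2 h3 h1) (huW 6) (hu0 6) (fun j h1 h2 h3 => hus 6 j h2 h1 h3) (by decide)
        exact ⟨3, W_eq_P W h3 (by decide) (by decide) (by decide) hEt hEd hEf⟩
      · have hEf := masterA_i W h3 1 4 6 0 3 2 5 hEt hEd (huW 4) (hu0 4) (fun j h1 h2 h3 => hus 4 j h2 h3 h1) (huW 6) (hu0 6) (fun j h1 h2 h3 => hus 6 j h2 h3 h1) (by decide)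
        exact ⟨5, W_eq_P W h3 (by decide) (by decide) (by decide) hEt hEd hEf⟩
      · have hEf := masterA_i W h3 1 5 3 2 4 0 6 hEt hEd (huW 1) (hu0 1) (fun j h1 h2 h3 => hus 1 j h2 h1 h3) (huW 4) (hu0 4) (fun j h1 h2 h3 => hus 4 j h2 h1 h3) (by decide)
        exact ⟨3, W_eq_P W h3 (by decide) (by decide) (by decide) hEt hEf hEd⟩
      · have hEf := masterA_i W h3 1 6 4 2 3 0 5 hEt hEd (huW 1) (hu0 1) (fun j h1 h2 h3 => hus 1 j h2 h3 h1) (huW 2) (hu0 2) (fun j h1 h2 h3 => hus 2 j h2 h1 h3) (by decide)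
        exact ⟨5, W_eq_P W h3 (by decide) (by decide) (by decide) hEt hEf hEd⟩
      · have hEf := masterA_i W h3 2 0 1 3 5 4 6 hEt hEd (huW 3) (hu0 3) (fun j h1 h2 h3 => hus 3 j h1 h2 h3) (huW 5) (hu0 5) (fun j h1 h2 h3 => hus 5 j h1 h2 h3) (by decide)
        exact ⟨0, W_eq_P W h3 (by decide) (by decide) (by decide) hEd hEf hEt⟩
      · have hEf := masterA_i W h3 2 1 0 4 5 3 6 hEt hEd (huW 2) (hu0 2) (fun j h1 h2 h3 => hus 2 j h1 h2 h3) (huW 4) (hu0 4) (fun j h1 h2 h3 => hus 4 j h1 h2 h3) (by decide)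
        exact ⟨0, W_eq_P W h3 (by decide) (by decide) (by decide) hEf hEd hEt⟩
      · exact absurd rfl hdt
      · have hEf := masterA_i W h3 2 3 4 0 5 1 6 hEt hEd (huW 2) (hu0 2) (fun j h1 h2 h3 => hus 2 j h2 h1 h3) (huW 5) (hu0 5) (fun j h1 h2 h3 => hus 5 j h2 h1 h3) (by decide)
        exact ⟨1, W_eq_P W h3 (by decide) (by decide) (by decide) hEt hEd hEf⟩
      · have hEf := masterA_i W h3 2 4 3 1 5 0 6 hEt hEd (huW 3) (hu0 3) (fun j h1 h2 h3 => hus 3 j h2 h1 h3) (huW 4) (hu0 4) (fun j h1 h2 h3 => hus 4 j h2 h1 h3) (by decide)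
        exact ⟨1, W_eq_P W h3 (by decide) (by decide) (by decide) hEt hEf hEd⟩
      · have hEf := masterA_i W h3 2 5 6 0 3 1 4 hEt hEd (huW 4) (hu0 4) (fun j h1 h2 h3 => hus 4 j h2 h3 h1) (huW 5) (hu0 5) (fun j h1 h2 h3 => hus 5 j h2 h3 h1) (by decide)
        exact ⟨6, W_eq_P W h3 (by decide) (by decide) (by decide) hEt hEd hEf⟩
      · have hEf := masterA_i W h3 2 6 5 0 4 1 3 hEt hEd (huW 2) (hu0 2) (fun j h1 h2 h3 => hus 2 j h2 h3 h1) (huW 3) (hu0 3) (fun j h1 h2 h3 => hus 3 j h2 h3 h1) (by decide)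
        exact ⟨6, W_eq_P W h3 (by decide) (by decide) (by decide) hEt hEf hEd⟩
      · have hEf := masterA_i W h3 3 0 6 1 4 2 5 hEt hEd (huW 5) (hu0 5) (fun j h1 h2 h3 => hus 5 j h2 h3 h1) (huW 6) (hu0 6) (fun j h1 h2 h3 => hus 6 j h2 h3 h1) (by decide)
        exact ⟨4, W_eq_P W h3 (by decide) (by decide) (by decide) hEd hEt hEf⟩
      · have hEf := masterA_i W h3 3 1 5 0 4 2 6 hEt hEd (huW 2) (hu0 2) (fun j h1 h2 h3 => hus 2 j h2 h3 h1) (huW 6) (hu0 6) (fun j h1 h2 h3 => hus 6 j h2 h1 h3) (by decide)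
        exact ⟨3, W_eq_P W h3 (by decide) (by decide) (by decide) hEd hEt hEf⟩
      · have hEf := masterA_i W h3 3 2 4 0 5 1 6 hEt hEd (huW 2) (hu0 2) (fun j h1 h2 h3 => hus 2 j h2 h1 h3) (huW 5) (hu0 5) (fun j h1 h2 h3 => hus 5 j h2 h1 h3) (by decide)
        exact ⟨1, W_eq_P W h3 (by decide) (by decide) (by decide) hEd hEt hEf⟩
      · exact absurd rfl hdt
      · have hEf := masterA_i W h3 3 4 2 0 1 5 6 hEt hEd (huW 0) (hu0 0) (fun j h1 h2 h3 => hus 0 j h2 h3 h1) (huW 6) (hu0 6) (fun j h1 h2 h3 => hus 6 j h1 h2 h3) (by decide)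
        exact ⟨1, W_eq_P W h3 (by decide) (by decide) (by decide) hEf hEt hEd⟩
      · have hEf := masterA_i W h3 3 5 1 0 2 4 6 hEt hEd (huW 0) (hu0 0) (fun j h1 h2 h3 => hus 0 j h2 h1 h3) (huW 5) (hu0 5) (fun j h1 h2 h3 => hus 5 j h1 h2 h3) (by decide)
        exact ⟨3, W_eq_P W h3 (by decide) (by decide) (by decide) hEf hEt hEd⟩
      · have hEf := masterA_i W h3 3 6 0 1 2 4 5 hEt hEd (huW 0) (hu0 0) (fun j h1 h2 h3 => hus 0 j h1 h2 h3) (huW 2) (hu0 2) (fun j h1 h2 h3 => hus 2 j h1 h2 h3) (by decide)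
        exact ⟨4, W_eq_P W h3 (by decide) (by decide) (by decide) hEf hEt hEd⟩
      · have hEf := masterA_i W h3 4 0 5 1 3 2 6 hEt hEd (huW 3) (hu0 3) (fun j h1 h2 h3 => hus 3 j h2 h3 h1) (huW 6) (hu0 6) (fun j h1 h2 h3 => hus 6 j h2 h1 h3) (by decide)
        exact ⟨2, W_eq_P W h3 (by decide) (by decide) (by decide) hEd hEt hEf⟩
      · have hEf := masterA_i W h3 4 1 6 0 3 2 5 hEt hEd (huW 4) (hu0 4) (fun j h1 h2 h3 => hus 4 j h2 h3 h1) (huW 6) (hu0 6) (fun j h1 h2 h3 => hus 6 j h2 h3 h1) (by decide)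
        exact ⟨5, W_eq_P W h3 (by decide) (by decide) (by decide) hEd hEt hEf⟩
      · have hEf := masterA_i W h3 4 2 3 1 5 0 6 hEt hEd (huW 3) (hu0 3) (fun j h1 h2 h3 => hus 3 j h2 h1 h3) (huW 4) (hu0 4) (fun j h1 h2 h3 => hus 4 j h2 h1 h3) (by decide)
        exact ⟨1, W_eq_P W h3 (by decide) (by decide) (by decide) hEd hEf hEt⟩
      · have hEf := masterA_i W h3 4 3 2 0 1 5 6 hEt hEd (huW 0) (hu0 0) (fun j h1 h2 h3 => hus 0 j h2 h3 h1) (huW 6) (hu0 6) (fun j h1 h2 h3 => hus 6 j h1 h2 h3) (by decide)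
        exact ⟨1, W_eq_P W h3 (by decide) (by decide) (by decide) hEf hEd hEt⟩
      · exact absurd rfl hdt
      · have hEf := masterA_i W h3 4 5 0 1 2 3 6 hEt hEd (huW 0) (hu0 0) (fun j h1 h2 h3 => hus 0 j h1 h2 h3) (huW 4) (hu0 4) (fun j h1 h2 h3 => hus 4 j h1 h2 h3) (by decide)
        exact ⟨2, W_eq_P W h3 (by decide) (by decide) (by decide) hEf hEt hEd⟩
      · have hEf := masterA_i W h3 4 6 1 0 2 3 5 hEt hEd (huW 0) (hu0 0) (fun j h1 h2 h3 => hus 0 j h2 h1 h3) (huW 3) (hu0 3) (fun j h1 h2 h3 => hus 3 j h1 h2 h3) (by decide)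
        exact ⟨5, W_eq_P W h3 (by decide) (by decide) (by decide) hEf hEt hEd⟩
      · have hEf := masterA_i W h3 5 0 4 2 3 1 6 hEt hEd (huW 1) (hu0 1) (fun j h1 h2 h3 => hus 1 j h2 h3 h1) (huW 5) (hu0 5) (fun j h1 h2 h3 => hus 5 j h2 h1 h3) (by decide)
        exact ⟨2, W_eq_P W h3 (by decide) (by decide) (by decide) hEd hEf hEt⟩
      · have hEf := masterA_i W h3 5 1 3 2 4 0 6 hEt hEd (huW 1) (hu0 1) (fun j h1 h2 h3 => hus 1 j h2 h1 h3) (huW 4) (hu0 4) (fun j h1 h2 h3 => hus 4 j h2 h1 h3) (by decide)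
        exact ⟨3, W_eq_P W h3 (by decide) (by decide) (by decide) hEd hEf hEt⟩
      · have hEf := masterA_i W h3 5 2 6 0 3 1 4 hEt hEd (huW 4) (hu0 4) (fun j h1 h2 h3 => hus 4 j h2 h3 h1) (huW 5) (hu0 5) (fun j h1 h2 h3 => hus 5 j h2 h3 h1) (by decide)
        exact ⟨6, W_eq_P W h3 (by decide) (by decide) (by decide) hEd hEt hEf⟩
      · have hEf := masterA_i W h3 5 3 1 0 2 4 6 hEt hEd (huW 0) (hu0 0) (fun j h1 h2 h3 => hus 0 j h2 h1 h3) (huW 5) (hu0 5) (fun j h1 h2 h3 => hus 5 j h1 h2 h3) (by decide)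
        exact ⟨3, W_eq_P W h3 (by decide) (by decide) (by decide) hEf hEd hEt⟩
      · have hEf := masterA_i W h3 5 4 0 1 2 3 6 hEt hEd (huW 0) (hu0 0) (fun j h1 h2 h3 => hus 0 j h1 h2 h3) (huW 4) (hu0 4) (fun j h1 h2 h3 => hus 4 j h1 h2 h3) (by decide)
        exact ⟨2, W_eq_P W h3 (by decide) (by decide) (by decide) hEf hEd hEt⟩
      · exact absurd rfl hdt
      · have hEf := masterA_i W h3 5 6 2 0 1 3 4 hEt hEd (huW 0) (hu0 0) (fun j h1 h2 h3 => hus 0 j h2 h3 h1) (huW 1) (hu0 1) (fun j h1 h2 h3 => hus 1 j h1 h2 h3) (by decide)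
        exact ⟨6, W_eq_P W h3 (by decide) (by decide) (by decide) hEf hEt hEd⟩
      · have hEf := masterA_i W h3 6 0 3 2 4 1 5 hEt hEd (huW 1) (hu0 1) (fun j h1 h2 h3 => hus 1 j h2 h1 h3) (huW 3) (hu0 3) (fun j h1 h2 h3 => hus 3 j h2 h1 h3) (by decide)
        exact ⟨4, W_eq_P W h3 (by decide) (by decide) (by decide) hEd hEf hEt⟩
      · have hEf := masterA_i W h3 6 1 4 2 3 0 5 hEt hEd (huW 1) (hu0 1) (fun j h1 h2 h3 => hus 1 j h2 h3 h1) (huW 2) (hu0 2) (fun j h1 h2 h3 => hus 2 j h2 h1 h3) (by decide)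
        exact ⟨5, W_eq_P W h3 (by decide) (by decide) (by decide) hEd hEf hEt⟩
      · have hEf := masterA_i W h3 6 2 5 0 4 1 3 hEt hEd (huW 2) (hu0 2) (fun j h1 h2 h3 => hus 2 j h2 h3 h1) (huW 3) (hu0 3) (fun j h1 h2 h3 => hus 3 j h2 h3 h1) (by decide)
        exact ⟨6, W_eq_P W h3 (by decide) (by decide) (by decide) hEd hEf hEt⟩
      · have hEf := masterA_i W h3 6 3 0 1 2 4 5 hEt hEd (huW 0) (hu0 0) (fun j h1 h2 h3 => hus 0 j h1 h2 h3) (huW 2) (hu0 2) (fun j h1 h2 h3 => hus 2 j h1 h2 h3) (by decide)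
        exact ⟨4, W_eq_P W h3 (by decide) (by decide) (by decide) hEf hEd hEt⟩
      · have hEf := masterA_i W h3 6 4 1 0 2 3 5 hEt hEd (huW 0) (hu0 0) (fun j h1 h2 h3 => hus 0 j h2 h1 h3) (huW 3) (hu0 3) (fun j h1 h2 h3 => hus 3 j h1 h2 h3) (by decide)
        exact ⟨5, W_eq_P W h3 (by decide) (by decide) (by decide) hEf hEd hEt⟩
      · have hEf := masterA_i W h3 6 5 2 0 1 3 4 hEt hEd (huW 0) (hu0 0) (fun j h1 h2 h3 => hus 0 j h2 h3 h1) (huW 1) (hu0 1) (fun j h1 h2 h3 => hus 1 j h1 h2 h3) (by decide)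
        exact ⟨6, W_eq_P W h3 (by decide) (by decide) (by decide) hEf hEd hEt⟩
      · exact absurd rfl hdt
    · have hnos' : ∀ s : Fin 7, s ≠ t → ∀ y, y ∈ W → (∀ j, j ≠ s → y j = 0) → y = 0 := by
        intro s hst y hyW hys
        by_contra h0
        exact hsing2 ⟨s, hst, y, hyW, h0, hys⟩
      exfalso
      clear hxW hx0 hxs
      fin_cases t
      · exact masterA_ii W h3 0 3 4 2 1 5 6 hnos' hEt (huW 1) (hu0 1) (fun j h1 h2 h3 => hus 1 j h3 h1 h2) (huW 3) (hu0 3) (fun j h1 h2 h3 => hus 3 j h2 h1 h3) (huW 5) (hu0 5) (fun j h1 h2 h3 => hus 5 j h2 h1 h3) (huW 6) (hu0 6) (fun j h1 h2 h3 => hus 6 j h1 h2 h3) (by decide)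
      · exact masterA_ii W h3 1 4 3 2 0 5 6 hnos' hEt (huW 1) (hu0 1) (fun j h1 h2 h3 => hus 1 j h3 h2 h1) (huW 2) (hu0 2) (fun j h1 h2 h3 => hus 2 j h2 h1 h3) (huW 4) (hu0 4) (fun j h1 h2 h3 => hus 4 j h2 h1 h3) (huW 6) (hu0 6) (fun j h1 h2 h3 => hus 6 j h1 h2 h3) (by decide)
      · exact masterA_ii W h3 2 5 0 4 3 1 6 hnos' hEt (huW 2) (hu0 2) (fun j h1 h2 h3 => hus 2 j h2 h3 h1) (huW 3) (hu0 3) (fun j h1 h2 h3 => hus 3 j h3 h2 h1) (huW 4) (hu0 4) (fun j h1 h2 h3 => hus 4 j h1 h2 h3) (huW 5) (hu0 5) (fun j h1 h2 h3 => hus 5 j h2 h1 h3) (by decide)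
      · exact masterA_ii W h3 3 0 1 2 4 5 6 hnos' hEt (huW 0) (hu0 0) (fun j h1 h2 h3 => hus 0 j h1 h2 h3) (huW 2) (hu0 2) (fun j h1 h2 h3 => hus 2 j h1 h2 h3) (huW 5) (hu0 5) (fun j h1 h2 h3 => hus 5 j h1 h2 h3) (huW 6) (hu0 6) (fun j h1 h2 h3 => hus 6 j h1 h2 h3) (by decide)
      · exact masterA_ii W h3 4 1 0 2 3 5 6 hnos' hEt (huW 0) (hu0 0) (fun j h1 h2 h3 => hus 0 j h2 h1 h3) (huW 3) (hu0 3) (fun j h1 h2 h3 => hus 3 j h1 h2 h3) (huW 4) (hu0 4) (fun j h1 h2 h3 => hus 4 j h1 h2 h3) (huW 6) (hu0 6) (fun j h1 h2 h3 => hus 6 j h1 h2 h3) (by decide)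
      · exact masterA_ii W h3 5 2 0 1 3 4 6 hnos' hEt (huW 0) (hu0 0) (fun j h1 h2 h3 => hus 0 j h2 h3 h1) (huW 1) (hu0 1) (fun j h1 h2 h3 => hus 1 j h1 h2 h3) (huW 4) (hu0 4) (fun j h1 h2 h3 => hus 4 j h1 h2 h3) (huW 5) (hu0 5) (fun j h1 h2 h3 => hus 5 j h1 h2 h3) (by decide)
      · exact masterA_ii W h3 6 2 0 1 4 3 5 hnos' hEt (huW 0) (hu0 0) (fun j h1 h2 h3 => hus 0 j h2 h3 h1) (huW 1) (hu0 1) (fun j h1 h2 h3 => hus 1 j h1 h3 h2) (huW 2) (hu0 2) (fun j h1 h2 h3 => hus 2 j h1 h2 h3) (huW 3) (hu0 3) (fun j h1 h2 h3 => hus 3 j h1 h2 h3) (by decide)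
  · have hnos : ∀ s : Fin 7, ∀ y, y ∈ W → (∀ j, j ≠ s → y j = 0) → y = 0 := by
      intro s y hyW hys
      by_contra h0
      exact hsing ⟨s, y, hyW, h0, hys⟩
    by_cases hpair : ∃ p q : Fin 7, ∃ x, x ∈ W ∧ x ≠ 0 ∧ ∀ j, j ≠ p → j ≠ q → x j = 0
    · exfalso
      obtain ⟨p, q, x, hxW, hx0, hxs⟩ := hpair
      have hpq : p ≠ q := by
        intro hh
        subst hh
        exact hx0 (hnos p x hxW (fun j hj => hxs j hj hj))
      have hxp : x p ≠ 0 := by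
        intro hh
        apply hx0
        apply hnos q x hxW
        intro j hj
        by_cases hjp : j = p
        · rw [hjp]; exact hh
        · exact hxs j hjp hj
      have hxq : x q ≠ 0 := by
        intro hh
        apply hx0
        apply hnos p x hxW
        intro j hj
        by_cases hjq : j = q
        · rw [hjq]; exact hh
        · exact hxs j hj hjq
      clear hx0 hxs
      fin_cases p <;> fin_cases q
      · exact absurd rfl hpq
      · exact masterB W h3 hnos 2 3 4 5 6 1 0 5 0 4 5 1 3 hxW hxq hxp (huW 1) (hu0 1) (fun j h1 h2 h3 => hus 1 j h1 h2 h3) (huW 6) (hu0 6) (fun j h1 h2 h3 => hus 6 j h1 h2 h3) (huW 2) (hu0 2) (fun j h1 h2 h3 => hus 2 j h2 h3 h1) (huW 3) (hu0 3) (fun j h1 h2 h3 => hus 3 j h2 h3 h1) (by decide)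
      · exact masterB W h3 hnos 1 3 5 4 6 2 0 4 0 5 4 2 3 hxW hxq hxp (huW 3) (hu0 3) (fun j h1 h2 h3 => hus 3 j h1 h2 h3) (huW 5) (hu0 5) (fun j h1 h2 h3 => hus 5 j h1 h2 h3) (huW 2) (hu0 2) (fun j h1 h2 h3 => hus 2 j h2 h1 h3) (huW 1) (hu0 1) (fun j h1 h2 h3 => hus 1 j h2 h3 h1) (by decide)
      · exact masterB W h3 hnos 6 1 4 2 5 0 3 2 3 4 2 0 1 hxW hxp hxq (huW 5) (hu0 5) (fun j h1 h2 h3 => hus 5 j h2 h3 h1) (huW 6) (hu0 6) (fun j h1 h2 h3 => hus 6 j h2 h3 h1) (huW 1) (hu0 1) (fun j h1 h2 h3 => hus 1 j h1 h2 h3) (huW 0) (hu0 0) (fun j h1 h2 h3 => hus 0 j h2 h3 h1) (by decide)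
      · exact masterB W h3 hnos 5 1 3 2 6 0 4 2 3 4 2 0 1 hxW hxp hxq (huW 3) (hu0 3) (fun j h1 h2 h3 => hus 3 j h2 h3 h1) (huW 6) (hu0 6) (fun j h1 h2 h3 => hus 6 j h2 h1 h3) (huW 1) (hu0 1) (fun j h1 h2 h3 => hus 1 j h1 h2 h3) (huW 0) (hu0 0) (fun j h1 h2 h3 => hus 0 j h2 h3 h1) (by decide)
      · exact masterB W h3 hnos 4 2 3 1 6 0 5 1 3 5 1 0 2 hxW hxp hxq (huW 1) (hu0 1) (fun j h1 h2 h3 => hus 1 j h2 h3 h1) (huW 5) (hu0 5) (fun j h1 h2 h3 => hus 5 j h2 h1 h3) (huW 3) (hu0 3) (fun j h1 h2 h3 => hus 3 j h1 h2 h3) (huW 0) (hu0 0) (fun j h1 h2 h3 => hus 0 j h2 h1 h3) (by decide)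
      · exact masterB W h3 hnos 3 2 4 1 5 6 6 5 0 4 1 0 2 hxW hxq hxq (huW 1) (hu0 1) (fun j h1 h2 h3 => hus 1 j h2 h1 h3) (huW 3) (hu0 3) (fun j h1 h2 h3 => hus 3 j h2 h1 h3) (huW 2) (hu0 2) (fun j h1 h2 h3 => hus 2 j h2 h3 h1) (huW 0) (hu0 0) (fun j h1 h2 h3 => hus 0 j h2 h1 h3) (by decide)
      · exact masterB W h3 hnos 2 3 4 5 6 1 0 5 0 4 5 1 3 hxW hxp hxq (huW 1) (hu0 1) (fun j h1 h2 h3 => hus 1 j h1 h2 h3) (huW 6) (hu0 6) (fun j h1 h2 h3 => hus 6 j h1 h2 h3) (huW 2) (hu0 2) (fun j h1 h2 h3 => hus 2 j h2 h3 h1) (huW 3) (hu0 3) (fun j h1 h2 h3 => hus 3 j h2 h3 h1) (by decide)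
      · exact absurd rfl hpq
      · exact masterB W h3 hnos 0 4 5 3 6 2 1 3 1 5 3 2 4 hxW hxq hxp (huW 2) (hu0 2) (fun j h1 h2 h3 => hus 2 j h1 h2 h3) (huW 4) (hu0 4) (fun j h1 h2 h3 => hus 4 j h1 h2 h3) (huW 3) (hu0 3) (fun j h1 h2 h3 => hus 3 j h2 h1 h3) (huW 1) (hu0 1) (fun j h1 h2 h3 => hus 1 j h2 h1 h3) (by decide)
      · exact masterB W h3 hnos 5 0 4 2 6 1 3 2 3 4 2 0 1 hxW hxp hxq (huW 2) (hu0 2) (fun j h1 h2 h3 => hus 2 j h2 h3 h1) (huW 6) (hu0 6) (fun j h1 h2 h3 => hus 6 j h2 h1 h3) (huW 1) (hu0 1) (fun j h1 h2 h3 => hus 1 j h1 h2 h3) (huW 0) (hu0 0) (fun j h1 h2 h3 => hus 0 j h2 h3 h1) (by decide)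
      · exact masterB W h3 hnos 6 0 3 2 5 1 4 2 3 4 2 0 1 hxW hxp hxq (huW 4) (hu0 4) (fun j h1 h2 h3 => hus 4 j h2 h3 h1) (huW 6) (hu0 6) (fun j h1 h2 h3 => hus 6 j h2 h3 h1) (huW 1) (hu0 1) (fun j h1 h2 h3 => hus 1 j h1 h2 h3) (huW 0) (hu0 0) (fun j h1 h2 h3 => hus 0 j h2 h3 h1) (by decide)
      · exact masterB W h3 hnos 3 2 4 0 6 1 5 0 4 5 0 1 2 hxW hxp hxq (huW 1) (hu0 1) (fun j h1 h2 h3 => hus 1 j h2 h1 h3) (huW 4) (hu0 4) (fun j h1 h2 h3 => hus 4 j h2 h1 h3) (huW 2) (hu0 2) (fun j h1 h2 h3 => hus 2 j h1 h2 h3) (huW 0) (hu0 0) (fun j h1 h2 h3 => hus 0 j h1 h2 h3) (by decide)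
      · exact masterB W h3 hnos 4 2 3 0 5 6 6 5 1 3 0 1 2 hxW hxq hxq (huW 1) (hu0 1) (fun j h1 h2 h3 => hus 1 j h2 h3 h1) (huW 2) (hu0 2) (fun j h1 h2 h3 => hus 2 j h2 h1 h3) (huW 3) (hu0 3) (fun j h1 h2 h3 => hus 3 j h2 h3 h1) (huW 0) (hu0 0) (fun j h1 h2 h3 => hus 0 j h1 h2 h3) (by decide)
      · exact masterB W h3 hnos 1 3 5 4 6 2 0 4 0 5 4 2 3 hxW hxp hxq (huW 3) (hu0 3) (fun j h1 h2 h3 => hus 3 j h1 h2 h3) (huW 5) (hu0 5) (fun j h1 h2 h3 => hus 5 j h1 h2 h3) (huW 2) (hu0 2) (fun j h1 h2 h3 => hus 2 j h2 h1 h3) (huW 1) (hu0 1) (fun j h1 h2 h3 => hus 1 j h2 h3 h1) (by decide)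
      · exact masterB W h3 hnos 0 4 5 3 6 2 1 3 1 5 3 2 4 hxW hxp hxq (huW 2) (hu0 2) (fun j h1 h2 h3 => hus 2 j h1 h2 h3) (huW 4) (hu0 4) (fun j h1 h2 h3 => hus 4 j h1 h2 h3) (huW 3) (hu0 3) (fun j h1 h2 h3 => hus 3 j h2 h1 h3) (huW 1) (hu0 1) (fun j h1 h2 h3 => hus 1 j h2 h1 h3) (by decide)
      · exact absurd rfl hpq
      · exact masterB W h3 hnos 4 0 5 1 6 2 3 1 3 5 1 0 2 hxW hxp hxq (huW 2) (hu0 2) (fun j h1 h2 h3 => hus 2 j h2 h1 h3) (huW 5) (hu0 5) (fun j h1 h2 h3 => hus 5 j h2 h1 h3) (huW 3) (hu0 3) (fun j h1 h2 h3 => hus 3 j h1 h2 h3) (huW 0) (hu0 0) (fun j h1 h2 h3 => hus 0 j h2 h1 h3) (by decide)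
      · exact masterB W h3 hnos 3 1 5 0 6 2 4 0 4 5 0 1 2 hxW hxp hxq (huW 3) (hu0 3) (fun j h1 h2 h3 => hus 3 j h2 h1 h3) (huW 4) (hu0 4) (fun j h1 h2 h3 => hus 4 j h2 h1 h3) (huW 2) (hu0 2) (fun j h1 h2 h3 => hus 2 j h1 h2 h3) (huW 0) (hu0 0) (fun j h1 h2 h3 => hus 0 j h1 h2 h3) (by decide)
      · exact masterB W h3 hnos 6 0 3 1 4 5 5 4 2 3 1 0 2 hxW hxq hxq (huW 4) (hu0 4) (fun j h1 h2 h3 => hus 4 j h2 h3 h1) (huW 5) (hu0 5) (fun j h1 h2 h3 => hus 5 j h2 h3 h1) (huW 1) (hu0 1) (fun j h1 h2 h3 => hus 1 j h2 h3 h1) (huW 0) (hu0 0) (fun j h1 h2 h3 => hus 0 j h2 h1 h3) (by decide)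
      · exact masterB W h3 hnos 5 0 4 1 3 6 6 3 2 4 1 0 2 hxW hxq hxq (huW 2) (hu0 2) (fun j h1 h2 h3 => hus 2 j h2 h3 h1) (huW 3) (hu0 3) (fun j h1 h2 h3 => hus 3 j h2 h3 h1) (huW 1) (hu0 1) (fun j h1 h2 h3 => hus 1 j h2 h1 h3) (huW 0) (hu0 0) (fun j h1 h2 h3 => hus 0 j h2 h1 h3) (by decide)
      · exact masterB W h3 hnos 6 1 4 2 5 0 3 2 3 4 2 0 1 hxW hxq hxp (huW 5) (hu0 5) (fun j h1 h2 h3 => hus 5 j h2 h3 h1) (huW 6) (hu0 6) (fun j h1 h2 h3 => hus 6 j h2 h3 h1) (huW 1) (hu0 1) (fun j h1 h2 h3 => hus 1 j h1 h2 h3) (huW 0) (hu0 0) (fun j h1 h2 h3 => hus 0 j h2 h3 h1) (by decide)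
      · exact masterB W h3 hnos 5 0 4 2 6 1 3 2 3 4 2 0 1 hxW hxq hxp (huW 2) (hu0 2) (fun j h1 h2 h3 => hus 2 j h2 h3 h1) (huW 6) (hu0 6) (fun j h1 h2 h3 => hus 6 j h2 h1 h3) (huW 1) (hu0 1) (fun j h1 h2 h3 => hus 1 j h1 h2 h3) (huW 0) (hu0 0) (fun j h1 h2 h3 => hus 0 j h2 h3 h1) (by decide)
      · exact masterB W h3 hnos 4 0 5 1 6 2 3 1 3 5 1 0 2 hxW hxq hxp (huW 2) (hu0 2) (fun j h1 h2 h3 => hus 2 j h2 h1 h3) (huW 5) (hu0 5) (fun j h1 h2 h3 => hus 5 j h2 h1 h3) (huW 3) (hu0 3) (fun j h1 h2 h3 => hus 3 j h1 h2 h3) (huW 0) (hu0 0) (fun j h1 h2 h3 => hus 0 j h2 h1 h3) (by decide)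
      · exact absurd rfl hpq
      · exact masterB W h3 hnos 2 0 1 5 6 4 3 5 1 3 5 0 4 hxW hxq hxp (huW 0) (hu0 0) (fun j h1 h2 h3 => hus 0 j h2 h3 h1) (huW 6) (hu0 6) (fun j h1 h2 h3 => hus 6 j h1 h2 h3) (huW 3) (hu0 3) (fun j h1 h2 h3 => hus 3 j h2 h3 h1) (huW 2) (hu0 2) (fun j h1 h2 h3 => hus 2 j h2 h3 h1) (by decide)
      · exact masterB W h3 hnos 1 0 2 4 6 5 3 4 2 3 4 0 5 hxW hxq hxp (huW 0) (hu0 0) (fun j h1 h2 h3 => hus 0 j h2 h1 h3) (huW 5) (hu0 5) (fun j h1 h2 h3 => hus 5 j h1 h2 h3) (huW 1) (hu0 1) (fun j h1 h2 h3 => hus 1 j h2 h3 h1) (huW 2) (hu0 2) (fun j h1 h2 h3 => hus 2 j h2 h1 h3) (by decide)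
      · exact masterB W h3 hnos 0 1 2 4 5 6 6 4 2 3 5 1 3 hxW hxq hxq (huW 0) (hu0 0) (fun j h1 h2 h3 => hus 0 j h1 h2 h3) (huW 2) (hu0 2) (fun j h1 h2 h3 => hus 2 j h1 h2 h3) (huW 1) (hu0 1) (fun j h1 h2 h3 => hus 1 j h2 h3 h1) (huW 3) (hu0 3) (fun j h1 h2 h3 => hus 3 j h2 h3 h1) (by decide)
      · exact masterB W h3 hnos 5 1 3 2 6 0 4 2 3 4 2 0 1 hxW hxq hxp (huW 3) (hu0 3) (fun j h1 h2 h3 => hus 3 j h2 h3 h1) (huW 6) (hu0 6) (fun j h1 h2 h3 => hus 6 j h2 h1 h3) (huW 1) (hu0 1) (fun j h1 h2 h3 => hus 1 j h1 h2 h3) (huW 0) (hu0 0) (fun j h1 h2 h3 => hus 0 j h2 h3 h1) (by decide)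
      · exact masterB W h3 hnos 6 0 3 2 5 1 4 2 3 4 2 0 1 hxW hxq hxp (huW 4) (hu0 4) (fun j h1 h2 h3 => hus 4 j h2 h3 h1) (huW 6) (hu0 6) (fun j h1 h2 h3 => hus 6 j h2 h3 h1) (huW 1) (hu0 1) (fun j h1 h2 h3 => hus 1 j h1 h2 h3) (huW 0) (hu0 0) (fun j h1 h2 h3 => hus 0 j h2 h3 h1) (by decide)
      · exact masterB W h3 hnos 3 1 5 0 6 2 4 0 4 5 0 1 2 hxW hxq hxp (huW 3) (hu0 3) (fun j h1 h2 h3 => hus 3 j h2 h1 h3) (huW 4) (hu0 4) (fun j h1 h2 h3 => hus 4 j h2 h1 h3) (huW 2) (hu0 2) (fun j h1 h2 h3 => hus 2 j h1 h2 h3) (huW 0) (hu0 0) (fun j h1 h2 h3 => hus 0 j h1 h2 h3) (by decide)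
      · exact masterB W h3 hnos 2 0 1 5 6 4 3 5 1 3 5 0 4 hxW hxp hxq (huW 0) (hu0 0) (fun j h1 h2 h3 => hus 0 j h2 h3 h1) (huW 6) (hu0 6) (fun j h1 h2 h3 => hus 6 j h1 h2 h3) (huW 3) (hu0 3) (fun j h1 h2 h3 => hus 3 j h2 h3 h1) (huW 2) (hu0 2) (fun j h1 h2 h3 => hus 2 j h2 h3 h1) (by decide)
      · exact absurd rfl hpq
      · exact masterB W h3 hnos 0 1 2 3 6 5 4 3 2 4 3 1 5 hxW hxq hxp (huW 0) (hu0 0) (fun j h1 h2 h3 => hus 0 j h1 h2 h3) (huW 4) (hu0 4) (fun j h1 h2 h3 => hus 4 j h1 h2 h3) (huW 1) (hu0 1) (fun j h1 h2 h3 => hus 1 j h2 h1 h3) (huW 3) (hu0 3) (fun j h1 h2 h3 => hus 3 j h2 h1 h3) (by decide)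
      · exact masterB W h3 hnos 1 0 2 3 5 6 6 3 2 4 5 0 4 hxW hxq hxq (huW 0) (hu0 0) (fun j h1 h2 h3 => hus 0 j h2 h1 h3) (huW 3) (hu0 3) (fun j h1 h2 h3 => hus 3 j h1 h2 h3) (huW 1) (hu0 1) (fun j h1 h2 h3 => hus 1 j h2 h1 h3) (huW 2) (hu0 2) (fun j h1 h2 h3 => hus 2 j h2 h3 h1) (by decide)
      · exact masterB W h3 hnos 4 2 3 1 6 0 5 1 3 5 1 0 2 hxW hxq hxp (huW 1) (hu0 1) (fun j h1 h2 h3 => hus 1 j h2 h3 h1) (huW 5) (hu0 5) (fun j h1 h2 h3 => hus 5 j h2 h1 h3) (huW 3) (hu0 3) (fun j h1 h2 h3 => hus 3 j h1 h2 h3) (huW 0) (hu0 0) (fun j h1 h2 h3 => hus 0 j h2 h1 h3) (by decide)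
      · exact masterB W h3 hnos 3 2 4 0 6 1 5 0 4 5 0 1 2 hxW hxq hxp (huW 1) (hu0 1) (fun j h1 h2 h3 => hus 1 j h2 h1 h3) (huW 4) (hu0 4) (fun j h1 h2 h3 => hus 4 j h2 h1 h3) (huW 2) (hu0 2) (fun j h1 h2 h3 => hus 2 j h1 h2 h3) (huW 0) (hu0 0) (fun j h1 h2 h3 => hus 0 j h1 h2 h3) (by decide)
      · exact masterB W h3 hnos 6 0 3 1 4 5 5 4 2 3 1 0 2 hxW hxp hxp (huW 4) (hu0 4) (fun j h1 h2 h3 => hus 4 j h2 h3 h1) (huW 5) (hu0 5) (fun j h1 h2 h3 => hus 5 j h2 h3 h1) (huW 1) (hu0 1) (fun j h1 h2 h3 => hus 1 j h2 h3 h1) (huW 0) (hu0 0) (fun j h1 h2 h3 => hus 0 j h2 h1 h3) (by decide)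
      · exact masterB W h3 hnos 1 0 2 4 6 5 3 4 2 3 4 0 5 hxW hxp hxq (huW 0) (hu0 0) (fun j h1 h2 h3 => hus 0 j h2 h1 h3) (huW 5) (hu0 5) (fun j h1 h2 h3 => hus 5 j h1 h2 h3) (huW 1) (hu0 1) (fun j h1 h2 h3 => hus 1 j h2 h3 h1) (huW 2) (hu0 2) (fun j h1 h2 h3 => hus 2 j h2 h1 h3) (by decide)
      · exact masterB W h3 hnos 0 1 2 3 6 5 4 3 2 4 3 1 5 hxW hxp hxq (huW 0) (hu0 0) (fun j h1 h2 h3 => hus 0 j h1 h2 h3) (huW 4) (hu0 4) (fun j h1 h2 h3 => hus 4 j h1 h2 h3) (huW 1) (hu0 1) (fun j h1 h2 h3 => hus 1 j h2 h1 h3) (huW 3) (hu0 3) (fun j h1 h2 h3 => hus 3 j h2 h1 h3) (by decide)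
      · exact absurd rfl hpq
      · exact masterB W h3 hnos 2 0 1 3 4 6 6 3 1 5 4 0 5 hxW hxq hxq (huW 0) (hu0 0) (fun j h1 h2 h3 => hus 0 j h2 h3 h1) (huW 1) (hu0 1) (fun j h1 h2 h3 => hus 1 j h1 h2 h3) (huW 3) (hu0 3) (fun j h1 h2 h3 => hus 3 j h2 h1 h3) (huW 2) (hu0 2) (fun j h1 h2 h3 => hus 2 j h2 h1 h3) (by decide)
      · exact masterB W h3 hnos 3 2 4 1 5 6 6 5 0 4 1 0 2 hxW hxp hxp (huW 1) (hu0 1) (fun j h1 h2 h3 => hus 1 j h2 h1 h3) (huW 3) (hu0 3) (fun j h1 h2 h3 => hus 3 j h2 h1 h3) (huW 2) (hu0 2) (fun j h1 h2 h3 => hus 2 j h2 h3 h1) (huW 0) (hu0 0) (fun j h1 h2 h3 => hus 0 j h2 h1 h3) (by decide)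
      · exact masterB W h3 hnos 4 2 3 0 5 6 6 5 1 3 0 1 2 hxW hxp hxp (huW 1) (hu0 1) (fun j h1 h2 h3 => hus 1 j h2 h3 h1) (huW 2) (hu0 2) (fun j h1 h2 h3 => hus 2 j h2 h1 h3) (huW 3) (hu0 3) (fun j h1 h2 h3 => hus 3 j h2 h3 h1) (huW 0) (hu0 0) (fun j h1 h2 h3 => hus 0 j h1 h2 h3) (by decide)
      · exact masterB W h3 hnos 5 0 4 1 3 6 6 3 2 4 1 0 2 hxW hxp hxp (huW 2) (hu0 2) (fun j h1 h2 h3 => hus 2 j h2 h3 h1) (huW 3) (hu0 3) (fun j h1 h2 h3 => hus 3 j h2 h3 h1) (huW 1) (hu0 1) (fun j h1 h2 h3 => hus 1 j h2 h1 h3) (huW 0) (hu0 0) (fun j h1 h2 h3 => hus 0 j h2 h1 h3) (by decide)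
      · exact masterB W h3 hnos 0 1 2 4 5 6 6 4 2 3 5 1 3 hxW hxp hxp (huW 0) (hu0 0) (fun j h1 h2 h3 => hus 0 j h1 h2 h3) (huW 2) (hu0 2) (fun j h1 h2 h3 => hus 2 j h1 h2 h3) (huW 1) (hu0 1) (fun j h1 h2 h3 => hus 1 j h2 h3 h1) (huW 3) (hu0 3) (fun j h1 h2 h3 => hus 3 j h2 h3 h1) (by decide)
      · exact masterB W h3 hnos 1 0 2 3 5 6 6 3 2 4 5 0 4 hxW hxp hxp (huW 0) (hu0 0) (fun j h1 h2 h3 => hus 0 j h2 h1 h3) (huW 3) (hu0 3) (fun j h1 h2 h3 => hus 3 j h1 h2 h3) (huW 1) (hu0 1) (fun j h1 h2 h3 => hus 1 j h2 h1 h3) (huW 2) (hu0 2) (fun j h1 h2 h3 => hus 2 j h2 h3 h1) (by decide)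
      · exact masterB W h3 hnos 2 0 1 3 4 6 6 3 1 5 4 0 5 hxW hxp hxp (huW 0) (hu0 0) (fun j h1 h2 h3 => hus 0 j h2 h3 h1) (huW 1) (hu0 1) (fun j h1 h2 h3 => hus 1 j h1 h2 h3) (huW 3) (hu0 3) (fun j h1 h2 h3 => hus 3 j h2 h1 h3) (huW 2) (hu0 2) (fun j h1 h2 h3 => hus 2 j h2 h1 h3) (by decide)
      · exact absurd rfl hpq
    · have hbig : ∀ p q : Fin 7, ∀ x, x ∈ W → (∀ j, j ≠ p → j ≠ q → x j = 0) → x = 0 := by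
        intro p q x hxW hxs
        by_contra h0
        exact hpair ⟨p, q, x, hxW, h0, hxs⟩
      exfalso
      have h00 : u 0 0 ≠ 0 := coord_ne_zero hbig (huW 0) (hu0 0) (fun j h1 h2 h3 => hus 0 j h1 h2 h3)
      have h01 : u 0 1 ≠ 0 := coord_ne_zero hbig (huW 0) (hu0 0) (fun j h1 h2 h3 => hus 0 j h2 h1 h3)
      have h13 : u 1 3 ≠ 0 := coord_ne_zero hbig (huW 1) (hu0 1) (fun j h1 h2 h3 => hus 1 j h2 h1 h3)
      have h65 : u 6 5 ≠ 0 := coord_ne_zero hbig (huW 6) (hu0 6) (fun j h1 h2 h3 => hus 6 j h2 h1 h3)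
      have h66 : u 6 6 ≠ 0 := coord_ne_zero hbig (huW 6) (hu0 6) (fun j h1 h2 h3 => hus 6 j h2 h3 h1)
      have hli : ∀ α β γ : ℂ, α•(u 0)+β•(u 1)+γ•(u 6) = 0 → α = 0 ∧ β = 0 ∧ γ = 0 := by
        intro α β γ hC
        have hα : α = 0 := by
          have hh := congrFun hC 0
          simp [hus 1 0 (by decide) (by decide) (by decide),
            hus 6 0 (by decide) (by decide) (by decide)] at hh
          rcases hh with hh | hh
          · exact hh
          · exact absurd hh h00
        have hβ : β = 0 := by
          have hh := congrFun hC 3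
          simp [hα, hus 0 3 (by decide) (by decide) (by decide),
            hus 6 3 (by decide) (by decide) (by decide)] at hh
          rcases hh with hh | hh
          · exact hh
          · exact absurd hh h13
        have hγ : γ = 0 := by
          have hh := congrFun hC 5
          simp [hα, hβ, hus 0 5 (by decide) (by decide) (by decide),
            hus 1 5 (by decide) (by decide) (by decide)] at hh
          rcases hh with hh | hh
          · exact hh
          · exact absurd hh h65
        exact ⟨hα, hβ, hγ⟩
      obtain ⟨α, β, γ, hEq⟩ := span_of_dim3 W h3 (huW 0) (huW 1) (huW 6) hli (huW 2)
      have hα : α = 0 := by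
        have hh := (congrFun hEq 1).symm
        simp [hus 2 1 (by decide) (by decide) (by decide),
          hus 1 1 (by decide) (by decide) (by decide),
          hus 6 1 (by decide) (by decide) (by decide)] at hh
        rcases hh with hh | hh
        · exact hh
        · exact absurd hh h01
      have hβ : β = 0 := by
        have hh := (congrFun hEq 3).symm
        simp [hα, hus 2 3 (by decide) (by decide) (by decide),
          hus 0 3 (by decide) (by decide) (by decide),
          hus 6 3 (by decide) (by decide) (by decide)] at hh
        rcases hh with hh | hh
        · exact hh
        · exact absurd hh h13
      have hγ : γ = 0 := by
        have hh := (congrFun hEq 6).symm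
        simp [hα, hβ, hus 2 6 (by decide) (by decide) (by decide),
          hus 0 6 (by decide) (by decide) (by decide),
          hus 1 6 (by decide) (by decide) (by decide)] at hh
        rcases hh with hh | hh
        · exact hh
        · exact absurd hh h66
      apply hu0 2
      rw [hEq, hα, hβ, hγ]
      simp

/-- **O'Grady, Claim 1.2.** Given a basis `v₀, …, v₆` of `ℂ⁷`, the seven planes
`Λ₁=⟨v₀,v₁,v₂⟩, Λ₂=⟨v₂,v₃,v₄⟩, Λ₃=⟨v₀,v₄,v₅⟩, Λ₄=⟨v₁,v₃,v₅⟩, Λ₅=⟨v₀,v₃,v₆⟩, Λ₆=⟨v₁,v₄,v₆⟩,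
Λ₇=⟨v₂,v₅,v₆⟩` form a complete family of pairwise incident planes: any two of them intersect
nontrivially, and every 3-dimensional subspace of `ℂ⁷` intersecting each `Λᵢ` nontrivially
equals one of them. -/
theorem seven_planes_complete_family
    (v : Fin 7 → (Fin 7 → ℂ)) (hv : LinearIndependent ℂ v)
    (hv' : span ℂ (Set.range v) = ⊤)
    (Λ : Fin 7 → Submodule ℂ (Fin 7 → ℂ))
    (hΛ : Λ = ![span ℂ {v 0, v 1, v 2}, span ℂ {v 2, v 3, v 4}, span ℂ {v 0, v 4, v 5},
      span ℂ {v 1, v 3, v 5}, span ℂ {v 0, v 3, v 6}, span ℂ {v 1, v 4, v 6},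
      span ℂ {v 2, v 5, v 6}]) :
    (∀ i j, Λ i ⊓ Λ j ≠ ⊥) ∧
    (∀ W : Submodule ℂ (Fin 7 → ℂ), finrank ℂ W = 3 →
      (∀ i, W ⊓ Λ i ≠ ⊥) → ∃ i, W = Λ i) := by
  constructor
  · intro i j
    rw [hΛ]
    fin_cases i <;> fin_cases j
    · exact inf_ne_bot_of (v 0) (subset_span (by simp)) (subset_span (by simp)) (hv.ne_zero 0)
    · exact inf_ne_bot_of (v 2) (subset_span (by simp)) (subset_span (by simp)) (hv.ne_zero 2)
    · exact inf_ne_bot_of (v 0) (subset_span (by simp)) (subset_span (by simp)) (hv.ne_zero 0)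
    · exact inf_ne_bot_of (v 1) (subset_span (by simp)) (subset_span (by simp)) (hv.ne_zero 1)
    · exact inf_ne_bot_of (v 0) (subset_span (by simp)) (subset_span (by simp)) (hv.ne_zero 0)
    · exact inf_ne_bot_of (v 1) (subset_span (by simp)) (subset_span (by simp)) (hv.ne_zero 1)
    · exact inf_ne_bot_of (v 2) (subset_span (by simp)) (subset_span (by simp)) (hv.ne_zero 2)
    · exact inf_ne_bot_of (v 2) (subset_span (by simp)) (subset_span (by simp)) (hv.ne_zero 2)
    · exact inf_ne_bot_of (v 2) (subset_span (by simp)) (subset_span (by simp)) (hv.ne_zero 2)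
    · exact inf_ne_bot_of (v 4) (subset_span (by simp)) (subset_span (by simp)) (hv.ne_zero 4)
    · exact inf_ne_bot_of (v 3) (subset_span (by simp)) (subset_span (by simp)) (hv.ne_zero 3)
    · exact inf_ne_bot_of (v 3) (subset_span (by simp)) (subset_span (by simp)) (hv.ne_zero 3)
    · exact inf_ne_bot_of (v 4) (subset_span (by simp)) (subset_span (by simp)) (hv.ne_zero 4)
    · exact inf_ne_bot_of (v 2) (subset_span (by simp)) (subset_span (by simp)) (hv.ne_zero 2)
    · exact inf_ne_bot_of (v 0) (subset_span (by simp)) (subset_span (by simp)) (hv.ne_zero 0)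
    · exact inf_ne_bot_of (v 4) (subset_span (by simp)) (subset_span (by simp)) (hv.ne_zero 4)
    · exact inf_ne_bot_of (v 0) (subset_span (by simp)) (subset_span (by simp)) (hv.ne_zero 0)
    · exact inf_ne_bot_of (v 5) (subset_span (by simp)) (subset_span (by simp)) (hv.ne_zero 5)
    · exact inf_ne_bot_of (v 0) (subset_span (by simp)) (subset_span (by simp)) (hv.ne_zero 0)
    · exact inf_ne_bot_of (v 4) (subset_span (by simp)) (subset_span (by simp)) (hv.ne_zero 4)
    · exact inf_ne_bot_of (v 5) (subset_span (by simp)) (subset_span (by simp)) (hv.ne_zero 5)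
    · exact inf_ne_bot_of (v 1) (subset_span (by simp)) (subset_span (by simp)) (hv.ne_zero 1)
    · exact inf_ne_bot_of (v 3) (subset_span (by simp)) (subset_span (by simp)) (hv.ne_zero 3)
    · exact inf_ne_bot_of (v 5) (subset_span (by simp)) (subset_span (by simp)) (hv.ne_zero 5)
    · exact inf_ne_bot_of (v 1) (subset_span (by simp)) (subset_span (by simp)) (hv.ne_zero 1)
    · exact inf_ne_bot_of (v 3) (subset_span (by simp)) (subset_span (by simp)) (hv.ne_zero 3)
    · exact inf_ne_bot_of (v 1) (subset_span (by simp)) (subset_span (by simp)) (hv.ne_zero 1)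
    · exact inf_ne_bot_of (v 5) (subset_span (by simp)) (subset_span (by simp)) (hv.ne_zero 5)
    · exact inf_ne_bot_of (v 0) (subset_span (by simp)) (subset_span (by simp)) (hv.ne_zero 0)
    · exact inf_ne_bot_of (v 3) (subset_span (by simp)) (subset_span (by simp)) (hv.ne_zero 3)
    · exact inf_ne_bot_of (v 0) (subset_span (by simp)) (subset_span (by simp)) (hv.ne_zero 0)
    · exact inf_ne_bot_of (v 3) (subset_span (by simp)) (subset_span (by simp)) (hv.ne_zero 3)
    · exact inf_ne_bot_of (v 0) (subset_span (by simp)) (subset_span (by simp)) (hv.ne_zero 0)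
    · exact inf_ne_bot_of (v 6) (subset_span (by simp)) (subset_span (by simp)) (hv.ne_zero 6)
    · exact inf_ne_bot_of (v 6) (subset_span (by simp)) (subset_span (by simp)) (hv.ne_zero 6)
    · exact inf_ne_bot_of (v 1) (subset_span (by simp)) (subset_span (by simp)) (hv.ne_zero 1)
    · exact inf_ne_bot_of (v 4) (subset_span (by simp)) (subset_span (by simp)) (hv.ne_zero 4)
    · exact inf_ne_bot_of (v 4) (subset_span (by simp)) (subset_span (by simp)) (hv.ne_zero 4)
    · exact inf_ne_bot_of (v 1) (subset_span (by simp)) (subset_span (by simp)) (hv.ne_zero 1)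
    · exact inf_ne_bot_of (v 6) (subset_span (by simp)) (subset_span (by simp)) (hv.ne_zero 6)
    · exact inf_ne_bot_of (v 1) (subset_span (by simp)) (subset_span (by simp)) (hv.ne_zero 1)
    · exact inf_ne_bot_of (v 6) (subset_span (by simp)) (subset_span (by simp)) (hv.ne_zero 6)
    · exact inf_ne_bot_of (v 2) (subset_span (by simp)) (subset_span (by simp)) (hv.ne_zero 2)
    · exact inf_ne_bot_of (v 2) (subset_span (by simp)) (subset_span (by simp)) (hv.ne_zero 2)
    · exact inf_ne_bot_of (v 5) (subset_span (by simp)) (subset_span (by simp)) (hv.ne_zero 5)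
    · exact inf_ne_bot_of (v 5) (subset_span (by simp)) (subset_span (by simp)) (hv.ne_zero 5)
    · exact inf_ne_bot_of (v 6) (subset_span (by simp)) (subset_span (by simp)) (hv.ne_zero 6)
    · exact inf_ne_bot_of (v 6) (subset_span (by simp)) (subset_span (by simp)) (hv.ne_zero 6)
    · exact inf_ne_bot_of (v 2) (subset_span (by simp)) (subset_span (by simp)) (hv.ne_zero 2)
  · intro W hW3 hWint
    have hv'' : ⊤ ≤ span ℂ (Set.range v) := hv'.ge
    set b : Basis (Fin 7) ℂ (Fin 7 → ℂ) := Basis.mk hv hv'' with hb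
    set e : (Fin 7 → ℂ) ≃ₗ[ℂ] (Fin 7 → ℂ) := b.equivFun with heq
    have he : ∀ i, e (v i) = E i := by
      intro i
      have h1 : v i = b i := (Basis.mk_apply hv hv'' i).symm
      rw [h1, heq, Basis.equivFun_apply, Basis.repr_self]
      funext j
      rw [Finsupp.single_eq_pi_single]
    have hmap : ∀ n : Fin 7,
        Submodule.map (e : (Fin 7 → ℂ) →ₗ[ℂ] (Fin 7 → ℂ)) (Λ n) = Q n := by
      intro n
      rw [hΛ]
      fin_cases n
      · show Submodule.map (e : (Fin 7 → ℂ) →ₗ[ℂ] (Fin 7 → ℂ)) (span ℂ {v 0, v 1, v 2}) = Q 0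
        rw [Submodule.map_span, Set.image_insert_eq, Set.image_insert_eq, Set.image_singleton]
        simp only [LinearEquiv.coe_coe, he]
        rfl
      · show Submodule.map (e : (Fin 7 → ℂ) →ₗ[ℂ] (Fin 7 → ℂ)) (span ℂ {v 2, v 3, v 4}) = Q 1
        rw [Submodule.map_span, Set.image_insert_eq, Set.image_insert_eq, Set.image_singleton]
        simp only [LinearEquiv.coe_coe, he]
        rfl
      · show Submodule.map (e : (Fin 7 → ℂ) →ₗ[ℂ] (Fin 7 → ℂ)) (span ℂ {v 0, v 4, v 5}) = Q 2
        rw [Submodule.map_span, Set.image_insert_eq, Set.image_insert_eq, Set.image_singleton]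
        simp only [LinearEquiv.coe_coe, he]
        rfl
      · show Submodule.map (e : (Fin 7 → ℂ) →ₗ[ℂ] (Fin 7 → ℂ)) (span ℂ {v 1, v 3, v 5}) = Q 3
        rw [Submodule.map_span, Set.image_insert_eq, Set.image_insert_eq, Set.image_singleton]
        simp only [LinearEquiv.coe_coe, he]
        rfl
      · show Submodule.map (e : (Fin 7 → ℂ) →ₗ[ℂ] (Fin 7 → ℂ)) (span ℂ {v 0, v 3, v 6}) = Q 4
        rw [Submodule.map_span, Set.image_insert_eq, Set.image_insert_eq, Set.image_singleton]
        simp only [LinearEquiv.coe_coe, he]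
        rfl
      · show Submodule.map (e : (Fin 7 → ℂ) →ₗ[ℂ] (Fin 7 → ℂ)) (span ℂ {v 1, v 4, v 6}) = Q 5
        rw [Submodule.map_span, Set.image_insert_eq, Set.image_insert_eq, Set.image_singleton]
        simp only [LinearEquiv.coe_coe, he]
        rfl
      · show Submodule.map (e : (Fin 7 → ℂ) →ₗ[ℂ] (Fin 7 → ℂ)) (span ℂ {v 2, v 5, v 6}) = Q 6
        rw [Submodule.map_span, Set.image_insert_eq, Set.image_insert_eq, Set.image_singleton]
        simp only [LinearEquiv.coe_coe, he]
        rfl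
    have hQint : ∀ n, (Submodule.map (e : (Fin 7 → ℂ) →ₗ[ℂ] (Fin 7 → ℂ)) W) ⊓ Q n ≠ ⊥ := by
      intro n
      rw [Submodule.ne_bot_iff]
      obtain ⟨x, hx, hx0⟩ := (Submodule.ne_bot_iff _).1 (hWint n)
      refine ⟨e x, ⟨Submodule.mem_map_of_mem hx.1, ?_⟩, ?_⟩
      · rw [← hmap n]
        exact Submodule.mem_map_of_mem hx.2
      · simpa using e.map_ne_zero_iff.2 hx0
    have h3' : finrank ℂ (Submodule.map (e : (Fin 7 → ℂ) →ₗ[ℂ] (Fin 7 → ℂ)) W) = 3 := by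
      rw [LinearEquiv.finrank_map_eq]
      exact hW3
    obtain ⟨n, hn⟩ := core _ h3' hQint
    refine ⟨n, Submodule.map_injective_of_injective
      (f := (e : (Fin 7 → ℂ) →ₗ[ℂ] (Fin 7 → ℂ))) e.injective ?_⟩
    rw [hn, ← hmap n]
end

section
/- Let v₀,…,v₅ be a basis of ℂ⁶ and set Λ₁=⟨v₀,v₁,v₂⟩, Λ₂=⟨v₂,v₃,v₄⟩, Λ₃=⟨v₀,v₄,v₅⟩, Λ₄=⟨v₁,v₃,v₅⟩. Then a 2-dimensional subspace L of ℂ⁶ satisfies L ∩ Λᵢ ≠ {0} for i = 1,2,3,4 if and only if L equals one of the three subspaces L₅=⟨v₀,v₃⟩, L₆=⟨v₁,v₄⟩, L₇=⟨v₂,v₅⟩. -/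
open Module Submodule

/-- If two independent vectors lie in a 2-dimensional subspace, they span it. -/
theorem span_pair_aux' {x y : Fin 6 → ℂ} {L : Submodule ℂ (Fin 6 → ℂ)}
    (hx : x ∈ L) (hy : y ∈ L) (hind : LinearIndependent ℂ ![x, y])
    (hL : finrank ℂ L = 2) : L = span ℂ {x, y} := by
  have hle : span ℂ ({x, y} : Set (Fin 6 → ℂ)) ≤ L := by
    rw [span_le]
    rintro z (rfl | hz)
    · exact hx
    · rw [Set.mem_singleton_iff] at hz; subst hz; exact hy
  have hr : Set.range ![x, y] = ({x, y} : Set (Fin 6 → ℂ)) := by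
    simp [Matrix.range_cons, Matrix.range_empty, Set.pair_comm]
  have h2 : finrank ℂ (span ℂ ({x, y} : Set (Fin 6 → ℂ))) = 2 := by
    rw [← hr, finrank_span_eq_card hind]; simp
  exact (Submodule.eq_of_le_of_finrank_le hle (by rw [h2, hL])).symm

/-- **O'Grady, equation (1.7).** Let `v₀, …, v₅` be a basis of `ℂ⁶` and set `Λ₁=⟨v₀,v₁,v₂⟩`,
`Λ₂=⟨v₂,v₃,v₄⟩`, `Λ₃=⟨v₀,v₄,v₅⟩`, `Λ₄=⟨v₁,v₃,v₅⟩`. A 2-dimensional subspace `L` of `ℂ⁶`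
meets all of `Λ₁, Λ₂, Λ₃, Λ₄` nontrivially if and only if `L` is one of
`L₅=⟨v₀,v₃⟩`, `L₆=⟨v₁,v₄⟩`, `L₇=⟨v₂,v₅⟩`. -/
theorem lines_meeting_four_planes
    (v : Fin 6 → (Fin 6 → ℂ)) (hv : LinearIndependent ℂ v)
    (hv' : span ℂ (Set.range v) = ⊤)
    (L : Submodule ℂ (Fin 6 → ℂ)) (hL : finrank ℂ L = 2) :
    ((L ⊓ span ℂ {v 0, v 1, v 2} ≠ ⊥) ∧ (L ⊓ span ℂ {v 2, v 3, v 4} ≠ ⊥) ∧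
     (L ⊓ span ℂ {v 0, v 4, v 5} ≠ ⊥) ∧ (L ⊓ span ℂ {v 1, v 3, v 5} ≠ ⊥)) ↔
    (L = span ℂ {v 0, v 3} ∨ L = span ℂ {v 1, v 4} ∨ L = span ℂ {v 2, v 5}) := by
  classical
  have htop : ⊤ ≤ span ℂ (Set.range v) := hv'.ge
  set B : Basis (Fin 6) ℂ (Fin 6 → ℂ) := Basis.mk hv htop with hB
  have hb : ∀ i, B i = v i := fun i => Basis.mk_apply hv htop i
  have hrepr : ∀ i j : Fin 6, B.repr (v j) i = if j = i then 1 else 0 := by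
    intro i j
    rw [← hb j, B.repr_self, Finsupp.single_apply]
  have hmem : ∀ (i j k : Fin 6) (x : Fin 6 → ℂ),
      x ∈ span ℂ ({v i, v j, v k} : Set (Fin 6 → ℂ)) ↔
      ∀ l, l ≠ i → l ≠ j → l ≠ k → B.repr x l = 0 := by
    intro i j k x
    have himg : ({v i, v j, v k} : Set (Fin 6 → ℂ)) = B '' {i, j, k} := by
      simp [Set.image_insert_eq, hb]
    rw [himg, B.mem_span_image, Finsupp.support_subset_iff]
    constructor
    · intro h l h1 h2 h3
      exact h l (by simp [h1, h2, h3])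
    · intro h l hl
      simp only [Set.mem_insert_iff, Set.mem_singleton_iff, not_or] at hl
      exact h l hl.1 hl.2.1 hl.2.2
  have hsingle : ∀ (m : Fin 6) (x : Fin 6 → ℂ), (∀ l, l ≠ m → B.repr x l = 0) →
      x = (B.repr x m) • v m := by
    intro m x hx
    rw [B.ext_elem_iff]
    intro l
    rw [map_smul, Finsupp.smul_apply, hrepr, smul_eq_mul]
    by_cases h : l = m
    · subst h; simp
    · rw [hx l h, if_neg (fun hh => h hh.symm), mul_zero]
  have hunit : ∀ (m : Fin 6) (x : Fin 6 → ℂ), x ∈ L → x ≠ 0 →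
      (∀ l, l ≠ m → B.repr x l = 0) → v m ∈ L := by
    intro m x hxL hx0 hs
    have hxeq := hsingle m x hs
    have hc : B.repr x m ≠ 0 := fun h => hx0 (by rw [hxeq, h, zero_smul])
    have hmem' : (B.repr x m)⁻¹ • x ∈ L := L.smul_mem _ hxL
    have heq : (B.repr x m)⁻¹ • x = v m := by
      nth_rewrite 2 [hxeq]
      rw [smul_smul, inv_mul_cancel₀ hc, one_smul]
    rwa [heq] at hmem'
  have hexists : ∀ x : Fin 6 → ℂ, x ≠ 0 → ∃ l, B.repr x l ≠ 0 := by
    intro x hx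
    by_contra h
    push_neg at h
    exact hx (B.ext_elem_iff.2 fun l => by simp [h l])
  have hpair : ∀ i j : Fin 6, i ≠ j → LinearIndependent ℂ ![v i, v j] := by
    intro i j hij
    refine linearIndependent_fin2.2 ⟨?_, ?_⟩
    · simpa using hv.ne_zero j
    · intro t ht
      simp only [Matrix.cons_val_one, Matrix.head_cons, Matrix.cons_val_zero] at ht
      have h2 := congrArg (fun w => B.repr w i) ht
      simp [hrepr, Ne.symm hij] at h2
  have hdich : ∀ x y : Fin 6 → ℂ, y ≠ 0 →
      (∃ t : ℂ, t • y = x) ∨ LinearIndependent ℂ ![x, y] := by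
    intro x y hy
    by_cases h : ∃ t : ℂ, t • y = x
    · exact Or.inl h
    · refine Or.inr (linearIndependent_fin2.2 ⟨by simpa using hy, ?_⟩)
      push_neg at h
      simpa using h
  have coord : ∀ {x y z : Fin 6 → ℂ} {p q : ℂ}, p • x + q • y = z → ∀ l : Fin 6,
      p * B.repr x l + q * B.repr y l = B.repr z l := by
    intro x y z p q h l
    have h2 := congrArg (fun w => B.repr w l) h
    simpa [map_add, map_smul] using h2
  constructor
  · rintro ⟨h1, h2, h3, h4⟩
    obtain ⟨w1, hw1m, hw1ne⟩ := Submodule.exists_mem_ne_zero_of_ne_bot h1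
    obtain ⟨hw1L, hw1S'⟩ := Submodule.mem_inf.1 hw1m
    have hw1S := (hmem 0 1 2 w1).1 hw1S'
    obtain ⟨w2, hw2m, hw2ne⟩ := Submodule.exists_mem_ne_zero_of_ne_bot h2
    obtain ⟨hw2L, hw2S'⟩ := Submodule.mem_inf.1 hw2m
    have hw2S := (hmem 2 3 4 w2).1 hw2S'
    obtain ⟨w3, hw3m, hw3ne⟩ := Submodule.exists_mem_ne_zero_of_ne_bot h3
    obtain ⟨hw3L, hw3S'⟩ := Submodule.mem_inf.1 hw3m
    have hw3S := (hmem 0 4 5 w3).1 hw3S'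
    obtain ⟨w4, hw4m, hw4ne⟩ := Submodule.exists_mem_ne_zero_of_ne_bot h4
    obtain ⟨hw4L, hw4S'⟩ := Submodule.mem_inf.1 hw4m
    have hw4S := (hmem 1 3 5 w4).1 hw4S'
    rcases hdich w1 w2 hw2ne with ⟨t, ht⟩ | hind12
    · -- w1 is a multiple of w2, hence supported on {2}: v 2 ∈ L
      have hsuppa : ∀ l, l ≠ 2 → B.repr w1 l = 0 := by
        intro l hl
        by_cases h0 : l = 0
        · subst h0
          rw [← ht, map_smul, Finsupp.smul_apply,
            hw2S 0 (by decide) (by decide) (by decide), smul_zero]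
        by_cases h1' : l = 1
        · subst h1'
          rw [← ht, map_smul, Finsupp.smul_apply,
            hw2S 1 (by decide) (by decide) (by decide), smul_zero]
        · exact hw1S l h0 h1' hl
      have hv2L : v 2 ∈ L := hunit 2 w1 hw1L hw1ne hsuppa
      rcases hdich w3 w4 hw4ne with ⟨s, hs⟩ | hind34
      · have hsuppc : ∀ l, l ≠ 5 → B.repr w3 l = 0 := by
          intro l hl
          by_cases h0 : l = 0
          · subst h0
            rw [← hs, map_smul, Finsupp.smul_apply,
              hw4S 0 (by decide) (by decide) (by decide), smul_zero]
          by_cases h4' : l = 4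
          · subst h4'
            rw [← hs, map_smul, Finsupp.smul_apply,
              hw4S 4 (by decide) (by decide) (by decide), smul_zero]
          · exact hw3S l h0 h4' hl
        have hv5L : v 5 ∈ L := hunit 5 w3 hw3L hw3ne hsuppc
        exact Or.inr (Or.inr (span_pair_aux' hv2L hv5L (hpair 2 5 (by decide)) hL))
      · exfalso
        have hLcd := span_pair_aux' hw3L hw4L hind34 hL
        have hv2m : v 2 ∈ span ℂ ({w3, w4} : Set (Fin 6 → ℂ)) := hLcd ▸ hv2L
        obtain ⟨p, q, hst⟩ := Submodule.mem_span_pair.1 hv2m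
        have hc2 := coord hst 2
        rw [hw3S 2 (by decide) (by decide) (by decide),
          hw4S 2 (by decide) (by decide) (by decide),
          mul_zero, mul_zero, add_zero, hrepr] at hc2
        simp at hc2
    · have hLab := span_pair_aux' hw1L hw2L hind12 hL
      rcases hdich w3 w4 hw4ne with ⟨s, hs⟩ | hind34
      · exfalso
        have hsuppc : ∀ l, l ≠ 5 → B.repr w3 l = 0 := by
          intro l hl
          by_cases h0 : l = 0
          · subst h0
            rw [← hs, map_smul, Finsupp.smul_apply,
              hw4S 0 (by decide) (by decide) (by decide), smul_zero]
          by_cases h4' : l = 4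
          · subst h4'
            rw [← hs, map_smul, Finsupp.smul_apply,
              hw4S 4 (by decide) (by decide) (by decide), smul_zero]
          · exact hw3S l h0 h4' hl
        have hv5L : v 5 ∈ L := hunit 5 w3 hw3L hw3ne hsuppc
        have hv5m : v 5 ∈ span ℂ ({w1, w2} : Set (Fin 6 → ℂ)) := hLab ▸ hv5L
        obtain ⟨p, q, hst⟩ := Submodule.mem_span_pair.1 hv5m
        have hc5 := coord hst 5
        rw [hw1S 5 (by decide) (by decide) (by decide),
          hw2S 5 (by decide) (by decide) (by decide),
          mul_zero, mul_zero, add_zero, hrepr] at hc5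
        simp at hc5
      · -- the main computation: both pairs independent
        have hLcd := span_pair_aux' hw3L hw4L hind34 hL
        have hw3sp : w3 ∈ span ℂ ({w1, w2} : Set (Fin 6 → ℂ)) := hLab ▸ hw3L
        obtain ⟨α, β, hcc⟩ := Submodule.mem_span_pair.1 hw3sp
        have hw4sp : w4 ∈ span ℂ ({w1, w2} : Set (Fin 6 → ℂ)) := hLab ▸ hw4L
        obtain ⟨γ, δ, hdd⟩ := Submodule.mem_span_pair.1 hw4sp
        have hw1sp : w1 ∈ span ℂ ({w3, w4} : Set (Fin 6 → ℂ)) := hLcd ▸ hw1L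
        obtain ⟨s, t, haa⟩ := Submodule.mem_span_pair.1 hw1sp
        have hw2sp : w2 ∈ span ℂ ({w3, w4} : Set (Fin 6 → ℂ)) := hLcd ▸ hw2L
        obtain ⟨s', t', hbb⟩ := Submodule.mem_span_pair.1 hw2sp
        have ec1 : α * B.repr w1 1 = 0 := by
          have h := coord hcc 1
          rwa [hw2S 1 (by decide) (by decide) (by decide), mul_zero, add_zero,
            hw3S 1 (by decide) (by decide) (by decide)] at h
        have ec3 : β * B.repr w2 3 = 0 := by
          have h := coord hcc 3
          rwa [hw1S 3 (by decide) (by decide) (by decide), mul_zero, zero_add,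
            hw3S 3 (by decide) (by decide) (by decide)] at h
        have ec0 : α * B.repr w1 0 = B.repr w3 0 := by
          have h := coord hcc 0
          rwa [hw2S 0 (by decide) (by decide) (by decide), mul_zero, add_zero] at h
        have ec4 : β * B.repr w2 4 = B.repr w3 4 := by
          have h := coord hcc 4
          rwa [hw1S 4 (by decide) (by decide) (by decide), mul_zero, zero_add] at h
        have ec5 : B.repr w3 5 = 0 := by
          have h := coord hcc 5
          rw [hw1S 5 (by decide) (by decide) (by decide),
            hw2S 5 (by decide) (by decide) (by decide), mul_zero, mul_zero, add_zero] at h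
          exact h.symm
        have ed0 : γ * B.repr w1 0 = 0 := by
          have h := coord hdd 0
          rwa [hw2S 0 (by decide) (by decide) (by decide), mul_zero, add_zero,
            hw4S 0 (by decide) (by decide) (by decide)] at h
        have ed4 : δ * B.repr w2 4 = 0 := by
          have h := coord hdd 4
          rwa [hw1S 4 (by decide) (by decide) (by decide), mul_zero, zero_add,
            hw4S 4 (by decide) (by decide) (by decide)] at h
        have ed1 : γ * B.repr w1 1 = B.repr w4 1 := by
          have h := coord hdd 1
          rwa [hw2S 1 (by decide) (by decide) (by decide), mul_zero, add_zero] at h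
        have ed3 : δ * B.repr w2 3 = B.repr w4 3 := by
          have h := coord hdd 3
          rwa [hw1S 3 (by decide) (by decide) (by decide), mul_zero, zero_add] at h
        have ed5 : B.repr w4 5 = 0 := by
          have h := coord hdd 5
          rw [hw1S 5 (by decide) (by decide) (by decide),
            hw2S 5 (by decide) (by decide) (by decide), mul_zero, mul_zero, add_zero] at h
          exact h.symm
        have ea2 : B.repr w1 2 = 0 := by
          have h := coord haa 2
          rw [hw3S 2 (by decide) (by decide) (by decide),
            hw4S 2 (by decide) (by decide) (by decide), mul_zero, mul_zero, add_zero] at h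
          exact h.symm
        have eb2 : B.repr w2 2 = 0 := by
          have h := coord hbb 2
          rw [hw3S 2 (by decide) (by decide) (by decide),
            hw4S 2 (by decide) (by decide) (by decide), mul_zero, mul_zero, add_zero] at h
          exact h.symm
        by_cases hc0 : B.repr w3 0 = 0
        · -- here L = span {v 1, v 4}
          have hc4 : B.repr w3 4 ≠ 0 := by
            obtain ⟨l, hl⟩ := hexists w3 hw3ne
            fin_cases l
            · exact absurd hc0 hl
            · exact absurd (hw3S 1 (by decide) (by decide) (by decide)) hl
            · exact absurd (hw3S 2 (by decide) (by decide) (by decide)) hl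
            · exact absurd (hw3S 3 (by decide) (by decide) (by decide)) hl
            · exact hl
            · exact absurd ec5 hl
          have hβ : β ≠ 0 := fun h => hc4 (by rw [← ec4, h, zero_mul])
          have hb4 : B.repr w2 4 ≠ 0 := fun h => hc4 (by rw [← ec4, h, mul_zero])
          have hb3 : B.repr w2 3 = 0 := (mul_eq_zero.1 ec3).resolve_left hβ
          have hδ : δ = 0 := by
            rcases mul_eq_zero.1 ed4 with h | h
            · exact h
            · exact absurd h hb4
          have hd3 : B.repr w4 3 = 0 := by rw [← ed3, hδ, zero_mul]
          have hd1 : B.repr w4 1 ≠ 0 := by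
            obtain ⟨l, hl⟩ := hexists w4 hw4ne
            fin_cases l
            · exact absurd (hw4S 0 (by decide) (by decide) (by decide)) hl
            · exact hl
            · exact absurd (hw4S 2 (by decide) (by decide) (by decide)) hl
            · exact absurd hd3 hl
            · exact absurd (hw4S 4 (by decide) (by decide) (by decide)) hl
            · exact absurd ed5 hl
          have hγ : γ ≠ 0 := fun h => hd1 (by rw [← ed1, h, zero_mul])
          have ha0 : B.repr w1 0 = 0 := (mul_eq_zero.1 ed0).resolve_left hγ
          have hv1L : v 1 ∈ L := by
            refine hunit 1 w1 hw1L hw1ne ?_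
            intro l hl
            fin_cases l
            · exact ha0
            · exact absurd rfl hl
            · exact ea2
            · exact hw1S 3 (by decide) (by decide) (by decide)
            · exact hw1S 4 (by decide) (by decide) (by decide)
            · exact hw1S 5 (by decide) (by decide) (by decide)
          have hv4L : v 4 ∈ L := by
            refine hunit 4 w2 hw2L hw2ne ?_
            intro l hl
            fin_cases l
            · exact hw2S 0 (by decide) (by decide) (by decide)
            · exact hw2S 1 (by decide) (by decide) (by decide)
            · exact eb2
            · exact hb3
            · exact absurd rfl hl
            · exact hw2S 5 (by decide) (by decide) (by decide)
          exact Or.inr (Or.inl (span_pair_aux' hv1L hv4L (hpair 1 4 (by decide)) hL))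
        · -- here L = span {v 0, v 3}
          have hα : α ≠ 0 := fun h => hc0 (by rw [← ec0, h, zero_mul])
          have ha0 : B.repr w1 0 ≠ 0 := fun h => hc0 (by rw [← ec0, h, mul_zero])
          have ha1 : B.repr w1 1 = 0 := (mul_eq_zero.1 ec1).resolve_left hα
          have hγ : γ = 0 := by
            rcases mul_eq_zero.1 ed0 with h | h
            · exact h
            · exact absurd h ha0
          have hd1 : B.repr w4 1 = 0 := by rw [← ed1, hγ, zero_mul]
          have hd3 : B.repr w4 3 ≠ 0 := by
            obtain ⟨l, hl⟩ := hexists w4 hw4ne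
            fin_cases l
            · exact absurd (hw4S 0 (by decide) (by decide) (by decide)) hl
            · exact absurd hd1 hl
            · exact absurd (hw4S 2 (by decide) (by decide) (by decide)) hl
            · exact hl
            · exact absurd (hw4S 4 (by decide) (by decide) (by decide)) hl
            · exact absurd ed5 hl
          have hδ : δ ≠ 0 := fun h => hd3 (by rw [← ed3, h, zero_mul])
          have hb4 : B.repr w2 4 = 0 := (mul_eq_zero.1 ed4).resolve_left hδ
          have hv0L : v 0 ∈ L := by
            refine hunit 0 w1 hw1L hw1ne ?_
            intro l hl
            fin_cases l
            · exact absurd rfl hl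
            · exact ha1
            · exact ea2
            · exact hw1S 3 (by decide) (by decide) (by decide)
            · exact hw1S 4 (by decide) (by decide) (by decide)
            · exact hw1S 5 (by decide) (by decide) (by decide)
          have hv3L : v 3 ∈ L := by
            refine hunit 3 w2 hw2L hw2ne ?_
            intro l hl
            fin_cases l
            · exact hw2S 0 (by decide) (by decide) (by decide)
            · exact hw2S 1 (by decide) (by decide) (by decide)
            · exact eb2
            · exact absurd rfl hl
            · exact hb4
            · exact hw2S 5 (by decide) (by decide) (by decide)
          exact Or.inl (span_pair_aux' hv0L hv3L (hpair 0 3 (by decide)) hL)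
  · have hne : ∀ (x : Fin 6 → ℂ) (S T : Submodule ℂ (Fin 6 → ℂ)),
        x ≠ 0 → x ∈ S → x ∈ T → S ⊓ T ≠ ⊥ := by
      intro x S T hx hS hT hbot
      have hm : x ∈ S ⊓ T := Submodule.mem_inf.2 ⟨hS, hT⟩
      rw [hbot, Submodule.mem_bot] at hm
      exact hx hm
    rintro (rfl | rfl | rfl)
    · exact ⟨hne (v 0) _ _ (hv.ne_zero 0) (subset_span (by simp)) (subset_span (by simp)),
        hne (v 3) _ _ (hv.ne_zero 3) (subset_span (by simp)) (subset_span (by simp)),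
        hne (v 0) _ _ (hv.ne_zero 0) (subset_span (by simp)) (subset_span (by simp)),
        hne (v 3) _ _ (hv.ne_zero 3) (subset_span (by simp)) (subset_span (by simp))⟩
    · exact ⟨hne (v 1) _ _ (hv.ne_zero 1) (subset_span (by simp)) (subset_span (by simp)),
        hne (v 4) _ _ (hv.ne_zero 4) (subset_span (by simp)) (subset_span (by simp)),
        hne (v 4) _ _ (hv.ne_zero 4) (subset_span (by simp)) (subset_span (by simp)),
        hne (v 1) _ _ (hv.ne_zero 1) (subset_span (by simp)) (subset_span (by simp))⟩
    · exact ⟨hne (v 2) _ _ (hv.ne_zero 2) (subset_span (by simp)) (subset_span (by simp)),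
        hne (v 2) _ _ (hv.ne_zero 2) (subset_span (by simp)) (subset_span (by simp)),
        hne (v 5) _ _ (hv.ne_zero 5) (subset_span (by simp)) (subset_span (by simp)),
        hne (v 5) _ _ (hv.ne_zero 5) (subset_span (by simp)) (subset_span (by simp))⟩
end

section
/- Let v₀,…,v₅ be a basis of ℂ⁶ and set Λ₁=⟨v₀,v₁,v₂⟩, Λ₂=⟨v₂,v₃,v₄⟩, Λ₃=⟨v₀,v₄,v₅⟩. A 2-dimensional subspace L of ℂ⁶ satisfies L ∩ Λᵢ ≠ {0} for i = 1,2,3 if and only if one of the following holds: (a) L ⊂ ⟨v₀,v₂,v₄⟩; (b) v₀ ∈ L and L ⊂ ⟨v₀⟩ + ⟨v₂,v₃,v₄⟩; (c) v₂ ∈ L and L ⊂ ⟨v₂⟩ + ⟨v₀,v₄,v₅⟩; (d) v₄ ∈ L and L ⊂ ⟨v₄⟩ + ⟨v₀,v₁,v₂⟩. -/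
/-!
Write `V_S` for the span of `{v i | i ∈ S}`; linear independence gives `V_S ⊓ V_T = V_(S ∩ T)`,
so the three planes meet pairwise in the lines `⟨v₀⟩`, `⟨v₂⟩`, `⟨v₄⟩`. If `L` contains one of
these vectors, say `v₂`, then `L` is spanned by `v₂` and a vector of the plane `Λ₃` missing it.
Otherwise `L` meets the planes in three distinct lines, any two of which span `L`; hence
`L ⊓ Λ₁ ≤ Λ₁ ⊓ (Λ₂ ⊔ Λ₃) = ⟨v₀, v₂⟩` and `L ⊓ Λ₂ ≤ ⟨v₂, v₄⟩`, so `L ≤ ⟨v₀, v₂, v₄⟩`.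
The converse is a dimension count inside `⟨v₀, v₂, v₄⟩`, resp. inside `⟨v₀⟩ ⊔ Λ₂` etc.
-/

open Module Submodule

namespace LinearIndependent

variable {R M ι : Type*} [Ring R] [AddCommGroup M] [Module R M] {v : ι → M}

theorem span_image_inter (hv : LinearIndependent R v) (s t : Set ι) :
    span R (v '' (s ∩ t)) = span R (v '' s) ⊓ span R (v '' t) := by
  simp only [Finsupp.span_image_eq_map_linearCombination, Finsupp.supported_inter,
    Submodule.map_inf _ hv.finsuppLinearCombination_injective]

theorem finrank_span_image_finset [Nontrivial R] [StrongRankCondition R]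
    (hv : LinearIndependent R v) (s : Finset ι) : finrank R (span R (v '' s)) = s.card := by
  rw [Set.image_eq_range]
  exact (finrank_span_eq_card (hv.comp _ Subtype.val_injective)).trans (by simp)

theorem inf_span_image_ne_bot_of_mem [Nontrivial R] (hv : LinearIndependent R v)
    {L : Submodule R M} {s : Set ι} {i : ι} (hiL : v i ∈ L) (his : i ∈ s) :
    L ⊓ span R (v '' s) ≠ ⊥ :=
  (Submodule.ne_bot_iff _).2
    ⟨v i, mem_inf.2 ⟨hiL, subset_span (Set.mem_image_of_mem v his)⟩, hv.ne_zero i⟩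

end LinearIndependent

namespace Submodule

variable {K V : Type*} [DivisionRing K] [AddCommGroup V] [Module K V]

theorem inf_ne_bot_of_finrank_lt {L M W : Submodule K V} [FiniteDimensional K W]
    (hLW : L ≤ W) (hMW : M ≤ W) (h : finrank K W < finrank K L + finrank K M) :
    L ⊓ M ≠ ⊥ := by
  have := finiteDimensional_of_le hLW
  have := finiteDimensional_of_le hMW
  intro hLM
  have hsum := finrank_sup_add_finrank_inf_eq L M
  rw [hLM, finrank_bot] at hsum
  have := finrank_mono (sup_le hLW hMW)
  omega

theorem inf_span_singleton_eq_bot {L : Submodule K V} {u : V} (hu : u ∉ L) : L ⊓ (K ∙ u) = ⊥ :=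
  disjoint_iff.1 (disjoint_span_singleton.2 fun h ↦ absurd h hu)

variable {L : Submodule K V}

theorem sup_eq_of_finrank_eq_two (hL : finrank K L = 2) {P Q : Submodule K V}
    (hPL : P ≤ L) (hQL : Q ≤ L) (hP : P ≠ ⊥) (hQ : Q ≠ ⊥) (hPQ : P ⊓ Q = ⊥) : P ⊔ Q = L := by
  have := Module.finite_of_finrank_eq_succ hL
  have := finiteDimensional_of_le hPL
  have := finiteDimensional_of_le hQL
  refine eq_of_le_of_finrank_le (sup_le hPL hQL) ?_
  have hsum := finrank_sup_add_finrank_inf_eq P Q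
  rw [hPQ, finrank_bot] at hsum
  have := one_le_finrank_iff.2 hP
  have := one_le_finrank_iff.2 hQ
  omega

theorem le_span_insert_of_finrank_eq_two (hL : finrank K L = 2) {s : Set V} {u : V}
    (hu : u ∈ L) (hus : u ∉ span K s) (hLs : L ⊓ span K s ≠ ⊥) : L ≤ span K (insert u s) := by
  have hu₀ : u ≠ 0 := fun h ↦ hus (h ▸ zero_mem _)
  have hsup : (K ∙ u) ⊔ (L ⊓ span K s) = L := by
    refine sup_eq_of_finrank_eq_two hL ((span_singleton_le_iff_mem _ _).2 hu) inf_le_left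
      (by simpa using hu₀) hLs (eq_bot_iff.2 ?_)
    calc (K ∙ u) ⊓ (L ⊓ span K s) ≤ span K s ⊓ (K ∙ u) := by
          rw [inf_comm]; exact inf_le_inf_right _ inf_le_right
      _ = ⊥ := inf_span_singleton_eq_bot hus
  rw [span_insert]
  exact hsup ▸ sup_le_sup_left inf_le_right _

-- If `L` meets `A`, `B`, `C` in three distinct lines, any two of these lines span `L`.
theorem le_inf_sup_sup_inf_sup_of_finrank_eq_two (hL : finrank K L = 2)
    {A B C : Submodule K V}
    (hA : L ⊓ A ≠ ⊥) (hB : L ⊓ B ≠ ⊥) (hC : L ⊓ C ≠ ⊥)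
    (hAB : L ⊓ (A ⊓ B) = ⊥) (hAC : L ⊓ (A ⊓ C) = ⊥) (hBC : L ⊓ (B ⊓ C) = ⊥) :
    L ≤ A ⊓ (B ⊔ C) ⊔ B ⊓ (A ⊔ C) := by
  have span_of {X Y : Submodule K V} (hX : L ⊓ X ≠ ⊥) (hY : L ⊓ Y ≠ ⊥)
      (hXY : L ⊓ (X ⊓ Y) = ⊥) : L ⊓ X ⊔ L ⊓ Y = L :=
    sup_eq_of_finrank_eq_two hL inf_le_left inf_le_left hX hY (by rwa [← inf_inf_distrib_left])
  have le_of {X Y Z : Submodule K V} (hYZ : L ⊓ Y ⊔ L ⊓ Z = L) : L ⊓ X ≤ X ⊓ (Y ⊔ Z) :=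
    le_inf inf_le_right (inf_le_left.trans (hYZ.ge.trans (sup_le_sup inf_le_right inf_le_right)))
  exact (span_of hA hB hAB).ge.trans
    (sup_le_sup (le_of (span_of hB hC hBC)) (le_of (span_of hA hC hAC)))

end Submodule

namespace LinearIndependent

variable {K V : Type*} [DivisionRing K] [AddCommGroup V] [Module K V] {L : Submodule K V}

theorem inf_span_image_ne_bot {ι : Type*} [DecidableEq ι] {v : ι → V}
    (hv : LinearIndependent K v) {s t : Finset ι} (hL : L ≤ span K (v '' s))
    (h : s.card < finrank K L + (s ∩ t).card) :
    L ⊓ span K (v '' t) ≠ ⊥ := by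
  have := FiniteDimensional.span_of_finite K (s.finite_toSet.image v)
  have hmeet : L ⊓ span K (v '' ↑(s ∩ t)) ≠ ⊥ :=
    inf_ne_bot_of_finrank_lt hL (span_mono (Set.image_mono (by simp)))
      (by rwa [hv.finrank_span_image_finset, hv.finrank_span_image_finset])
  exact ne_bot_of_le_ne_bot hmeet (inf_le_inf_left L (span_mono (Set.image_mono (by simp))))

theorem line_cases_of_meets_three_planes {v : Fin 6 → V} (hv : LinearIndependent K v)
    (hL : finrank K L = 2)
    (h₁ : L ⊓ span K (v '' ↑({0, 1, 2} : Finset (Fin 6))) ≠ ⊥)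
    (h₂ : L ⊓ span K (v '' ↑({2, 3, 4} : Finset (Fin 6))) ≠ ⊥)
    (h₃ : L ⊓ span K (v '' ↑({0, 4, 5} : Finset (Fin 6))) ≠ ⊥) :
    L ≤ span K (v '' ↑({0, 2, 4} : Finset (Fin 6))) ∨
      (v 0 ∈ L ∧ L ≤ span K (v '' ↑({0, 2, 3, 4} : Finset (Fin 6)))) ∨
      (v 2 ∈ L ∧ L ≤ span K (v '' ↑({2, 0, 4, 5} : Finset (Fin 6)))) ∨
      (v 4 ∈ L ∧ L ≤ span K (v '' ↑({4, 0, 1, 2} : Finset (Fin 6)))) := by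
  by_cases h2 : v 2 ∈ L
  · refine Or.inr (Or.inr (Or.inl ⟨h2, ?_⟩))
    simpa only [Finset.coe_insert, Set.image_insert_eq] using
      le_span_insert_of_finrank_eq_two hL h2 (hv.notMem_span_image (by simp)) h₃
  by_cases h4 : v 4 ∈ L
  · refine Or.inr (Or.inr (Or.inr ⟨h4, ?_⟩))
    simpa only [Finset.coe_insert, Set.image_insert_eq] using
      le_span_insert_of_finrank_eq_two hL h4 (hv.notMem_span_image (by simp)) h₁
  by_cases h0 : v 0 ∈ L
  · refine Or.inr (Or.inl ⟨h0, ?_⟩)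
    simpa only [Finset.coe_insert, Set.image_insert_eq] using
      le_span_insert_of_finrank_eq_two hL h0 (hv.notMem_span_image (by simp)) h₂
  have hmeet {s t : Finset (Fin 6)} {i : Fin 6} (hi : v i ∉ L) (hst : s ∩ t = {i}) :
      L ⊓ (span K (v '' s) ⊓ span K (v '' t)) = ⊥ := by
    rw [← hv.span_image_inter, ← Finset.coe_inter, hst, Finset.coe_singleton,
      Set.image_singleton]
    exact inf_span_singleton_eq_bot hi
  refine Or.inl ((le_inf_sup_sup_inf_sup_of_finrank_eq_two hL h₁ h₂ h₃
    (hmeet h2 (by decide)) (hmeet h0 (by decide)) (hmeet h4 (by decide))).trans ?_)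
  simp only [← span_union, ← Set.image_union, ← hv.span_image_inter, ← Finset.coe_union,
    ← Finset.coe_inter]
  exact span_mono (Set.image_mono (Finset.coe_subset.2 (by decide)))

end LinearIndependent

theorem lines_meeting_three_planes_general
    (v : Fin 6 → (Fin 6 → ℂ)) (hv : LinearIndependent ℂ v)
    (L : Submodule ℂ (Fin 6 → ℂ)) (hL : finrank ℂ L = 2) :
    ((L ⊓ span ℂ {v 0, v 1, v 2} ≠ ⊥) ∧ (L ⊓ span ℂ {v 2, v 3, v 4} ≠ ⊥) ∧
     (L ⊓ span ℂ {v 0, v 4, v 5} ≠ ⊥)) ↔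
    (L ≤ span ℂ {v 0, v 2, v 4} ∨
     (v 0 ∈ L ∧ L ≤ span ℂ {v 0} ⊔ span ℂ {v 2, v 3, v 4}) ∨
     (v 2 ∈ L ∧ L ≤ span ℂ {v 2} ⊔ span ℂ {v 0, v 4, v 5}) ∨
     (v 4 ∈ L ∧ L ≤ span ℂ {v 4} ⊔ span ℂ {v 0, v 1, v 2})) := by
  have hΛ (i j k : Fin 6) :
      span ℂ {v i, v j, v k} = span ℂ (v '' ↑({i, j, k} : Finset (Fin 6))) := by
    simp [Set.image_insert_eq]
  simp only [hΛ, ← span_insert, ← Set.image_insert_eq, ← Finset.coe_insert]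
  refine ⟨fun ⟨h₁, h₂, h₃⟩ ↦ hv.line_cases_of_meets_three_planes hL h₁ h₂ h₃, ?_⟩
  rintro (hW | ⟨h0, hW⟩ | ⟨h2, hW⟩ | ⟨h4, hW⟩)
  · exact ⟨hv.inf_span_image_ne_bot hW (by rw [hL]; decide),
      hv.inf_span_image_ne_bot hW (by rw [hL]; decide),
      hv.inf_span_image_ne_bot hW (by rw [hL]; decide)⟩
  · exact ⟨hv.inf_span_image_ne_bot_of_mem h0 (by simp),
      hv.inf_span_image_ne_bot hW (by rw [hL]; decide),
      hv.inf_span_image_ne_bot_of_mem h0 (by simp)⟩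
  · exact ⟨hv.inf_span_image_ne_bot_of_mem h2 (by simp),
      hv.inf_span_image_ne_bot_of_mem h2 (by simp),
      hv.inf_span_image_ne_bot hW (by rw [hL]; decide)⟩
  · exact ⟨hv.inf_span_image_ne_bot hW (by rw [hL]; decide),
      hv.inf_span_image_ne_bot_of_mem h4 (by simp),
      hv.inf_span_image_ne_bot_of_mem h4 (by simp)⟩

/-- **O'Grady, equation (1.6).** Let `v₀, …, v₅` be a basis of `ℂ⁶` and set `Λ₁=⟨v₀,v₁,v₂⟩`,
`Λ₂=⟨v₂,v₃,v₄⟩`, `Λ₃=⟨v₀,v₄,v₅⟩`. A 2-dimensional subspace `L` of `ℂ⁶` meets `Λ₁, Λ₂, Λ₃`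
nontrivially if and only if one of the following holds:
(a) `L ⊆ ⟨v₀,v₂,v₄⟩`; (b) `v₀ ∈ L` and `L ⊆ ⟨v₀⟩ + ⟨v₂,v₃,v₄⟩`;
(c) `v₂ ∈ L` and `L ⊆ ⟨v₂⟩ + ⟨v₀,v₄,v₅⟩`; (d) `v₄ ∈ L` and `L ⊆ ⟨v₄⟩ + ⟨v₀,v₁,v₂⟩`. -/
theorem lines_meeting_three_planes
    (v : Fin 6 → (Fin 6 → ℂ)) (hv : LinearIndependent ℂ v)
    (hv' : span ℂ (Set.range v) = ⊤)
    (L : Submodule ℂ (Fin 6 → ℂ)) (hL : finrank ℂ L = 2) :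
    ((L ⊓ span ℂ {v 0, v 1, v 2} ≠ ⊥) ∧ (L ⊓ span ℂ {v 2, v 3, v 4} ≠ ⊥) ∧
     (L ⊓ span ℂ {v 0, v 4, v 5} ≠ ⊥)) ↔
    (L ≤ span ℂ {v 0, v 2, v 4} ∨
     (v 0 ∈ L ∧ L ≤ span ℂ {v 0} ⊔ span ℂ {v 2, v 3, v 4}) ∨
     (v 2 ∈ L ∧ L ≤ span ℂ {v 2} ⊔ span ℂ {v 0, v 4, v 5}) ∨
     (v 4 ∈ L ∧ L ≤ span ℂ {v 4} ⊔ span ℂ {v 0, v 1, v 2})) :=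
  lines_meeting_three_planes_general v hv L hL
end

section
/- Let T be a family of pairwise incident planes in ℂ^{N+1} (a set of 3-dimensional subspaces, any two intersecting nontrivially). Suppose there exist Λ, Λ' ∈ T whose intersection Λ ∩ Λ' has dimension 2. Then T is contained in an infinite family of pairwise incident planes, i.e. there exists an infinite set T' of 3-dimensional subspaces of ℂ^{N+1}, any two of which intersect nontrivially, with T ⊆ T'. -/
open Module Submodule

/-- **O'Grady, Proposition 1.3.** Let `T` be a family of pairwise incident planes in `ℂ^{N+1}`.
If two members of `T` intersect in a subspace of dimension `2` (a line of `ℙ^N`), then `T` is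
contained in an infinite family of pairwise incident planes. -/
theorem subset_infinite_family_of_line_intersection
    (N : ℕ) (T : Set (Submodule ℂ (Fin (N + 1) → ℂ)))
    (hplane : ∀ W ∈ T, finrank ℂ W = 3)
    (hpair : ∀ W ∈ T, ∀ W' ∈ T, W ⊓ W' ≠ ⊥)
    (Λ Λ' : Submodule ℂ (Fin (N + 1) → ℂ)) (hΛ : Λ ∈ T) (hΛ' : Λ' ∈ T)
    (hint : finrank ℂ ↥(Λ ⊓ Λ') = 2) :
    ∃ T' : Set (Submodule ℂ (Fin (N + 1) → ℂ)), T ⊆ T' ∧ T'.Infinite ∧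
      (∀ W ∈ T', finrank ℂ W = 3) ∧
      (∀ W ∈ T', ∀ W' ∈ T', W ⊓ W' ≠ ⊥) := by
  classical
  set L : Submodule ℂ (Fin (N + 1) → ℂ) := Λ ⊓ Λ' with hLdef
  set Sg : Submodule ℂ (Fin (N + 1) → ℂ) := Λ ⊔ Λ' with hSdef
  have hΛ3 := hplane Λ hΛ
  have hΛ'3 := hplane Λ' hΛ'
  have hS4 : finrank ℂ Sg = 4 := by
    have h := finrank_sup_add_finrank_inf_eq Λ Λ'
    have h1 : finrank ℂ ↥(Λ ⊔ Λ') = finrank ℂ Sg := rfl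
    have h2 : finrank ℂ ↥(Λ ⊓ Λ') = finrank ℂ L := rfl
    rw [h1, h2, hint, hΛ3, hΛ'3] at h
    omega
  have hLS : L ≤ Sg := le_trans inf_le_left le_sup_left
  have hLne : L ≠ ⊥ := by
    intro h
    rw [h] at hint
    simp at hint
  -- Key incidence lemma: any plane between L and Sg meets every member of T.
  have hkey : ∀ P : Submodule ℂ (Fin (N + 1) → ℂ), L ≤ P → P ≤ Sg → finrank ℂ P = 3 →
      ∀ W ∈ T, P ⊓ W ≠ ⊥ := by
    intro P hLP hPS hP3 W hW
    by_cases hWL : W ⊓ L = ⊥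
    · -- W misses L; take points of W in Λ and Λ'.
      obtain ⟨p, hp, hp0⟩ := exists_mem_ne_zero_of_ne_bot (hpair W hW Λ hΛ)
      obtain ⟨p', hp', hp'0⟩ := exists_mem_ne_zero_of_ne_bot (hpair W hW Λ' hΛ')
      have hpW : p ∈ W := hp.1
      have hpΛ : p ∈ Λ := hp.2
      have hp'W : p' ∈ W := hp'.1
      have hp'Λ' : p' ∈ Λ' := hp'.2
      -- p' ∉ span {p}
      have hp'ns : p' ∉ (span ℂ {p} : Submodule ℂ (Fin (N + 1) → ℂ)) := by
        intro hmem
        obtain ⟨a, ha⟩ := mem_span_singleton.1 hmem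
        have hΛmem : p' ∈ Λ := by rw [← ha]; exact Λ.smul_mem a hpΛ
        have : p' ∈ W ⊓ L := ⟨hp'W, hΛmem, hp'Λ'⟩
        rw [hWL] at this
        exact hp'0 this
      set M : Submodule ℂ (Fin (N + 1) → ℂ) := span ℂ {p} ⊔ span ℂ {p'} with hMdef
      have hM2 : finrank ℂ M = 2 := by
        have hdisj : Disjoint (span ℂ {p} : Submodule ℂ (Fin (N + 1) → ℂ)) (span ℂ {p'}) :=
          disjoint_span_singleton.2 (fun h => absurd h hp'ns)
        have h := finrank_sup_add_finrank_inf_eq (span ℂ {p} : Submodule ℂ (Fin (N + 1) → ℂ))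
          (span ℂ {p'})
        rw [hdisj.eq_bot] at h
        rw [finrank_span_singleton hp0, finrank_span_singleton hp'0, finrank_bot] at h
        rw [hMdef]
        omega
      have hMW : M ≤ W := sup_le (span_le.2 (by simpa using hpW)) (span_le.2 (by simpa using hp'W))
      have hMS : M ≤ Sg := sup_le (span_le.2 (by simpa using le_sup_left (a := Λ) (b := Λ') hpΛ))
        (span_le.2 (by simpa using le_sup_right (a := Λ) (b := Λ') hp'Λ'))
      have hsup_le : finrank ℂ ↥(P ⊔ M) ≤ 4 := by
        rw [← hS4]
        exact finrank_mono (sup_le hPS hMS)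
      have h := finrank_sup_add_finrank_inf_eq P M
      rw [hP3, hM2] at h
      have hPM : finrank ℂ ↥(P ⊓ M) ≥ 1 := by omega
      intro hbot
      have : P ⊓ M = ⊥ := le_bot_iff.1 (le_trans (inf_le_inf_left P hMW) hbot.le)
      rw [this, finrank_bot] at hPM
      omega
    · -- W meets L, hence P.
      intro hbot
      have : W ⊓ L ≤ P ⊓ W := le_inf (le_trans inf_le_right hLP) inf_le_left
      exact hWL (le_bot_iff.1 (le_trans this hbot.le))
  -- Build infinitely many planes between L and Sg.
  have hLltS : L < Sg := lt_of_le_of_ne hLS (by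
    intro h
    rw [h, hS4] at hint
    omega)
  obtain ⟨u, huS, huL⟩ := SetLike.exists_of_lt hLltS
  have hu0 : u ≠ 0 := fun h => huL (h ▸ L.zero_mem)
  set L3 : Submodule ℂ (Fin (N + 1) → ℂ) := L ⊔ span ℂ {u} with hL3def
  have hL3rank : finrank ℂ L3 = 3 := by
    have hdisj : Disjoint L (span ℂ {u} : Submodule ℂ (Fin (N + 1) → ℂ)) :=
      disjoint_span_singleton.2 (fun h => absurd h huL)
    have h := finrank_sup_add_finrank_inf_eq L (span ℂ {u} : Submodule ℂ (Fin (N + 1) → ℂ))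
    rw [hdisj.eq_bot, finrank_bot, hint, finrank_span_singleton hu0] at h
    rw [hL3def]
    omega
  have hL3S : L3 ≤ Sg := sup_le hLS (span_le.2 (by simpa using huS))
  have hL3ltS : L3 < Sg := lt_of_le_of_ne hL3S (by
    intro h
    rw [h, hS4] at hL3rank
    omega)
  obtain ⟨w, hwS, hwL3⟩ := SetLike.exists_of_lt hL3ltS
  -- the family of planes
  set f : ℂ → Submodule ℂ (Fin (N + 1) → ℂ) := fun c => L ⊔ span ℂ {u + c • w} with hfdef
  have hvnotL : ∀ c : ℂ, u + c • w ∉ L := by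
    intro c hc
    by_cases hc0 : c = 0
    · rw [hc0] at hc; simp at hc; exact huL hc
    · have h1 : u + c • w ∈ L3 := le_sup_left (a := L) hc
      have h2 : u ∈ L3 := le_sup_right (a := L) (mem_span_singleton_self u)
      have h3 : c • w ∈ L3 := by
        have := L3.sub_mem h1 h2
        simpa using this
      exact hwL3 (by simpa [hc0] using L3.smul_mem c⁻¹ h3)
  have hv0 : ∀ c : ℂ, u + c • w ≠ 0 := fun c h => hvnotL c (h ▸ L.zero_mem)
  have hfrank : ∀ c : ℂ, finrank ℂ (f c) = 3 := by
    intro c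
    have hdisj : Disjoint L (span ℂ {u + c • w} : Submodule ℂ (Fin (N + 1) → ℂ)) :=
      disjoint_span_singleton.2 (fun h => absurd h (hvnotL c))
    have h := finrank_sup_add_finrank_inf_eq L
      (span ℂ {u + c • w} : Submodule ℂ (Fin (N + 1) → ℂ))
    rw [hdisj.eq_bot, finrank_bot, hint, finrank_span_singleton (hv0 c)] at h
    have : finrank ℂ ↥(L ⊔ span ℂ {u + c • w}) = 3 := by omega
    exact this
  have hfS : ∀ c : ℂ, f c ≤ Sg := by
    intro c
    refine sup_le hLS (span_le.2 ?_)
    simpa using Sg.add_mem huS (Sg.smul_mem c hwS)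
  have hLf : ∀ c : ℂ, L ≤ f c := fun c => le_sup_left
  have hfinj : Function.Injective f := by
    intro c c' hcc
    by_contra hne
    have h1 : u + c • w ∈ f c := le_sup_right (a := L) (mem_span_singleton_self _)
    have h2 : u + c' • w ∈ f c := by
      rw [hcc]; exact le_sup_right (a := L) (mem_span_singleton_self _)
    have h3 : (c - c') • w ∈ f c := by
      have := (f c).sub_mem h1 h2
      have heq : (u + c • w) - (u + c' • w) = (c - c') • w := by
        rw [sub_smul]; abel
      rwa [heq] at this
    have hcc' : c - c' ≠ 0 := sub_ne_zero.2 hne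
    have hw : w ∈ f c := by simpa [hcc'] using (f c).smul_mem (c - c')⁻¹ h3
    obtain ⟨l, hl, z, hz, hlz⟩ := mem_sup.1 hw
    obtain ⟨a, ha⟩ := mem_span_singleton.1 hz
    -- w = l + a • (u + c • w)
    have hweq : w = l + (a • u + (a * c) • w) := by
      conv_lhs => rw [← hlz, ← ha]
      rw [smul_add, smul_smul]
    have hw' : (1 - a * c) • w = l + a • u := by
      calc (1 - a * c) • w = w - (a * c) • w := by rw [sub_smul, one_smul]
        _ = (l + (a • u + (a * c) • w)) - (a * c) • w :=
            congrArg (fun x => x - (a * c) • w) hweq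
        _ = l + a • u := by abel
    by_cases hac : 1 - a * c = 0
    · -- then l + a • u = 0, a ≠ 0 since a*c = 1, so u ∈ L.
      have ha0 : a ≠ 0 := by
        intro h; rw [h] at hac; simp at hac
      have hz0 : l + a • u = 0 := by rw [← hw', hac, zero_smul]
      have h5 : a • u = -l := eq_neg_of_add_eq_zero_right hz0
      have hu : u = a⁻¹ • (-l) := by
        rw [← h5, smul_smul, inv_mul_cancel₀ ha0, one_smul]
      exact huL (hu ▸ L.smul_mem a⁻¹ (L.neg_mem hl))
    · have : w = (1 - a * c)⁻¹ • (l + a • u) := by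
        rw [← hw', smul_smul, inv_mul_cancel₀ hac, one_smul]
      have h1 : l + a • u ∈ L3 := L3.add_mem (le_sup_left (a := L) hl)
        (L3.smul_mem a (le_sup_right (a := L) (mem_span_singleton_self u)))
      exact hwL3 (this ▸ L3.smul_mem _ h1)
  -- Assemble
  refine ⟨T ∪ Set.range f, Set.subset_union_left, ?_, ?_, ?_⟩
  · exact Set.Infinite.mono Set.subset_union_right (Set.infinite_range_of_injective hfinj)
  · rintro W (hW | ⟨c, rfl⟩)
    · exact hplane W hW
    · exact hfrank c
  · rintro W (hW | ⟨c, rfl⟩) W' (hW' | ⟨c', rfl⟩)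
    · exact hpair W hW W' hW'
    · rw [inf_comm]
      exact hkey (f c') (hLf c') (hfS c') (hfrank c') W hW
    · exact hkey (f c) (hLf c) (hfS c) (hfrank c) W' hW'
    · intro hbot
      have : L ≤ f c ⊓ f c' := le_inf (hLf c) (hLf c')
      exact hLne (le_bot_iff.1 (le_trans this hbot.le))
end

section
/- Let T be a finite complete family of pairwise incident planes in ℂ^{N+1}. If Λ, Λ' ∈ T are distinct then the subspace Λ ∩ Λ' has dimension exactly 1 (the planes meet in a single point of ℙ^N). -/
open Module Submodule


lemma span_inf_bot' {V : Type*} [AddCommGroup V] [Module ℂ V]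
    (L : Submodule ℂ V) (x : V) (hx : x ∉ L) :
    (span ℂ {x}) ⊓ L = ⊥ := by
  rw [eq_bot_iff]
  rintro y ⟨hy1, hy2⟩
  obtain ⟨a, rfl⟩ := mem_span_singleton.mp hy1
  rcases eq_or_ne a 0 with rfl | ha
  · simp
  · exact absurd (by simpa [smul_smul, inv_mul_cancel₀ ha] using L.smul_mem a⁻¹ hy2) hx

lemma finrank_sup_span_singleton' {V : Type*} [AddCommGroup V] [Module ℂ V]
    [FiniteDimensional ℂ V] (L : Submodule ℂ V) (x : V) (hx : x ∉ L) :
    finrank ℂ ↥(L ⊔ span ℂ {x}) = finrank ℂ L + 1 := by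
  have h0 : x ≠ 0 := fun h => hx (h ▸ L.zero_mem)
  have h := Submodule.finrank_sup_add_finrank_inf_eq L (span ℂ {x})
  rw [inf_comm, span_inf_bot' L x hx, finrank_span_singleton h0] at h
  simpa using h

/-- **O'Grady, Corollary 1.4.** Let `T` be a finite complete family of pairwise incident planes
in `ℂ^{N+1}`. Then any two distinct members of `T` intersect in a subspace of dimension
exactly `1` (a single point of `ℙ^N`). -/
theorem distinct_members_meet_in_point
    (N : ℕ) (T : Set (Submodule ℂ (Fin (N + 1) → ℂ)))
    (hfin : T.Finite)
    (hplane : ∀ W ∈ T, finrank ℂ W = 3)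
    (hpair : ∀ W ∈ T, ∀ W' ∈ T, W ⊓ W' ≠ ⊥)
    (hcomplete : ∀ W : Submodule ℂ (Fin (N + 1) → ℂ), finrank ℂ W = 3 →
      (∀ W' ∈ T, W ⊓ W' ≠ ⊥) → W ∈ T)
    (Λ Λ' : Submodule ℂ (Fin (N + 1) → ℂ)) (hΛ : Λ ∈ T) (hΛ' : Λ' ∈ T) (hne : Λ ≠ Λ') :
    finrank ℂ ↥(Λ ⊓ Λ') = 1 := by
  set L := Λ ⊓ Λ' with hLdef
  -- basic dimension bounds
  have hΛ3 := hplane Λ hΛ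
  have hΛ'3 := hplane Λ' hΛ'
  have hle3 : finrank ℂ L ≤ 3 := hΛ3 ▸ Submodule.finrank_mono inf_le_left
  have hpos : 0 < finrank ℂ L := by
    rw [Nat.pos_iff_ne_zero]
    intro h0
    exact hpair Λ hΛ Λ' hΛ' (Submodule.finrank_eq_zero.mp h0)
  have hne3 : finrank ℂ L ≠ 3 := by
    intro h3
    have e1 : L = Λ := Submodule.eq_of_le_of_finrank_eq inf_le_left (by rw [h3, hΛ3])
    have e2 : L = Λ' := Submodule.eq_of_le_of_finrank_eq inf_le_right (by rw [h3, hΛ'3])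
    exact hne (e1 ▸ e2)
  by_contra h1
  have hL2 : finrank ℂ L = 2 := by omega
  -- pick u ∈ Λ \ Λ' and u' ∈ Λ' \ Λ
  have hnle : ¬ Λ ≤ Λ' := fun h =>
    hne (Submodule.eq_of_le_of_finrank_eq h (by rw [hΛ3, hΛ'3]))
  have hnle' : ¬ Λ' ≤ Λ := fun h =>
    hne (Submodule.eq_of_le_of_finrank_eq h (by rw [hΛ3, hΛ'3])).symm
  obtain ⟨u, huΛ, huΛ'⟩ := SetLike.not_le_iff_exists.mp hnle
  obtain ⟨u', hu'Λ', hu'Λ⟩ := SetLike.not_le_iff_exists.mp hnle'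
  set M := Λ ⊔ Λ' with hMdef
  have hLΛ : L ≤ Λ := inf_le_left
  have hLΛ' : L ≤ Λ' := inf_le_right
  have hM4 : finrank ℂ M = 4 := by
    have h := Submodule.finrank_sup_add_finrank_inf_eq Λ Λ'
    rw [← hMdef, ← hLdef, hΛ3, hΛ'3, hL2] at h
    omega
  have hΛM : Λ ≤ M := le_sup_left
  have hΛ'M : Λ' ≤ M := le_sup_right
  -- the family of planes
  set P : ℂ → Submodule ℂ (Fin (N + 1) → ℂ) := fun c => L ⊔ span ℂ {u + c • u'} with hPdef
  have hxL : ∀ c : ℂ, u + c • u' ∉ L := by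
    intro c hc
    exact huΛ' (by simpa using Λ'.sub_mem (hLΛ' hc) (Λ'.smul_mem c hu'Λ'))
  have hP3 : ∀ c : ℂ, finrank ℂ (P c) = 3 := by
    intro c
    rw [hPdef]
    rw [finrank_sup_span_singleton' L _ (hxL c), hL2]
  have hPM : ∀ c : ℂ, P c ≤ M := by
    intro c
    refine sup_le (le_trans inf_le_left hΛM) ((span_le).mpr ?_)
    rintro x rfl
    exact M.add_mem (hΛM huΛ) (M.smul_mem c (hΛ'M hu'Λ'))
  have hLP : ∀ c : ℂ, L ≤ P c := fun c => le_sup_left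
  have hxP : ∀ c : ℂ, u + c • u' ∈ P c := fun c =>
    (le_sup_right : span ℂ {u + c • u'} ≤ L ⊔ span ℂ {u + c • u'}) (subset_span rfl)
  -- each P c is in T
  have hPT : ∀ c : ℂ, P c ∈ T := by
    intro c
    refine hcomplete (P c) (hP3 c) ?_
    intro W hW
    by_cases hWL : W ⊓ L = ⊥
    · -- W misses the line L; use dimension count in M
      obtain ⟨v, hv, hv0⟩ := Submodule.exists_mem_ne_zero_of_ne_bot (hpair W hW Λ hΛ)
      obtain ⟨v', hv', hv'0⟩ := Submodule.exists_mem_ne_zero_of_ne_bot (hpair W hW Λ' hΛ')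
      have hv'span : v' ∉ span ℂ {v} := by
        intro hmem
        obtain ⟨a, rfl⟩ := mem_span_singleton.mp hmem
        have hL : a • v ∈ L := ⟨Λ.smul_mem a hv.2, hv'.2⟩
        have : a • v ∈ W ⊓ L := ⟨hv'.1, hL⟩
        rw [hWL] at this
        exact hv'0 this
      have hWM2 : 2 ≤ finrank ℂ ↥(W ⊓ M) := by
        have hlt : span ℂ {v} < span ℂ {v} ⊔ span ℂ {v'} := by
          refine lt_of_le_of_ne le_sup_left (fun h => hv'span ?_)
          rw [h]
          exact (le_sup_right : span ℂ {v'} ≤ span ℂ {v} ⊔ span ℂ {v'}) (subset_span rfl)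
        have h1 : finrank ℂ (span ℂ {v}) = 1 := finrank_span_singleton hv0
        have h2 : span ℂ {v} ⊔ span ℂ {v'} ≤ W ⊓ M := by
          refine sup_le ((span_le).mpr ?_) ((span_le).mpr ?_)
          · rintro x rfl; exact ⟨hv.1, hΛM hv.2⟩
          · rintro x rfl; exact ⟨hv'.1, hΛ'M hv'.2⟩
        have := Submodule.finrank_lt_finrank_of_lt hlt
        have := Submodule.finrank_mono h2
        omega
      -- now P c ⊓ (W ⊓ M) ≠ ⊥
      have hsup4 : finrank ℂ ↥(P c ⊔ (W ⊓ M)) ≤ 4 := by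
        rw [← hM4]
        exact Submodule.finrank_mono (sup_le (hPM c) inf_le_right)
      have h := Submodule.finrank_sup_add_finrank_inf_eq (P c) (W ⊓ M)
      rw [hP3 c] at h
      have hne0 : finrank ℂ ↥(P c ⊓ (W ⊓ M)) ≠ 0 := by omega
      intro hbot
      apply hne0
      rw [Submodule.finrank_eq_zero, eq_bot_iff, ← hbot]
      exact le_inf inf_le_left (le_trans inf_le_right inf_le_left)
    · -- W meets L, hence P c
      intro hbot
      apply hWL
      rw [eq_bot_iff, ← hbot]
      exact le_inf (le_trans inf_le_right (hLP c)) inf_le_left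
  -- injectivity of c ↦ P c
  have hinj : Function.Injective P := by
    intro c d hcd
    by_contra hne'
    have h1 : u + c • u' ∈ P d := hcd ▸ hxP c
    have h2 : u + d • u' ∈ P d := hxP d
    have h3 : (c - d) • u' ∈ P d := by
      have := (P d).sub_mem h1 h2
      simpa [sub_smul, add_sub_add_left_eq_sub] using this
    have h4 : u' ∈ P d := by
      have := (P d).smul_mem (c - d)⁻¹ h3
      rwa [smul_smul, inv_mul_cancel₀ (sub_ne_zero.mpr hne'), one_smul] at this
    have h5 : u ∈ P d := by
      have := (P d).sub_mem h2 ((P d).smul_mem d h4)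
      simpa using this
    have hΛeq : L ⊔ span ℂ {u} = Λ := by
      refine Submodule.eq_of_le_of_finrank_eq
        (sup_le inf_le_left ((span_le).mpr (by rintro x rfl; exact huΛ))) ?_
      rw [finrank_sup_span_singleton' L u (fun h => huΛ' (hLΛ' h)), hL2, hΛ3]
    have hΛP : Λ ≤ P d := by
      rw [← hΛeq]
      exact sup_le (hLP d) ((span_le).mpr (by rintro x rfl; exact h5))
    have h4dim : Λ ⊔ span ℂ {u'} ≤ P d :=
      sup_le hΛP ((span_le).mpr (by rintro x rfl; exact h4))
    have := Submodule.finrank_mono h4dim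
    rw [finrank_sup_span_singleton' Λ u' hu'Λ, hΛ3, hP3 d] at this
    omega
  exact (Set.infinite_of_injective_forall_mem hinj hPT) hfin
end

section
/- Fix a volume form vol : ⋀⁶ℂ⁶ ≅ ℂ and let (α,β) := vol(α∧β) on ⋀³ℂ⁶. Let A ⊆ ⋀³ℂ⁶ be a subspace that is isotropic for this form, i.e. (α,β) = 0 for all α, β ∈ A. Then Θ_A (the set of 3-dimensional subspaces W of ℂ⁶ with ⋀³W ⊆ A) is a family of pairwise incident planes: any two members of Θ_A intersect nontrivially. -/
open ExteriorAlgebra Submodule Module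

noncomputable section

variable {V : Type*} [AddCommGroup V] [Module ℂ V]

lemma ι_mem_one (w : V) : ι ℂ w ∈ ⋀[ℂ]^1 V := by
  rw [exteriorPower, pow_one]; exact LinearMap.mem_range_self _ w

lemma wedge3_mem (w₁ w₂ w₃ : V) : ι ℂ w₁ * ι ℂ w₂ * ι ℂ w₃ ∈ ⋀[ℂ]^3 V :=
  SetLike.mul_mem_graded (SetLike.mul_mem_graded (ι_mem_one w₁) (ι_mem_one w₂)) (ι_mem_one w₃)

/-- `w₁ ∧ w₂ ∧ w₃` as an element of `⋀³V`. -/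
def wedge3 (w₁ w₂ w₃ : V) : ⋀[ℂ]^3 V :=
  ⟨ι ℂ w₁ * ι ℂ w₂ * ι ℂ w₃, wedge3_mem w₁ w₂ w₃⟩

lemma mul_mem_six (α β : ⋀[ℂ]^3 V) :
    (α : ExteriorAlgebra ℂ V) * (β : ExteriorAlgebra ℂ V) ∈ ⋀[ℂ]^6 V :=
  SetLike.mul_mem_graded α.2 β.2

/-- The bilinear form `(α, β) := vol (α ∧ β)` on `⋀³V` induced by a volume form
`vol : ⋀⁶V ≅ ℂ`. -/
def symForm (vol : (⋀[ℂ]^6 V) ≃ₗ[ℂ] ℂ) (α β : ⋀[ℂ]^3 V) : ℂ :=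
  vol ⟨(α : ExteriorAlgebra ℂ V) * (β : ExteriorAlgebra ℂ V), mul_mem_six α β⟩

/-- `Θ_A`: the set of 3-dimensional subspaces `W ⊆ V` with `⋀³W ⊆ A`. -/
def Theta (A : Submodule ℂ (⋀[ℂ]^3 V)) : Set (Submodule ℂ V) :=
  {W | finrank ℂ W = 3 ∧ ∀ w₁ ∈ W, ∀ w₂ ∈ W, ∀ w₃ ∈ W, wedge3 w₁ w₂ w₃ ∈ A}

set_option maxRecDepth 10000 in
/-- **O'Grady, Remark 2.2 (first half).** If `A ⊆ ⋀³ℂ⁶` is isotropic for the symplectic form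
`(α,β) = vol(α∧β)`, then `Θ_A` is a family of pairwise incident planes. -/
theorem theta_pairwise_incident_of_isotropic
    (vol : (⋀[ℂ]^6 (Fin 6 → ℂ)) ≃ₗ[ℂ] ℂ)
    (A : Submodule ℂ (⋀[ℂ]^3 (Fin 6 → ℂ)))
    (hiso : ∀ α ∈ A, ∀ β ∈ A, symForm vol α β = 0) :
    ∀ W ∈ Theta A, ∀ W' ∈ Theta A, W ⊓ W' ≠ ⊥ := by
  rintro W ⟨hW3, hWA⟩ W' ⟨hW'3, hW'A⟩ hbot
  have hd : Disjoint W W' := disjoint_iff.mpr hbot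
  let bW := finBasisOfFinrankEq ℂ W hW3
  let bW' := finBasisOfFinrankEq ℂ W' hW'3
  set f : Fin 3 → (Fin 6 → ℂ) := W.subtype ∘ ⇑bW with hfdef
  set g : Fin 3 → (Fin 6 → ℂ) := W'.subtype ∘ ⇑bW' with hgdef
  have hf : LinearIndependent ℂ f := bW.linearIndependent.map' W.subtype W.ker_subtype
  have hg : LinearIndependent ℂ g := bW'.linearIndependent.map' W'.subtype W'.ker_subtype
  have hf_span : span ℂ (Set.range f) = W := by
    rw [hfdef, Set.range_comp, ← Submodule.map_span, bW.span_eq, Submodule.map_top,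
      Submodule.range_subtype]
  have hg_span : span ℂ (Set.range g) = W' := by
    rw [hgdef, Set.range_comp, ← Submodule.map_span, bW'.span_eq, Submodule.map_top,
      Submodule.range_subtype]
  have hsum : LinearIndependent ℂ (Sum.elim f g) := by
    refine hf.sum_type hg ?_
    rw [hf_span, hg_span]; exact hd
  set v : Fin 6 → (Fin 6 → ℂ) := ![f 0, f 1, f 2, g 0, g 1, g 2] with hvdef
  set e : Fin 6 → (Fin 3 ⊕ Fin 3) :=
    ![Sum.inl 0, Sum.inl 1, Sum.inl 2, Sum.inr 0, Sum.inr 1, Sum.inr 2] with hedef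
  have hve : v = Sum.elim f g ∘ e := by
    funext i; fin_cases i <;> rfl
  have hv : LinearIndependent ℂ v := by
    rw [hve]
    exact hsum.comp e (by decide)
  let b : Basis (Fin 6) ℂ (Fin 6 → ℂ) :=
    basisOfLinearIndependentOfCardEqFinrank hv (by simp)
  have hb : ⇑b = v := coe_basisOfLinearIndependentOfCardEqFinrank hv (by simp)
  set F : ∀ i, (Fin 6 → ℂ) [⋀^Fin i]→ₗ[ℂ] ℂ :=
    Function.update (fun i => (0 : (Fin 6 → ℂ) [⋀^Fin i]→ₗ[ℂ] ℂ)) 6 b.det with hFdef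
  have hF6 : F 6 = b.det := Function.update_self _ _ _
  set α : ⋀[ℂ]^3 (Fin 6 → ℂ) := wedge3 (f 0) (f 1) (f 2) with hαdef
  set β : ⋀[ℂ]^3 (Fin 6 → ℂ) := wedge3 (g 0) (g 1) (g 2) with hβdef
  have hαA : α ∈ A := hWA _ (bW 0).2 _ (bW 1).2 _ (bW 2).2
  have hβA : β ∈ A := hW'A _ (bW' 0).2 _ (bW' 1).2 _ (bW' 2).2
  have h0 : symForm vol α β = 0 := hiso _ hαA _ hβA
  have hmul0 : (α : ExteriorAlgebra ℂ (Fin 6 → ℂ)) * (β : ExteriorAlgebra ℂ (Fin 6 → ℂ)) = 0 := by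
    have := (LinearEquiv.map_eq_zero_iff vol).mp h0
    exact Subtype.ext_iff.mp this
  have hmul : (α : ExteriorAlgebra ℂ (Fin 6 → ℂ)) * (β : ExteriorAlgebra ℂ (Fin 6 → ℂ)) =
      ιMulti ℂ 6 v := by
    rw [ExteriorAlgebra.ιMulti_apply]
    simp [hαdef, hβdef, wedge3, hvdef, List.ofFn_succ, mul_assoc]
  have hdet : b.det v = 0 := by
    have := congrArg (liftAlternating (R := ℂ) F) (hmul.symm.trans hmul0)
    rwa [liftAlternating_apply_ιMulti, hF6, map_zero] at this
  rw [← hb, b.det_self] at hdet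
  exact one_ne_zero hdet
end
end

section
/- Fix a volume form vol : ⋀⁶ℂ⁶ ≅ ℂ and let (α,β) := vol(α∧β) on ⋀³ℂ⁶. Let T be a complete family of pairwise incident planes in ℂ⁶ (any two members of T intersect nontrivially, and every 3-dimensional subspace of ℂ⁶ intersecting all members of T nontrivially belongs to T). Then there exists a Lagrangian subspace A ⊆ ⋀³ℂ⁶ (isotropic of dimension 10) such that Θ_A = T. -/
/-!
Two planes `W, W'` meet iff `⋀³W` and `⋀³W'` are orthogonal: a basis of `W` followed by one of
`W'` is linearly dependent exactly when `dim (W ⊔ W') < 6`. Hence the span of the lines `⋀³W`,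
`W ∈ T`, is isotropic for the form, which is alternating and nondegenerate on the
20-dimensional space `⋀³ℂ⁶` (in the basis `e_S`, `|S| = 3`, the vector `e_S` pairs nontrivially
only with `e_{Sᶜ}`). A maximal isotropic subspace `A` containing it is Lagrangian.
Every `W ∈ T` has `⋀³W ⊆ A`; conversely `⋀³W ⊆ A` makes `W` meet every member of `T`, so
`W ∈ T` by completeness.
-/

open ExteriorAlgebra Submodule Module

noncomputable section

variable {V : Type*} [AddCommGroup V] [Module ℂ V]

theorem ExteriorAlgebra.ιMulti_three_mul_comm {R M : Type*} [CommRing R] [AddCommGroup M]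
    [Module R M] (u v : Fin 3 → M) :
    ιMulti R 3 u * ιMulti R 3 v = -(ιMulti R 3 v * ιMulti R 3 u) := by
  have hflip : Fin.append v u = Fin.append u v ∘ (finAddFlip : Fin (3 + 3) ≃ Fin (3 + 3)) := by
    ext i; fin_cases i <;> rfl
  have hsign : Equiv.Perm.sign (finAddFlip : Fin (3 + 3) ≃ Fin (3 + 3)) = -1 := by decide
  rw [ιMulti_mul_ιMulti, ιMulti_mul_ιMulti, hflip, AlternatingMap.map_perm, hsign]
  simp

section

variable {K E : Type*} [Field K] [AddCommGroup E] [Module K E]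

theorem ExteriorAlgebra.ιMulti_ne_zero_of_linearIndependent {n : ℕ} {v : Fin n → E}
    (hv : LinearIndependent K v) : ιMulti K n v ≠ 0 := by
  have := (exteriorPower.ιMulti_family_linearIndependent_field (n := n) hv).ne_zero
    (Set.powersetCard.ofFinEmbEquiv (OrderIso.refl (Fin n)).toOrderEmbedding)
  simp only [exteriorPower.ιMulti_family, Equiv.symm_apply_apply] at this
  exact fun h => this (Subtype.ext h)

theorem ExteriorAlgebra.ιMulti_eq_zero_iff {n : ℕ} {v : Fin n → E} :
    ιMulti K n v = 0 ↔ ¬ LinearIndependent K v :=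
  ⟨fun h hv => ιMulti_ne_zero_of_linearIndependent hv h, (ιMulti K n).map_linearDependent v⟩

theorem LinearIndependent.fin_append {m n : ℕ} {u : Fin m → E} {v : Fin n → E}
    (hu : LinearIndependent K u) (hv : LinearIndependent K v)
    (h : Disjoint (span K (Set.range u)) (span K (Set.range v))) :
    LinearIndependent K (Fin.append u v) := by
  rw [← linearIndependent_equiv finSumFinEquiv,
    show Fin.append u v ∘ finSumFinEquiv = Sum.elim u v by ext (i | j) <;> simp]
  exact hu.sum_type hv h

theorem not_linearIndependent_of_finrank_lt {n : ℕ} {p : Submodule K E} [FiniteDimensional K p]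
    (hp : finrank K p < n) {v : Fin n → E} (hv : ∀ i, v i ∈ p) : ¬ LinearIndependent K v := by
  intro hli
  have : LinearIndependent K (fun i => (⟨v i, hv i⟩ : p)) := .of_comp p.subtype hli
  simpa using (this.fintype_card_le_finrank.trans_lt hp)

theorem Submodule.exists_linearIndependent_span_eq [FiniteDimensional K E] {W : Submodule K E}
    {n : ℕ} (hW : finrank K W = n) :
    ∃ u : Fin n → E, (∀ i, u i ∈ W) ∧ LinearIndependent K u ∧ span K (Set.range u) = W := by
  let b := finBasisOfFinrankEq K W hW
  refine ⟨W.subtype ∘ b, fun i => (b i).2, b.linearIndependent.map' _ W.ker_subtype, ?_⟩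
  rw [Set.range_comp, ← Submodule.map_span, b.span_eq, Submodule.map_subtype_top]

end

namespace LinearMap.BilinForm

variable {K M : Type*} [Field K] [AddCommGroup M] [Module K M] {B : LinearMap.BilinForm K M}

theorem span_le_orthogonal_span {s : Set M} (hs : ∀ x ∈ s, ∀ y ∈ s, B x y = 0) :
    span K s ≤ B.orthogonal (span K s) :=
  span_le.mpr fun y hy => mem_orthogonal_iff.mpr fun _ hn =>
    (span_le (p := LinearMap.ker (B.flip y))).mpr (fun x hx => hs x hx y hy) hn

theorem IsAlt.sup_span_singleton_le_orthogonal (hB : B.IsAlt) {A : Submodule K M}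
    (hA : A ≤ B.orthogonal A) {x : M} (hx : x ∈ B.orthogonal A) :
    A ⊔ span K {x} ≤ B.orthogonal (A ⊔ span K {x}) := by
  rw [← span_eq A, ← span_union]
  refine span_le_orthogonal_span ?_
  rintro y (hy | rfl) z (hz | rfl)
  · exact mem_orthogonal_iff.mp (hA hz) y hy
  · exact mem_orthogonal_iff.mp hx y hy
  · exact hB.isRefl _ _ (mem_orthogonal_iff.mp hx z hz)
  · exact hB _

theorem IsAlt.exists_le_orthogonal_eq_self [FiniteDimensional K M] (hB : B.IsAlt)
    {A₀ : Submodule K M} (h₀ : A₀ ≤ B.orthogonal A₀) :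
    ∃ A, A₀ ≤ A ∧ B.orthogonal A = A := by
  obtain ⟨A, ⟨hA₀, hA⟩, hmax⟩ := set_has_maximal_iff_noetherian.mpr inferInstance
    {A | A₀ ≤ A ∧ A ≤ B.orthogonal A} ⟨A₀, le_rfl, h₀⟩
  refine ⟨A, hA₀, le_antisymm (fun x hx => ?_) hA⟩
  have hnlt := hmax (A ⊔ span K {x})
    ⟨hA₀.trans le_sup_left, hB.sup_span_singleton_le_orthogonal hA hx⟩
  exact span_singleton_le_iff_mem x A |>.mp <|
    sup_eq_left.mp (le_sup_left.lt_or_eq.resolve_left hnlt).symm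

theorem two_mul_finrank_eq_of_orthogonal_eq_self [FiniteDimensional K M] (hB : B.Nondegenerate)
    {A : Submodule K M} (hA : B.orthogonal A = A) : 2 * finrank K A = finrank K M := by
  have := finrank_orthogonal hB A
  rw [hA] at this
  have := A.finrank_le
  omega

end LinearMap.BilinForm

theorem wedge3_eq_ιMulti (u : Fin 3 → V) :
    wedge3 (u 0) (u 1) (u 2) = exteriorPower.ιMulti ℂ 3 u := by
  ext
  simp [wedge3, ιMulti_apply, mul_assoc, Matrix.vecTail]

section Form

open Set.powersetCard

variable (vol : (⋀[ℂ]^6 V) ≃ₗ[ℂ] ℂ)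

theorem symForm_ιMulti_ιMulti (u v : Fin 3 → V) :
    symForm vol (exteriorPower.ιMulti ℂ 3 u) (exteriorPower.ιMulti ℂ 3 v) =
      vol (exteriorPower.ιMulti ℂ 6 (Fin.append u v)) := by
  unfold symForm
  congr 1
  ext
  exact ιMulti_mul_ιMulti u v

theorem symForm_ιMulti_ιMulti_eq_zero_iff (u v : Fin 3 → V) :
    symForm vol (exteriorPower.ιMulti ℂ 3 u) (exteriorPower.ιMulti ℂ 3 v) = 0 ↔
      ¬ LinearIndependent ℂ (Fin.append u v) := by
  rw [symForm_ιMulti_ιMulti, vol.map_eq_zero_iff, ← ιMulti_eq_zero_iff,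
    ← exteriorPower.ιMulti_apply_coe, ZeroMemClass.coe_eq_zero]

def symBilin : LinearMap.BilinForm ℂ (⋀[ℂ]^3 V) :=
  LinearMap.mk₂ ℂ (symForm vol)
    (fun α α' β => by simp only [symForm, ← map_add]; congr 1; ext; simp [add_mul])
    (fun c α β => by simp only [symForm, ← map_smul]; congr 1; ext; simp)
    (fun α β β' => by simp only [symForm, ← map_add]; congr 1; ext; simp [mul_add])
    (fun c α β => by simp only [symForm, ← map_smul]; congr 1; ext; simp)

@[simp]
theorem symBilin_apply (α β : ⋀[ℂ]^3 V) : symBilin vol α β = symForm vol α β := rfl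

theorem isAlt_symBilin : (symBilin vol).IsAlt := by
  refine LinearMap.isAlt_iff_eq_neg_flip.mpr <|
    LinearMap.ext_on_range (exteriorPower.ιMulti_span ℂ 3 V) fun u =>
      LinearMap.ext_on_range (exteriorPower.ιMulti_span ℂ 3 V) fun v => ?_
  simp only [symBilin_apply, LinearMap.neg_apply, LinearMap.flip_apply, symForm, ← map_neg]
  congr 1
  ext
  simp only [Submodule.coe_neg, exteriorPower.ιMulti_apply_coe]
  rw [mul_neg]
  exact ιMulti_three_mul_comm u v

theorem inf_ne_bot_iff_symForm_wedge3_eq_zero [FiniteDimensional ℂ V] {W W' : Submodule ℂ V}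
    (hW : finrank ℂ W = 3) (hW' : finrank ℂ W' = 3) :
    W ⊓ W' ≠ ⊥ ↔ ∀ u₁ ∈ W, ∀ u₂ ∈ W, ∀ u₃ ∈ W, ∀ v₁ ∈ W', ∀ v₂ ∈ W', ∀ v₃ ∈ W',
      symForm vol (wedge3 u₁ u₂ u₃) (wedge3 v₁ v₂ v₃) = 0 := by
  constructor
  · intro h u₁ hu₁ u₂ hu₂ u₃ hu₃ v₁ hv₁ v₂ hv₂ v₃ hv₃
    have hsup : finrank ℂ ↥(W ⊔ W') < 6 := by
      have := Submodule.finrank_sup_add_finrank_inf_eq W W'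
      have := Submodule.finrank_eq_zero.not.mpr h
      omega
    rw [show wedge3 u₁ u₂ u₃ = _ from wedge3_eq_ιMulti ![u₁, u₂, u₃],
      show wedge3 v₁ v₂ v₃ = _ from wedge3_eq_ιMulti ![v₁, v₂, v₃],
      symForm_ιMulti_ιMulti_eq_zero_iff]
    refine not_linearIndependent_of_finrank_lt hsup fun i => ?_
    refine Fin.addCases (m := 3) (n := 3) (fun j => ?_) (fun j => ?_) i
    · rw [Fin.append_left]
      exact mem_sup_left (by fin_cases j <;> assumption)
    · rw [Fin.append_right]
      exact mem_sup_right (by fin_cases j <;> assumption)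
  · intro h hbot
    obtain ⟨u, huW, hu, hspan⟩ := Submodule.exists_linearIndependent_span_eq hW
    obtain ⟨v, hvW', hv, hspan'⟩ := Submodule.exists_linearIndependent_span_eq hW'
    have := h _ (huW 0) _ (huW 1) _ (huW 2) _ (hvW' 0) _ (hvW' 1) _ (hvW' 2)
    rw [wedge3_eq_ιMulti, wedge3_eq_ιMulti, symForm_ιMulti_ιMulti_eq_zero_iff] at this
    exact this (hu.fin_append hv (by rw [hspan, hspan', disjoint_iff, hbot]))

theorem symForm_basis_exteriorPower_eq_zero_iff {ι : Type*} [LinearOrder ι] (b : Basis ι ℂ V)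
    (s t : Set.powersetCard ι 3) :
    symForm vol (b.exteriorPower 3 s) (b.exteriorPower 3 t) = 0 ↔ ¬ Disjoint s.val t.val := by
  have hcoe (n : ℕ) (s : Set.powersetCard ι n) :
      ((b.exteriorPower n s : ⋀[ℂ]^n V) : ExteriorAlgebra ℂ V) = ιMulti_family ℂ n b s := by
    simp [exteriorPower.basis_apply]
  unfold symForm
  rw [vol.map_eq_zero_iff, ← ZeroMemClass.coe_eq_zero]
  simp only [hcoe]
  refine ⟨fun h hd => ?_, ιMulti_family_mul_of_not_disjoint ℂ b s t⟩
  rw [ιMulti_family_mul_of_disjoint ℂ b s t hd, smul_eq_zero_iff_eq, ← hcoe,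
    ZeroMemClass.coe_eq_zero] at h
  exact (b.exteriorPower (3 + 3)).ne_zero _ h

theorem symBilin_flip_basis_exteriorPower_compl (b : Basis (Fin 6) ℂ V)
    (t : Set.powersetCard (Fin 6) 3) :
    (symBilin vol).flip (b.exteriorPower 3 (compl (Fintype.card_fin 6).symm t)) =
      symForm vol (b.exteriorPower 3 t) (b.exteriorPower 3 (compl (Fintype.card_fin 6).symm t)) •
        (b.exteriorPower 3).coord t := by
  refine (b.exteriorPower 3).ext fun s => ?_
  by_cases hst : s = t
  · simp [hst]
  · have hst' : ¬ Disjoint s.val (compl (Fintype.card_fin 6).symm t).val := by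
      rwa [coe_compl, disjoint_compl_right_iff, ← eq_iff_subset]
    rw [LinearMap.BilinForm.flip_apply, LinearMap.smul_apply, Basis.coord_apply, Basis.repr_self,
      Finsupp.single_apply, if_neg hst, smul_zero]
    exact (symForm_basis_exteriorPower_eq_zero_iff vol b s _).mpr hst'

theorem symBilin_nondegenerate [FiniteDimensional ℂ V] (hV : finrank ℂ V = 6) :
    (symBilin vol).Nondegenerate := by
  refine (isAlt_symBilin vol).isRefl.nondegenerate_iff_separatingLeft.mpr fun α hα => ?_
  let b := finBasisOfFinrankEq ℂ V hV
  refine (b.exteriorPower 3).ext_elem fun t => ?_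
  have hc : symForm vol (b.exteriorPower 3 t)
      (b.exteriorPower 3 (compl (Fintype.card_fin 6).symm t)) ≠ 0 := by
    rw [Ne, symForm_basis_exteriorPower_eq_zero_iff, coe_compl, not_not]
    exact disjoint_compl_right
  have := LinearMap.congr_fun (symBilin_flip_basis_exteriorPower_compl vol b t) α
  rw [LinearMap.BilinForm.flip_apply, hα, LinearMap.smul_apply, Basis.coord_apply, eq_comm,
    smul_eq_zero] at this
  rw [map_zero, Finsupp.zero_apply]
  exact this.resolve_left hc

end Form


/-- **O'Grady, Claim 2.3 (first half).** If `T` is a complete family of pairwise incident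
planes in `ℂ⁶`, then there is a Lagrangian subspace `A ⊆ ⋀³ℂ⁶` (isotropic of dimension `10`)
with `Θ_A = T`. -/
theorem complete_family_eq_theta_of_lagrangian
    (vol : (⋀[ℂ]^6 (Fin 6 → ℂ)) ≃ₗ[ℂ] ℂ)
    (T : Set (Submodule ℂ (Fin 6 → ℂ)))
    (hplane : ∀ W ∈ T, finrank ℂ W = 3)
    (hpair : ∀ W ∈ T, ∀ W' ∈ T, W ⊓ W' ≠ ⊥)
    (hcomplete : ∀ W : Submodule ℂ (Fin 6 → ℂ), finrank ℂ W = 3 →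
      (∀ W' ∈ T, W ⊓ W' ≠ ⊥) → W ∈ T) :
    ∃ A : Submodule ℂ (⋀[ℂ]^3 (Fin 6 → ℂ)),
      (∀ α ∈ A, ∀ β ∈ A, symForm vol α β = 0) ∧ finrank ℂ A = 10 ∧ Theta A = T := by
  have hV : finrank ℂ (Fin 6 → ℂ) = 6 := finrank_fin_fun ℂ
  let G := {x | ∃ W ∈ T, ∃ w₁ ∈ W, ∃ w₂ ∈ W, ∃ w₃ ∈ W, wedge3 w₁ w₂ w₃ = x}
  have hG : span ℂ G ≤ (symBilin vol).orthogonal (span ℂ G) := by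
    refine LinearMap.BilinForm.span_le_orthogonal_span ?_
    rintro _ ⟨W, hW, u₁, hu₁, u₂, hu₂, u₃, hu₃, rfl⟩ _ ⟨W', hW', v₁, hv₁, v₂, hv₂, v₃, hv₃, rfl⟩
    exact (inf_ne_bot_iff_symForm_wedge3_eq_zero vol (hplane W hW) (hplane W' hW')).mp
      (hpair W hW W' hW') u₁ hu₁ u₂ hu₂ u₃ hu₃ v₁ hv₁ v₂ hv₂ v₃ hv₃
  obtain ⟨A, hGA, hA⟩ := (isAlt_symBilin vol).exists_le_orthogonal_eq_self hG
  have hiso : ∀ α ∈ A, ∀ β ∈ A, symForm vol α β = 0 := fun α hα β hβ =>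
    LinearMap.BilinForm.mem_orthogonal_iff.mp (hA.symm ▸ hβ) α hα
  refine ⟨A, hiso, ?_, ?_⟩
  · have h20 : finrank ℂ (⋀[ℂ]^3 (Fin 6 → ℂ)) = 20 := by rw [exteriorPower.finrank_eq, hV]; rfl
    have := LinearMap.BilinForm.two_mul_finrank_eq_of_orthogonal_eq_self
      (symBilin_nondegenerate vol hV) hA
    omega
  ext W
  refine ⟨fun ⟨hW, hWA⟩ => hcomplete W hW fun W' hW' => ?_, fun hW =>
    ⟨hplane W hW, fun w₁ h₁ w₂ h₂ w₃ h₃ => hGA (subset_span ⟨W, hW, w₁, h₁, w₂, h₂, w₃, h₃, rfl⟩)⟩⟩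
  exact (inf_ne_bot_iff_symForm_wedge3_eq_zero vol hW (hplane W' hW')).mpr
    fun u₁ hu₁ u₂ hu₂ u₃ hu₃ v₁ hv₁ v₂ hv₂ v₃ hv₃ => hiso _ (hWA u₁ hu₁ u₂ hu₂ u₃ hu₃) _
      (hGA (subset_span ⟨W', hW', v₁, hv₁, v₂, hv₂, v₃, hv₃, rfl⟩))
end
end

section
/- Fix a volume form vol : ⋀⁶ℂ⁶ ≅ ℂ and let (α,β) := vol(α∧β) on ⋀³ℂ⁶. Let A ⊆ ⋀³ℂ⁶ be a Lagrangian subspace (isotropic of dimension 10) which is spanned by the set of vectors w₁∧w₂∧w₃ with (w₁,w₂,w₃) a basis of some W ∈ Θ_A. Then Θ_A is a complete family of pairwise incident planes: any two members of Θ_A intersect nontrivially, and every 3-dimensional subspace of ℂ⁶ intersecting all members of Θ_A nontrivially belongs to Θ_A. -/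
open ExteriorAlgebra Submodule Module

noncomputable section

variable {V : Type*} [AddCommGroup V] [Module ℂ V]

/-!
If two members `W, W'` of `Θ_A` met only in `0`, bases of `W` and `W'` together would form a
basis of `ℂ⁶`, so their wedge products would pair to a nonzero multiple of the volume, against
isotropy of `A`. Conversely, the wedge pairing on `⋀³ℂ⁶` is nondegenerate, so the
`10`-dimensional isotropic subspace `A` of the `20`-dimensional space is its own orthogonal. If
`W` meets every member of `Θ_A`, then `w₁ ∧ w₂ ∧ w₃` (with `wᵢ ∈ W`) pairs to zero with the
generators of `A`, the six vectors involved spanning at most a `5`-dimensional space; hence it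
lies in `A^⊥ = A`.
-/

namespace ExteriorAlgebra

variable {K E : Type*} [Field K] [AddCommGroup E] [Module K E]

theorem ιMulti_eq_zero_iff_s13 {n : ℕ} {v : Fin n → E} :
    ιMulti K n v = 0 ↔ ¬LinearIndependent K v := by
  refine ⟨fun h hv => ?_, AlternatingMap.map_linearDependent _ v⟩
  -- `ιMulti K n v` is the member of the independent family `ιMulti_family K n v` indexed by all
  -- of `Fin n`.
  have := (exteriorPower.ιMulti_family_linearIndependent_field (n := n) hv).ne_zero
    (Set.powersetCard.ofFinEmbEquiv (RelEmbedding.refl (· ≤ ·)))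
  simp only [exteriorPower.ιMulti_family, Equiv.symm_apply_apply, OrderEmbedding.coe_id,
    CompTriple.comp_eq] at this
  exact this (Subtype.ext h)

end ExteriorAlgebra

theorem linearIndependent_fin_append_iff {R M : Type*} [Ring R] [AddCommGroup M] [Module R M]
    {m n : ℕ} {u : Fin m → M} {w : Fin n → M} :
    LinearIndependent R (Fin.append u w) ↔ LinearIndependent R u ∧ LinearIndependent R w ∧
      Disjoint (span R (Set.range u)) (span R (Set.range w)) := by
  rw [← linearIndependent_equiv finSumFinEquiv, linearIndependent_sum]
  simp [Function.comp_def]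

theorem not_linearIndependent_fin_append_of_inf_ne_bot {K M : Type*} [DivisionRing K]
    [AddCommGroup M] [Module K M] [FiniteDimensional K M] {W W' : Submodule K M} {m n : ℕ}
    {u : Fin m → M} {w : Fin n → M} (hu : ∀ i, u i ∈ W) (hw : ∀ i, w i ∈ W')
    (hdim : finrank K W + finrank K W' ≤ m + n) (hWW' : W ⊓ W' ≠ ⊥) :
    ¬LinearIndependent K (Fin.append u w) := by
  intro hind
  have hle : span K (Set.range (Fin.append u w)) ≤ W ⊔ W' := by
    rw [span_le, Set.range_subset_iff]
    exact Fin.addCases (by simpa using fun i => mem_sup_left (hu i))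
      (by simpa using fun i => mem_sup_right (hw i))
  have hspan := Submodule.finrank_mono hle
  rw [finrank_span_eq_card hind, Fintype.card_fin] at hspan
  have hinf : 0 < finrank K ↥(W ⊓ W') :=
    Nat.pos_of_ne_zero fun h => hWW' (Submodule.finrank_eq_zero.mp h)
  have := Submodule.finrank_sup_add_finrank_inf_eq W W'
  omega

theorem LinearMap.BilinForm.orthogonal_eq_self_of_isotropic {K M : Type*} [Field K]
    [AddCommGroup M] [Module K M] [FiniteDimensional K M] {B : LinearMap.BilinForm K M}
    (hB : LinearMap.ker B = ⊥) {A : Submodule K M} (hiso : ∀ x ∈ A, ∀ y ∈ A, B x y = 0)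
    (hdim : 2 * finrank K A = finrank K M) : B.orthogonal A = A := by
  have hle : A ≤ B.orthogonal A := fun y hy => mem_orthogonal_iff.mpr fun x hx => hiso x hx y hy
  have := finrank_add_finrank_orthogonal' (B := B) A
  rw [hB, inf_bot_eq, finrank_bot] at this
  exact (Submodule.eq_of_le_of_finrank_eq hle (by omega)).symm

section WedgeForm

variable (vol : ⋀[ℂ]^6 V ≃ₗ[ℂ] ℂ)

theorem coe_wedge3 (u : Fin 3 → V) :
    (wedge3 (u 0) (u 1) (u 2) : ExteriorAlgebra ℂ V) = ιMulti ℂ 3 u := by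
  simp only [wedge3, mul_assoc, ιMulti_succ_apply, ιMulti_zero_apply, mul_one]
  rfl

theorem symForm_eq_zero_iff {α β : ⋀[ℂ]^3 V} :
    symForm vol α β = 0 ↔ (α : ExteriorAlgebra ℂ V) * β = 0 := by
  rw [symForm, LinearEquiv.map_eq_zero_iff, Submodule.mk_eq_zero]

theorem symForm_wedge3_eq_zero_iff (u w : Fin 3 → V) :
    symForm vol (wedge3 (u 0) (u 1) (u 2)) (wedge3 (w 0) (w 1) (w 2)) = 0 ↔
      ¬LinearIndependent ℂ (Fin.append u w) := by
  rw [symForm_eq_zero_iff, coe_wedge3, coe_wedge3, ιMulti_mul_ιMulti, ιMulti_eq_zero_iff_s13]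

theorem symForm_wedge3_eq_zero_of_inf_ne_bot [FiniteDimensional ℂ V] {W W' : Submodule ℂ V}
    (hW : finrank ℂ W = 3) (hW' : finrank ℂ W' = 3) (hWW' : W ⊓ W' ≠ ⊥) {u w : Fin 3 → V}
    (hu : ∀ i, u i ∈ W) (hw : ∀ i, w i ∈ W') :
    symForm vol (wedge3 (u 0) (u 1) (u 2)) (wedge3 (w 0) (w 1) (w 2)) = 0 :=
  (symForm_wedge3_eq_zero_iff vol u w).mpr
    (not_linearIndependent_fin_append_of_inf_ne_bot hu hw (by omega) hWW')

def wedgeForm : LinearMap.BilinForm ℂ (⋀[ℂ]^3 V) :=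
  LinearMap.mk₂ ℂ (symForm vol)
    (fun _ _ _ => by simp only [symForm, ← map_add]; congr 1; ext; simp [add_mul])
    (fun _ _ _ => by simp only [symForm, ← map_smul]; congr 1; ext; simp)
    (fun _ _ _ => by simp only [symForm, ← map_add]; congr 1; ext; simp [mul_add])
    (fun _ _ _ => by simp only [symForm, ← map_smul]; congr 1; ext; simp)

theorem wedgeForm_apply (α β : ⋀[ℂ]^3 V) : wedgeForm vol α β = symForm vol α β := rfl

section Basis

open Set.powersetCard

variable {I : Type*} [LinearOrder I] [Fintype I] (b : Basis I ℂ V)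
  (hI : 3 + 3 = Fintype.card I)

theorem wedgeForm_exteriorPower_basis_compl_eq_zero {r s : Set.powersetCard I 3} (h : r ≠ s) :
    wedgeForm vol (b.exteriorPower 3 r) (b.exteriorPower 3 (compl hI s)) = 0 := by
  rw [wedgeForm_apply, symForm_eq_zero_iff, exteriorPower.basis_apply, exteriorPower.basis_apply,
    exteriorPower.ιMulti_family_apply_coe, exteriorPower.ιMulti_family_apply_coe]
  refine ιMulti_family_mul_of_not_disjoint ℂ b r _ fun hrs => h (Subtype.ext ?_)
  rw [coe_compl, disjoint_compl_right_iff] at hrs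
  exact Finset.eq_of_subset_of_card_le hrs (by rw [card_eq r, card_eq s])

theorem wedgeForm_exteriorPower_basis_compl_ne_zero (s : Set.powersetCard I 3) :
    wedgeForm vol (b.exteriorPower 3 s) (b.exteriorPower 3 (compl hI s)) ≠ 0 := by
  rw [Ne, wedgeForm_apply, symForm_eq_zero_iff, exteriorPower.basis_apply,
    exteriorPower.basis_apply, exteriorPower.ιMulti_family_apply_coe,
    exteriorPower.ιMulti_family_apply_coe,
    ιMulti_family_mul_of_disjoint _ _ _ _ (by simp [disjoint_compl_right]), smul_eq_zero_iff_eq]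
  exact fun h =>
    (b.exteriorPower (3 + 3)).ne_zero _ (Subtype.ext (by rwa [exteriorPower.basis_apply]))

end Basis

theorem ker_wedgeForm [FiniteDimensional ℂ V] (hV : finrank ℂ V = 6) :
    LinearMap.ker (wedgeForm vol) = ⊥ := by
  let B := (finBasisOfFinrankEq ℂ V hV).exteriorPower 3
  have hI : 3 + 3 = Fintype.card (Fin 6) := rfl
  refine LinearMap.ker_eq_bot'.mpr fun α hα => B.ext_elem fun s => ?_
  rw [map_zero, Finsupp.coe_zero, Pi.zero_apply]
  -- Pairing with the basis vector of the complement of `s` reads off the `s`-coordinate.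
  have hpair := LinearMap.congr_fun hα (B (Set.powersetCard.compl hI s))
  rw [← B.sum_repr α, map_sum, LinearMap.sum_apply, LinearMap.zero_apply,
    Finset.sum_eq_single s] at hpair
  · rw [map_smul, LinearMap.smul_apply, smul_eq_mul, mul_eq_zero] at hpair
    exact hpair.resolve_right (wedgeForm_exteriorPower_basis_compl_ne_zero vol _ hI s)
  · intro r _ hrs
    rw [map_smul, LinearMap.smul_apply, wedgeForm_exteriorPower_basis_compl_eq_zero vol _ hI hrs,
      smul_zero]
  · simp

end WedgeForm

section Theta

variable {A : Submodule ℂ (⋀[ℂ]^3 V)}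

theorem exists_basis_of_mem_Theta {W : Submodule ℂ V} (hW : W ∈ Theta A) :
    ∃ u : Fin 3 → V, LinearIndependent ℂ u ∧ span ℂ (Set.range u) = W ∧
      wedge3 (u 0) (u 1) (u 2) ∈ A := by
  have : Module.Finite ℂ W := Module.finite_of_finrank_eq_succ hW.1
  let b := finBasisOfFinrankEq ℂ W hW.1
  refine ⟨fun i => b i, b.linearIndependent.map' W.subtype W.ker_subtype, ?_,
    hW.2 _ (b 0).2 _ (b 1).2 _ (b 2).2⟩
  have := congrArg (Submodule.map W.subtype) b.span_eq
  rwa [Submodule.map_span, Submodule.map_subtype_top, ← Set.range_comp] at this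

theorem inf_ne_bot_of_mem_Theta (vol : ⋀[ℂ]^6 V ≃ₗ[ℂ] ℂ)
    (hiso : ∀ α ∈ A, ∀ β ∈ A, symForm vol α β = 0) {W W' : Submodule ℂ V} (hW : W ∈ Theta A)
    (hW' : W' ∈ Theta A) : W ⊓ W' ≠ ⊥ := by
  obtain ⟨u, hu, rfl, huA⟩ := exists_basis_of_mem_Theta hW
  obtain ⟨w, hw, rfl, hwA⟩ := exists_basis_of_mem_Theta hW'
  intro hbot
  exact (symForm_wedge3_eq_zero_iff vol u w).mp (hiso _ huA _ hwA)
    (linearIndependent_fin_append_iff.mpr ⟨hu, hw, disjoint_iff.mpr hbot⟩)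

end Theta

/-- **O'Grady, Claim 2.3 (second half).** Let `A ⊆ ⋀³ℂ⁶` be a Lagrangian subspace (isotropic
of dimension `10`) which is spanned by the vectors `w₁∧w₂∧w₃`, for `(w₁,w₂,w₃)` a basis of
some `W ∈ Θ_A`. Then `Θ_A` is a complete family of pairwise incident planes. -/
theorem theta_complete_of_spanned_lagrangian
    (vol : (⋀[ℂ]^6 (Fin 6 → ℂ)) ≃ₗ[ℂ] ℂ)
    (A : Submodule ℂ (⋀[ℂ]^3 (Fin 6 → ℂ)))
    (hiso : ∀ α ∈ A, ∀ β ∈ A, symForm vol α β = 0)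
    (hdim : finrank ℂ A = 10)
    (hspan : A = span ℂ {x : ⋀[ℂ]^3 (Fin 6 → ℂ) | ∃ W ∈ Theta A,
      ∃ w : Fin 3 → (Fin 6 → ℂ), LinearIndependent ℂ w ∧ span ℂ (Set.range w) = W ∧
      x = wedge3 (w 0) (w 1) (w 2)}) :
    (∀ W ∈ Theta A, ∀ W' ∈ Theta A, W ⊓ W' ≠ ⊥) ∧
    (∀ W : Submodule ℂ (Fin 6 → ℂ), finrank ℂ W = 3 →
      (∀ W' ∈ Theta A, W ⊓ W' ≠ ⊥) → W ∈ Theta A) := by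
  have hV : finrank ℂ (Fin 6 → ℂ) = 6 := by simp
  have hLag : (wedgeForm vol).orthogonal A = A :=
    LinearMap.BilinForm.orthogonal_eq_self_of_isotropic (ker_wedgeForm vol hV) hiso
      (by rw [hdim, exteriorPower.finrank_eq, hV]; rfl)
  refine ⟨fun W hW W' hW' => inf_ne_bot_of_mem_Theta vol hiso hW hW',
    fun W hW hmeet => ⟨hW, fun w₁ h₁ w₂ h₂ w₃ h₃ => ?_⟩⟩
  have hw : ∀ i, ![w₁, w₂, w₃] i ∈ W := by simp [Fin.forall_fin_succ, h₁, h₂, h₃]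
  have hker : A ≤ LinearMap.ker ((wedgeForm vol).flip (wedge3 w₁ w₂ w₃)) := by
    rw [hspan, span_le]
    rintro _ ⟨W', hW', u, -, hu, rfl⟩
    exact symForm_wedge3_eq_zero_of_inf_ne_bot vol hW'.1 hW (inf_comm W W' ▸ hmeet W' hW')
      (fun i => hu ▸ subset_span ⟨i, rfl⟩) hw
  rw [← hLag, LinearMap.BilinForm.mem_orthogonal_iff]
  exact fun a ha => hker ha

end
end

section
/- Let A ⊆ ⋀³ℂ⁶ be a linear subspace. Suppose W and W' are 3-dimensional subspaces of ℂ⁶ with ⋀³W ⊆ A, ⋀³W' ⊆ A, and dim(W ∩ W') = 2. Then Θ_A is infinite; more precisely, every 3-dimensional subspace U with W ∩ W' ⊆ U ⊆ W + W' belongs to Θ_A, and there are infinitely many such U. -/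
open ExteriorAlgebra Submodule Module

noncomputable section

variable {V : Type*} [AddCommGroup V] [Module ℂ V]

lemma wedge3_add₁ (a a' b c : V) :
    wedge3 (a + a') b c = wedge3 a b c + wedge3 a' b c := by
  apply Subtype.ext; simp [wedge3, add_mul]

lemma wedge3_add₂ (a b b' c : V) :
    wedge3 a (b + b') c = wedge3 a b c + wedge3 a b' c := by
  apply Subtype.ext; simp [wedge3, add_mul, mul_add]

lemma wedge3_add₃ (a b c c' : V) :
    wedge3 a b (c + c') = wedge3 a b c + wedge3 a b c' := by
  apply Subtype.ext; simp [wedge3, mul_add]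

lemma wedge3_smul₁ (t : ℂ) (a b c : V) : wedge3 (t • a) b c = t • wedge3 a b c := by
  apply Subtype.ext; simp [wedge3, smul_mul_assoc]

lemma wedge3_smul₂ (t : ℂ) (a b c : V) : wedge3 a (t • b) c = t • wedge3 a b c := by
  apply Subtype.ext; simp [wedge3, smul_mul_assoc, mul_smul_comm]

lemma wedge3_smul₃ (t : ℂ) (a b c : V) : wedge3 a b (t • c) = t • wedge3 a b c := by
  apply Subtype.ext; simp [wedge3, mul_smul_comm]

lemma wedge3_zero₁₂ (v a : V) : wedge3 v v a = 0 := by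
  apply Subtype.ext
  show ι ℂ v * ι ℂ v * ι ℂ a = _
  rw [ι_sq_zero, zero_mul]; rfl

lemma wedge3_zero₂₃ (a v : V) : wedge3 a v v = 0 := by
  apply Subtype.ext
  show ι ℂ a * ι ℂ v * ι ℂ v = _
  rw [mul_assoc, ι_sq_zero, mul_zero]; rfl

lemma wedge3_zero₁₃ (v a : V) : wedge3 v a v = 0 := by
  apply Subtype.ext
  show ι ℂ v * ι ℂ a * ι ℂ v = _
  have h : ι ℂ a * ι ℂ v = -(ι ℂ v * ι ℂ a) :=
    eq_neg_of_add_eq_zero_left (ι_add_mul_swap a v)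
  rw [mul_assoc, h, mul_neg, ← mul_assoc, ι_sq_zero, zero_mul, neg_zero]; rfl

lemma wedge3_expand (d₁ d₂ d₃ v : V) (c₁ c₂ c₃ : ℂ) :
    wedge3 (d₁ + c₁ • v) (d₂ + c₂ • v) (d₃ + c₃ • v)
      = wedge3 d₁ d₂ d₃ + c₃ • wedge3 d₁ d₂ v + c₂ • wedge3 d₁ v d₃ + c₁ • wedge3 v d₂ d₃ := by
  simp only [wedge3_add₁, wedge3_add₂, wedge3_add₃, wedge3_smul₁, wedge3_smul₂, wedge3_smul₃,
    wedge3_zero₁₂, wedge3_zero₁₃, wedge3_zero₂₃, smul_zero, add_zero, zero_add]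
  abel

/-- **O'Grady, Section 2 (cf. Proposition 1.3).** Let `A ⊆ ⋀³ℂ⁶` be a subspace and let
`W, W' ∈ Θ_A` be 3-dimensional subspaces with `dim (W ∩ W') = 2`. Then every 3-dimensional
subspace `U` with `W ∩ W' ⊆ U ⊆ W + W'` belongs to `Θ_A`, there are infinitely many such `U`,
and hence `Θ_A` is infinite. -/
theorem theta_infinite_of_intersection_dim_two
    (A : Submodule ℂ (⋀[ℂ]^3 (Fin 6 → ℂ)))
    (W W' : Submodule ℂ (Fin 6 → ℂ)) (hW : W ∈ Theta A) (hW' : W' ∈ Theta A)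
    (hint : finrank ℂ ↥(W ⊓ W') = 2) :
    (∀ U : Submodule ℂ (Fin 6 → ℂ), finrank ℂ U = 3 → W ⊓ W' ≤ U → U ≤ W ⊔ W' →
      U ∈ Theta A) ∧
    {U : Submodule ℂ (Fin 6 → ℂ) | finrank ℂ U = 3 ∧ W ⊓ W' ≤ U ∧ U ≤ W ⊔ W'}.Infinite ∧
    (Theta A).Infinite := by
  classical
  have hWr : finrank ℂ W = 3 := hW.1
  have hW'r : finrank ℂ W' = 3 := hW'.1
  -- dimension-3 subspaces built from `W ⊓ W'` and a vector outside it
  have key : ∀ v : Fin 6 → ℂ, v ∉ W ⊓ W' →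
      finrank ℂ ↥((W ⊓ W') ⊔ (ℂ ∙ v)) = 3 := by
    intro v hv
    have hv0 : v ≠ 0 := fun h => hv (h ▸ (W ⊓ W').zero_mem)
    have hdisj : Disjoint (W ⊓ W') (ℂ ∙ v) :=
      (Submodule.disjoint_span_singleton' hv0).mpr hv
    have h := Submodule.finrank_sup_add_finrank_inf_eq (W ⊓ W') (ℂ ∙ v)
    rw [disjoint_iff.mp hdisj, finrank_bot, finrank_span_singleton hv0, hint] at h
    omega
  have part1 : ∀ U : Submodule ℂ (Fin 6 → ℂ), finrank ℂ U = 3 → W ⊓ W' ≤ U →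
      U ≤ W ⊔ W' → U ∈ Theta A := by
    intro U hU3 hDU hUsup
    have hnle : ¬ U ≤ W ⊓ W' := by
      intro h
      have := Submodule.finrank_mono (R := ℂ) h
      omega
    obtain ⟨v, hvU, hvD⟩ := SetLike.not_le_iff_exists.mp hnle
    have hUeq : (W ⊓ W') ⊔ (ℂ ∙ v) = U := by
      apply Submodule.eq_of_le_of_finrank_eq
        (sup_le hDU ((Submodule.span_singleton_le_iff_mem v U).mpr hvU))
      rw [key v hvD, hU3]
    obtain ⟨x, hx, y, hy, hxy⟩ := Submodule.mem_sup.mp (hUsup hvU)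
    refine ⟨hU3, ?_⟩
    intro u₁ hu₁ u₂ hu₂ u₃ hu₃
    rw [← hUeq] at hu₁ hu₂ hu₃
    obtain ⟨d₁, hd₁, z₁, hz₁, rfl⟩ := Submodule.mem_sup.mp hu₁
    obtain ⟨c₁, rfl⟩ := Submodule.mem_span_singleton.mp hz₁
    obtain ⟨d₂, hd₂, z₂, hz₂, rfl⟩ := Submodule.mem_sup.mp hu₂
    obtain ⟨c₂, rfl⟩ := Submodule.mem_span_singleton.mp hz₂
    obtain ⟨d₃, hd₃, z₃, hz₃, rfl⟩ := Submodule.mem_sup.mp hu₃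
    obtain ⟨c₃, rfl⟩ := Submodule.mem_span_singleton.mp hz₃
    rw [wedge3_expand]
    have h0 : wedge3 d₁ d₂ d₃ ∈ A := hW.2 _ hd₁.1 _ hd₂.1 _ hd₃.1
    have h3 : wedge3 d₁ d₂ v ∈ A := by
      rw [← hxy, wedge3_add₃]
      exact A.add_mem (hW.2 _ hd₁.1 _ hd₂.1 _ hx) (hW'.2 _ hd₁.2 _ hd₂.2 _ hy)
    have h2 : wedge3 d₁ v d₃ ∈ A := by
      rw [← hxy, wedge3_add₂]
      exact A.add_mem (hW.2 _ hd₁.1 _ hx _ hd₃.1) (hW'.2 _ hd₁.2 _ hy _ hd₃.2)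
    have h1 : wedge3 v d₂ d₃ ∈ A := by
      rw [← hxy, wedge3_add₁]
      exact A.add_mem (hW.2 _ hx _ hd₂.1 _ hd₃.1) (hW'.2 _ hy _ hd₂.2 _ hd₃.2)
    exact A.add_mem (A.add_mem (A.add_mem h0 (A.smul_mem _ h3)) (A.smul_mem _ h2))
      (A.smul_mem _ h1)
  -- pick `w ∈ W \ (W ⊓ W')` and `w' ∈ W' \ (W ⊓ W')`
  have hnleW : ¬ W ≤ W ⊓ W' := by
    intro h
    have := Submodule.finrank_mono (R := ℂ) h
    omega
  have hnleW' : ¬ W' ≤ W ⊓ W' := by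
    intro h
    have := Submodule.finrank_mono (R := ℂ) h
    omega
  obtain ⟨w, hwW, hwD⟩ := SetLike.not_le_iff_exists.mp hnleW
  obtain ⟨w', hw'W', hw'D⟩ := SetLike.not_le_iff_exists.mp hnleW'
  have hvD : ∀ t : ℂ, w + t • w' ∉ W ⊓ W' := by
    intro t h
    have hw'1 : t • w' ∈ W' := W'.smul_mem t hw'W'
    have : w ∈ W' := by
      have := W'.sub_mem h.2 hw'1
      simpa using this
    exact hwD ⟨hwW, this⟩
  set f : ℂ → Submodule ℂ (Fin 6 → ℂ) := fun t => (W ⊓ W') ⊔ (ℂ ∙ (w + t • w')) with hf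
  have hfr : ∀ t, finrank ℂ (f t) = 3 := fun t => key _ (hvD t)
  have hfle : ∀ t, f t ≤ W ⊔ W' := by
    intro t
    refine sup_le (le_trans inf_le_left le_sup_left) ?_
    refine (Submodule.span_singleton_le_iff_mem _ _).mpr ?_
    exact add_mem (Submodule.mem_sup_left hwW)
      (Submodule.mem_sup_right (W'.smul_mem t hw'W'))
  have hfD : ∀ t, W ⊓ W' ≤ f t := fun t => le_sup_left
  have hfmem : ∀ t, f t ∈ {U : Submodule ℂ (Fin 6 → ℂ) |
      finrank ℂ U = 3 ∧ W ⊓ W' ≤ U ∧ U ≤ W ⊔ W'} :=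
    fun t => ⟨hfr t, hfD t, hfle t⟩
  have hsup4 : finrank ℂ ↥(W ⊔ W') = 4 := by
    have h := Submodule.finrank_sup_add_finrank_inf_eq W W'
    rw [hint, hWr, hW'r] at h
    omega
  have hinj : Function.Injective f := by
    intro s t hst
    by_contra hne
    have hvs : w + s • w' ∈ f t := hst ▸ Submodule.mem_sup_right
      (Submodule.mem_span_singleton_self _)
    have hvt : w + t • w' ∈ f t := Submodule.mem_sup_right
      (Submodule.mem_span_singleton_self _)
    have hdiff : (s - t) • w' ∈ f t := by
      have := (f t).sub_mem hvs hvt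
      have heq : (w + s • w') - (w + t • w') = (s - t) • w' := by
        rw [sub_smul]; abel
      rwa [heq] at this
    have hw'ft : w' ∈ f t := by
      have := (f t).smul_mem (s - t)⁻¹ hdiff
      rwa [smul_smul, inv_mul_cancel₀ (sub_ne_zero.mpr hne), one_smul] at this
    have hwft : w ∈ f t := by
      have := (f t).sub_mem hvt ((f t).smul_mem t hw'ft)
      simpa using this
    have hWle : W ≤ f t := by
      have hWeq : (W ⊓ W') ⊔ (ℂ ∙ w) = W := by
        apply Submodule.eq_of_le_of_finrank_eq
          (sup_le inf_le_left ((Submodule.span_singleton_le_iff_mem w W).mpr hwW))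
        rw [key w hwD, hWr]
      rw [← hWeq]
      exact sup_le (hfD t) ((Submodule.span_singleton_le_iff_mem _ _).mpr hwft)
    have hW'le : W' ≤ f t := by
      have hW'eq : (W ⊓ W') ⊔ (ℂ ∙ w') = W' := by
        apply Submodule.eq_of_le_of_finrank_eq
          (sup_le inf_le_right ((Submodule.span_singleton_le_iff_mem w' W').mpr hw'W'))
        rw [key w' hw'D, hW'r]
      rw [← hW'eq]
      exact sup_le (hfD t) ((Submodule.span_singleton_le_iff_mem _ _).mpr hw'ft)
    have := Submodule.finrank_mono (R := ℂ) (sup_le hWle hW'le)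
    rw [hsup4, hfr t] at this
    omega
  have part2 : {U : Submodule ℂ (Fin 6 → ℂ) |
      finrank ℂ U = 3 ∧ W ⊓ W' ≤ U ∧ U ≤ W ⊔ W'}.Infinite :=
    Set.infinite_of_injective_forall_mem hinj hfmem
  exact ⟨part1, part2, part2.mono fun U hU => part1 U hU.1 hU.2.1 hU.2.2⟩
end
end
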